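/- arXiv:0907.1958 — 5 statements merged into one kernel-verified Lean document; each statement's English description precedes it below -/
import Mathlib

section
/- Let G be a finite simple graph with |V(G)| ≥ 3 and let γ be an automorphism of G with γ³ = id. If (G,p) is an isostatic framework in ℝ² that is C₃-symmetric of type γ and the points p(v), v ∈ V(G), affinely span all of ℝ², then G satisfies the Laman conditions and γ(v) ≠ v for every vertex v of G. -/
open Matrix

noncomputable section

namespace C3Laman

variable {V : Type*} [Fintype V] [DecidableEq V]

/-- Rotation of the plane about the origin by the angle 2π/3. -/
def R3 : Matrix (Fin 2) (Fin 2) ℝ :=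
  !![-(1/2 : ℝ), -(Real.sqrt 3 / 2); Real.sqrt 3 / 2, -(1/2)]

/-- `(G, p)` is a framework: adjacent vertices get distinct points. -/
def IsFramework (G : SimpleGraph V) (p : V → Fin 2 → ℝ) : Prop :=
  ∀ u w, G.Adj u w → p u ≠ p w

/-- `m` is an infinitesimal motion of the framework `(G, p)`. -/
def IsInfMotion (G : SimpleGraph V) (p m : V → Fin 2 → ℝ) : Prop :=
  ∀ u w, G.Adj u w → (p u - p w) ⬝ᵥ (m u - m w) = 0

/-- `m` is an infinitesimal rigid motion of `p`: it comes from a skew-symmetric matrix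
`S` and a translation vector `t`. -/
def IsInfRigidMotion (p m : V → Fin 2 → ℝ) : Prop :=
  ∃ S : Matrix (Fin 2) (Fin 2) ℝ, Sᵀ = -S ∧ ∃ t : Fin 2 → ℝ,
    ∀ v, m v = S.mulVec (p v) + t

/-- `(G, p)` is infinitesimally rigid. -/
def InfRigid (G : SimpleGraph V) (p : V → Fin 2 → ℝ) : Prop :=
  ∀ m, IsInfMotion G p m → IsInfRigidMotion p m

/-- The row of the rigidity matrix corresponding to the edge `e`: at an endpoint `u` of
`e = {u, w}` it has the entries of `p u - p w` (note `p u - p w = 2 • p u - (p u + p w)`),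
at the other endpoint `w` it has the entries of `p w - p u`, and `0` elsewhere. -/
def rigidityRow (p : V → Fin 2 → ℝ) (e : Sym2 V) : V → Fin 2 → ℝ :=
  fun x => if x ∈ e then
    (2 : ℝ) • p x - Sym2.lift ⟨fun u w => p u + p w, fun _ _ => add_comm _ _⟩ e
  else 0

/-- `(G, p)` is independent: the rows of the rigidity matrix are linearly independent. -/
def Independent (G : SimpleGraph V) (p : V → Fin 2 → ℝ) : Prop :=
  LinearIndependent ℝ (fun e : G.edgeSet => rigidityRow p (e : Sym2 V))

/-- `(G, p)` is isostatic: it is a framework that is infinitesimally rigid and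
independent. -/
def Isostatic (G : SimpleGraph V) (p : V → Fin 2 → ℝ) : Prop :=
  IsFramework G p ∧ InfRigid G p ∧ Independent G p

/-- `(G, p)` is `C₃`-symmetric of type `γ`. -/
def C3Symmetric (G : SimpleGraph V) (γ : G ≃g G) (p : V → Fin 2 → ℝ) : Prop :=
  ∀ v, p (γ v) = R3.mulVec (p v)

/-- The Laman conditions: `|E(G)| = 2|V(G)| - 3`, and `|E(H)| ≤ 2|V(H)| - 3` for every
subgraph `H` of `G` with at least two vertices. -/
def Laman (G : SimpleGraph V) : Prop :=
  (G.edgeSet.ncard : ℤ) = 2 * Fintype.card V - 3 ∧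
  ∀ H : G.Subgraph, 2 ≤ H.verts.ncard →
    (H.edgeSet.ncard : ℤ) ≤ 2 * (H.verts.ncard : ℤ) - 3


/-! ### Auxiliary material -/

open LinearMap

/-- The generator of infinitesimal rotations of the plane. -/
def Jm : Matrix (Fin 2) (Fin 2) ℝ := !![0, -1; 1, 0]

lemma hs3 : Real.sqrt 3 ^ 2 = 3 := Real.sq_sqrt (by norm_num)

lemma R3_dot (x y : Fin 2 → ℝ) : R3.mulVec x ⬝ᵥ R3.mulVec y = x ⬝ᵥ y := by
  simp [R3, Matrix.mulVec, dotProduct, Fin.sum_univ_two]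
  linear_combination ((x 0 * y 0 + x 1 * y 1)/4) * hs3

lemma J_skew (x : Fin 2 → ℝ) : x ⬝ᵥ Jm.mulVec x = 0 := by
  simp [Jm, Matrix.mulVec, dotProduct, Fin.sum_univ_two]
  ring

lemma J_inj (x : Fin 2 → ℝ) (h : Jm.mulVec x = 0) : x = 0 := by
  have h0 := congrFun h 0
  have h1 := congrFun h 1
  simp [Jm, Matrix.mulVec, dotProduct, Fin.sum_univ_two] at h0 h1
  funext i; fin_cases i <;> simp [h0, h1]

lemma R3_fix (x : Fin 2 → ℝ) (h : R3.mulVec x = x) : x = 0 := by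
  have h0 := congrFun h 0
  have h1 := congrFun h 1
  simp [R3, Matrix.mulVec, dotProduct, Fin.sum_univ_two] at h0 h1
  have e0 : Real.sqrt 3 * x 1 = -3 * x 0 := by linear_combination (-2) * h0
  have e1 : Real.sqrt 3 * x 0 = 3 * x 1 := by linear_combination 2 * h1
  have hx1 : x 1 = 0 := by
    linear_combination (Real.sqrt 3 * e0 - 3 * e1 - x 1 * hs3) / 12
  have hx0 : x 0 = 0 := by
    linear_combination e0/3 - (Real.sqrt 3/3) * hx1
  funext i; fin_cases i <;> simp [hx0, hx1]

lemma RJRR (x : Fin 2 → ℝ) :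
    R3.mulVec (Jm.mulVec (R3.mulVec (R3.mulVec x))) = Jm.mulVec x := by
  funext i
  fin_cases i
  · simp [R3, Jm, Matrix.mulVec, dotProduct, Fin.sum_univ_two]
    linear_combination ((Real.sqrt 3 * x 0 - 3 * x 1) / 8) * hs3
  · simp [R3, Jm, Matrix.mulVec, dotProduct, Fin.sum_univ_two]
    linear_combination ((3 * x 0 + Real.sqrt 3 * x 1) / 8) * hs3

lemma trace_R3 : Matrix.trace R3 = -1 := by
  simp [R3, Matrix.trace, Fin.sum_univ_two]
  norm_num

lemma row_eq (p : V → Fin 2 → ℝ) {u w : V} (h : u ≠ w) :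
    rigidityRow p s(u, w) =
      fun x => (if x = u then p u - p w else 0) + (if x = w then p w - p u else 0) := by
  funext x
  rcases eq_or_ne x u with rfl | hxu
  · simp [rigidityRow, h, Sym2.mem_iff]
    module
  · rcases eq_or_ne x w with rfl | hxw
    · simp [rigidityRow, h.symm, hxu, Sym2.mem_iff]
      module
    · simp [rigidityRow, hxu, hxw, Sym2.mem_iff]

lemma row_support (p : V → Fin 2 → ℝ) {e : Sym2 V} {x : V} (hx : x ∉ e) :
    rigidityRow p e x = 0 := by
  simp [rigidityRow, hx]

lemma row_left (p : V → Fin 2 → ℝ) {u w : V} (h : u ≠ w) :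
    rigidityRow p s(u, w) u = p u - p w := by
  rw [row_eq p h]; simp [h]

lemma row_right (p : V → Fin 2 → ℝ) {u w : V} (h : u ≠ w) :
    rigidityRow p s(u, w) w = p w - p u := by
  rw [row_eq p h]; simp [h.symm]

lemma row_dot (p : V → Fin 2 → ℝ) {u w : V} (h : u ≠ w) (m : V → Fin 2 → ℝ) :
    ∑ v, rigidityRow p s(u, w) v ⬝ᵥ m v = (p u - p w) ⬝ᵥ (m u - m w) := by
  have : ∀ v, rigidityRow p s(u, w) v ⬝ᵥ m v =
      (if v = u then (p u - p w) ⬝ᵥ m v else 0) +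
      (if v = w then (p w - p u) ⬝ᵥ m v else 0) := by
    intro v
    rw [row_eq p h, add_dotProduct]
    congr 1 <;> split <;> simp
  simp only [this, Finset.sum_add_distrib, Finset.sum_ite_eq' Finset.univ,
    Finset.mem_univ, if_true]
  rw [show p w - p u = -(p u - p w) by ring, neg_dotProduct, dotProduct_sub]
  ring

lemma sum_subtype_pair {A : Type*} [AddCommMonoid A] {S : Set V} [Fintype S] {u w : V}
    (hu : u ∈ S) (hw : w ∈ S) (h : u ≠ w) (F : V → A)
    (hF : ∀ x, x ≠ u → x ≠ w → F x = 0) : ∑ x : S, F ↑x = F u + F w := by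
  classical
  rw [← Finset.sum_subtype S.toFinset (by simp) F]
  rw [← Finset.sum_subset (s₁ := {u, w}) (by
    intro x hx; rcases Finset.mem_insert.1 hx with rfl | hx
    · simpa using hu
    · simp at hx; subst hx; simpa using hw)
    (by intro x _ hx; simp at hx; exact hF x hx.1 hx.2)]
  rw [Finset.sum_pair h]

/-- The rigidity map of the framework, with one coordinate per edge. -/
def rho (G : SimpleGraph V) (p : V → Fin 2 → ℝ) :
    (V → Fin 2 → ℝ) →ₗ[ℝ] (↥G.edgeSet → ℝ) where
  toFun m := fun e => ∑ v, rigidityRow p ↑e v ⬝ᵥ m v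
  map_add' m m' := by
    funext e
    simp [dotProduct_add, Finset.sum_add_distrib]
  map_smul' c m := by
    funext e
    simp [dotProduct_smul, Finset.mul_sum, smul_eq_mul]

/-- The parametrization of the trivial (rigid) infinitesimal motions. -/
def phi (p : V → Fin 2 → ℝ) : (ℝ × (Fin 2 → ℝ)) →ₗ[ℝ] (V → Fin 2 → ℝ) where
  toFun x := fun v => x.1 • Jm.mulVec (p v) + x.2
  map_add' x y := by
    funext v
    show (x+y).1 • Jm.mulVec (p v) + (x+y).2
      = (x.1 • Jm.mulVec (p v) + x.2) + (y.1 • Jm.mulVec (p v) + y.2)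
    simp only [Prod.fst_add, Prod.snd_add, add_smul]
    abel
  map_smul' c x := by
    funext v
    show (c • x).1 • Jm.mulVec (p v) + (c • x).2 = c • (x.1 • Jm.mulVec (p v) + x.2)
    simp only [Prod.smul_fst, Prod.smul_snd, smul_smul, smul_add, smul_eq_mul]

lemma rho_apply (G : SimpleGraph V) (p : V → Fin 2 → ℝ) (m : V → Fin 2 → ℝ)
    {u w : V} (he : s(u, w) ∈ G.edgeSet) :
    rho G p m ⟨s(u, w), he⟩ = (p u - p w) ⬝ᵥ (m u - m w) :=
  row_dot p (G.mem_edgeSet.mp he).ne m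

lemma ker_rho (G : SimpleGraph V) (p : V → Fin 2 → ℝ) (hrig : InfRigid G p) :
    LinearMap.ker (rho G p) = LinearMap.range (phi (V := V) p) := by
  apply le_antisymm
  · intro m hm
    have hmot : IsInfMotion G p m := by
      intro u w huw
      have := congrFun (LinearMap.mem_ker.mp hm) ⟨s(u, w), G.mem_edgeSet.mpr huw⟩
      rwa [rho_apply G p m] at this
    obtain ⟨S, hS, t, hmv⟩ := hrig m hmot
    set a := S 1 0 with ha
    refine ⟨(a, t), ?_⟩
    have hSJ : S = a • Jm := by
      have h00 := congrFun (congrFun hS 0) 0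
      have h11 := congrFun (congrFun hS 1) 1
      have h01 := congrFun (congrFun hS 0) 1
      simp [Matrix.transpose_apply] at h00 h11 h01
      ext i j
      fin_cases i <;> fin_cases j <;>
        simp [Jm] <;> linarith
    show (fun v => a • Jm.mulVec (p v) + t) = m
    funext v
    rw [hmv v, hSJ, Matrix.smul_mulVec]
  · rintro m ⟨⟨a, t⟩, rfl⟩
    rw [LinearMap.mem_ker]
    funext e
    obtain ⟨e, he⟩ := e
    induction e with
    | _ u w =>
      rw [show (rho G p) ((phi p) (a, t)) ⟨s(u,w), he⟩
        = (p u - p w) ⬝ᵥ ((phi p (a,t)) u - (phi p (a,t)) w) from rho_apply G p _ he]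
      show (p u - p w) ⬝ᵥ ((a • Jm.mulVec (p u) + t) - (a • Jm.mulVec (p w) + t)) = _
      have : (a • Jm.mulVec (p u) + t) - (a • Jm.mulVec (p w) + t)
          = a • Jm.mulVec (p u - p w) := by
        rw [Matrix.mulVec_sub, smul_sub]
        abel
      rw [this, dotProduct_smul, J_skew, smul_eq_mul, mul_zero]
      rfl

lemma phi_inj {p : V → Fin 2 → ℝ} {u₀ w₀ : V} (hne : p u₀ ≠ p w₀) :
    Function.Injective (phi (V := V) p) := by
  rw [← LinearMap.ker_eq_bot]
  rw [Submodule.eq_bot_iff]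
  rintro ⟨a, t⟩ h
  rw [LinearMap.mem_ker] at h
  replace h : (fun v => a • Jm.mulVec (p v) + t) = 0 := h
  have hu := congrFun h u₀
  have hw := congrFun h w₀
  simp only [Pi.zero_apply] at hu hw
  have hsub : a • Jm.mulVec (p u₀ - p w₀) = 0 := by
    rw [Matrix.mulVec_sub, smul_sub]
    rw [show (0 : Fin 2 → ℝ) = (a • Jm.mulVec (p u₀) + t) - (a • Jm.mulVec (p w₀) + t) by
      rw [hu, hw]; abel]
    abel
  have ha : a = 0 := by
    by_contra ha
    have := J_inj _ (by
      have := congrArg (fun x => a⁻¹ • x) hsub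
      simpa only [smul_smul, inv_mul_cancel₀ ha, one_smul, smul_zero] using this)
    exact hne (by rwa [sub_eq_zero] at this)
  have ht : t = 0 := by
    have := hu
    rw [ha, zero_smul, zero_add] at this
    exact this
  simp [ha, ht]

lemma exists_pts {p : V → Fin 2 → ℝ} [Nonempty V]
    (hspan : affineSpan ℝ (Set.range p) = ⊤) : ∃ u w : V, p u ≠ p w := by
  by_contra h
  push_neg at h
  obtain ⟨v₀⟩ := ‹Nonempty V›
  have hsub : Set.range p ⊆ {p v₀} := by
    rintro _ ⟨v, rfl⟩; simp [h v v₀]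
  have h1 : vectorSpan ℝ (Set.range p) = ⊤ := by
    rw [← direction_affineSpan, hspan, AffineSubspace.direction_top]
  have h2 : vectorSpan ℝ (Set.range p) ≤ ⊥ := by
    rw [← vectorSpan_singleton (k := ℝ) (p := p v₀)]
    exact vectorSpan_mono ℝ hsub
  rw [h1] at h2
  exact bot_ne_top (le_bot_iff.mp h2).symm

/-- The pairing map against trivial motions, on functions on a vertex subset. -/
def Psi (p : V → Fin 2 → ℝ) (S : Set V) [Fintype S] :
    (↥S → Fin 2 → ℝ) →ₗ[ℝ] ℝ × (Fin 2 → ℝ) where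
  toFun f := (∑ v : S, f v ⬝ᵥ Jm.mulVec (p ↑v), ∑ v : S, f v)
  map_add' f g := by
    simp [add_dotProduct, Finset.sum_add_distrib, Prod.ext_iff]
  map_smul' c f := by
    simp [smul_dotProduct, Finset.smul_sum, Prod.ext_iff, smul_eq_mul, Finset.mul_sum]

lemma Psi_surj (p : V → Fin 2 → ℝ) (S : Set V) [Fintype S] {u₀ w₀ : V}
    (hu : u₀ ∈ S) (hw : w₀ ∈ S) (hne : u₀ ≠ w₀) (hp : p u₀ ≠ p w₀) :
    Function.Surjective (Psi p S) := by
  rintro ⟨a, t⟩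
  set d := Jm.mulVec (p u₀) - Jm.mulVec (p w₀) with hd_def
  have hd : d ≠ 0 := by
    intro h
    apply hp
    have : Jm.mulVec (p u₀ - p w₀) = 0 := by rw [Matrix.mulVec_sub]; exact h
    have := J_inj _ this
    rwa [sub_eq_zero] at this
  have hdd : d ⬝ᵥ d ≠ 0 := fun h => hd (dotProduct_self_eq_zero.mp h)
  set c₁ := ((a - t ⬝ᵥ Jm.mulVec (p w₀)) / (d ⬝ᵥ d)) • d with hc₁
  set c₂ := t - c₁ with hc₂
  refine ⟨fun v => (if (v : V) = u₀ then c₁ else 0) + (if (v : V) = w₀ then c₂ else 0), ?_⟩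
  have h1 : (∑ v : S, ((if (v : V) = u₀ then c₁ else 0) + (if (v : V) = w₀ then c₂ else 0))
      ⬝ᵥ Jm.mulVec (p ↑v)) = c₁ ⬝ᵥ Jm.mulVec (p u₀) + c₂ ⬝ᵥ Jm.mulVec (p w₀) := by
    rw [sum_subtype_pair hu hw hne
      (fun x => ((if x = u₀ then c₁ else 0) + (if x = w₀ then c₂ else 0)) ⬝ᵥ Jm.mulVec (p x))
      (by intro x h1 h2; simp [h1, h2])]
    simp [hne, hne.symm]
  have h2 : (∑ v : S, ((if (v : V) = u₀ then c₁ else 0) + (if (v : V) = w₀ then c₂ else 0)))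
      = c₁ + c₂ := by
    rw [sum_subtype_pair hu hw hne
      (fun x => ((if x = u₀ then c₁ else 0) + (if x = w₀ then c₂ else 0)))
      (by intro x h1 h2; simp [h1, h2])]
    simp [hne, hne.symm]
  have hcd : c₁ ⬝ᵥ d = a - t ⬝ᵥ Jm.mulVec (p w₀) := by
    rw [hc₁, smul_dotProduct, smul_eq_mul, div_mul_cancel₀ _ hdd]
  apply Prod.ext
  · show (∑ v : S, _) = a
    rw [h1]
    have : c₁ ⬝ᵥ Jm.mulVec (p u₀) + c₂ ⬝ᵥ Jm.mulVec (p w₀)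
        = c₁ ⬝ᵥ d + t ⬝ᵥ Jm.mulVec (p w₀) := by
      rw [hc₂, hd_def]
      rw [dotProduct_sub, sub_dotProduct]
      ring
    rw [this, hcd]; ring
  · show (∑ v : S, _) = t
    rw [h2, hc₂]; abel

lemma subgraph_bound (G : SimpleGraph V) (p : V → Fin 2 → ℝ)
    (hfw : IsFramework G p) (hind : Independent G p)
    (H : G.Subgraph) (hH2 : 2 ≤ H.verts.ncard) :
    (H.edgeSet.ncard : ℤ) ≤ 2 * (H.verts.ncard : ℤ) - 3 := by
  classical
  haveI : Fintype ↥H.verts := (Set.toFinite _).fintype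
  haveI : Fintype ↥H.edgeSet := (Set.toFinite _).fintype
  have hkv : H.verts.ncard = Fintype.card ↥H.verts := by
    rw [Set.ncard_eq_toFinset_card', Set.toFinset_card]
  have hke : H.edgeSet.ncard = Fintype.card ↥H.edgeSet := by
    rw [Set.ncard_eq_toFinset_card', Set.toFinset_card]
  rcases Set.eq_empty_or_nonempty H.edgeSet with hemp | ⟨e₀, he₀⟩
  · rw [hemp]
    simp only [Set.ncard_empty, Nat.cast_zero]
    omega
  · induction e₀ with
    | _ u₀ w₀ =>
    have hadj₀ : H.Adj u₀ w₀ := SimpleGraph.Subgraph.mem_edgeSet.mp he₀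
    have hu₀ : u₀ ∈ H.verts := H.edge_vert hadj₀
    have hw₀ : w₀ ∈ H.verts := H.edge_vert hadj₀.symm
    have hGadj : G.Adj u₀ w₀ := H.adj_sub hadj₀
    have hne₀ : u₀ ≠ w₀ := hGadj.ne
    have hp₀ : p u₀ ≠ p w₀ := hfw u₀ w₀ hGadj
    set K := LinearMap.ker (Psi p H.verts) with hK
    set g : ↥H.edgeSet → (↥H.verts → Fin 2 → ℝ) :=
      fun e => fun v => rigidityRow p ↑e ↑v with hg
    have hmem : ∀ e, g e ∈ K := by
      rintro ⟨e, he⟩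
      induction e with
      | _ u w =>
      have hadj : H.Adj u w := SimpleGraph.Subgraph.mem_edgeSet.mp he
      have hu : u ∈ H.verts := H.edge_vert hadj
      have hw : w ∈ H.verts := H.edge_vert hadj.symm
      have hne : u ≠ w := (H.adj_sub hadj).ne
      rw [LinearMap.mem_ker]
      apply Prod.ext
      · show (∑ v : H.verts, rigidityRow p s(u,w) ↑v ⬝ᵥ Jm.mulVec (p ↑v)) = 0
        rw [sum_subtype_pair hu hw hne
          (fun x => rigidityRow p s(u,w) x ⬝ᵥ Jm.mulVec (p x))
          (by intro x hxu hxw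
              show rigidityRow p s(u,w) x ⬝ᵥ Jm.mulVec (p x) = 0
              rw [row_support p (by simp [Sym2.mem_iff, hxu, hxw]), zero_dotProduct])]
        rw [row_left p hne, row_right p hne]
        have : (p u - p w) ⬝ᵥ Jm.mulVec (p u) + (p w - p u) ⬝ᵥ Jm.mulVec (p w)
            = (p u - p w) ⬝ᵥ Jm.mulVec (p u - p w) := by
          rw [Matrix.mulVec_sub, dotProduct_sub]
          rw [show p w - p u = -(p u - p w) by ring, neg_dotProduct]
          ring
        rw [this, J_skew]
      · show (∑ v : H.verts, rigidityRow p s(u,w) ↑v) = 0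
        rw [sum_subtype_pair hu hw hne (fun x => rigidityRow p s(u,w) x)
          (fun x hxu hxw => row_support p (by simp [Sym2.mem_iff, hxu, hxw]))]
        rw [row_left p hne, row_right p hne]
        abel
    have hgli : LinearIndependent ℝ g := by
      have hsub : LinearIndependent ℝ (fun e : ↥H.edgeSet => rigidityRow p ↑e) := by
        have := hind.comp (Set.inclusion (H.edgeSet_subset)) (Set.inclusion_injective _)
        exact this
      rw [Fintype.linearIndependent_iff] at hsub ⊢
      intro c hc
      apply hsub c
      funext v
      by_cases hv : v ∈ H.verts
      · have := congrFun hc ⟨v, hv⟩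
        simpa using this
      · simp only [Finset.sum_apply, Pi.smul_apply]
        rw [Finset.sum_eq_zero]
        · rfl
        rintro ⟨e, he⟩ _
        rw [row_support p (fun hmem' => hv (H.mem_verts_of_mem_edge he hmem')), smul_zero]
    have hsurj : Function.Surjective (Psi p H.verts) := Psi_surj p _ hu₀ hw₀ hne₀ hp₀
    have hrange : Module.finrank ℝ ↥(LinearMap.range (Psi p H.verts)) = 3 := by
      rw [LinearMap.range_eq_top.mpr hsurj, finrank_top]
      rw [Module.finrank_prod, Module.finrank_self, Module.finrank_pi]
      simp
    have hN : Module.finrank ℝ (↥H.verts → Fin 2 → ℝ) = 2 * Fintype.card ↥H.verts := by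
      rw [Module.finrank_pi_fintype]
      simp [Module.finrank_pi]
      ring
    have hcard : Fintype.card ↥H.edgeSet ≤ Module.finrank ℝ ↥K := by
      have hgli' : LinearIndependent ℝ (fun e => (⟨g e, hmem e⟩ : ↥K)) := by
        apply LinearIndependent.of_comp K.subtype
        exact hgli
      exact hgli'.fintype_card_le_finrank
    have hkerdim : 3 + Module.finrank ℝ ↥K = 2 * Fintype.card ↥H.verts := by
      have hrank := LinearMap.finrank_range_add_finrank_ker (Psi p H.verts)
      rw [hrange, hN] at hrank
      exact hrank
    rw [hkv, hke]
    omega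

lemma trace_block {K C : Type*} [AddCommGroup K] [Module ℝ K] [AddCommGroup C] [Module ℝ C]
    [Module.Finite ℝ K] [Module.Free ℝ K] [Module.Finite ℝ C] [Module.Free ℝ C]
    (f : (K × C) →ₗ[ℝ] (K × C)) :
    trace ℝ _ f = trace ℝ K ((fst ℝ K C) ∘ₗ f ∘ₗ (inl ℝ K C))
      + trace ℝ C ((snd ℝ K C) ∘ₗ f ∘ₗ (inr ℝ K C)) := by
  have hdec : f = (f ∘ₗ inl ℝ K C) ∘ₗ fst ℝ K C + (f ∘ₗ inr ℝ K C) ∘ₗ snd ℝ K C := by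
    ext x <;> simp [Prod.mk_zero_zero]
  conv_lhs => rw [hdec]
  rw [map_add]
  rw [trace_comp_comm' (fst ℝ K C) (f ∘ₗ inl ℝ K C),
      trace_comp_comm' (snd ℝ K C) (f ∘ₗ inr ℝ K C)]

lemma trace_decomp {M W : Type*} [AddCommGroup M] [Module ℝ M] [FiniteDimensional ℝ M]
    [AddCommGroup W] [Module ℝ W] [FiniteDimensional ℝ W]
    (f : M →ₗ[ℝ] M) (ρ : M →ₗ[ℝ] W) (σ : W →ₗ[ℝ] W)
    (hc : ρ ∘ₗ f = σ ∘ₗ ρ) (hs : Function.Surjective ρ)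
    (hinv : ∀ x ∈ LinearMap.ker ρ, f x ∈ LinearMap.ker ρ) :
    trace ℝ M f = trace ℝ (LinearMap.ker ρ) (f.restrict hinv) + trace ℝ W σ := by
  classical
  set K := LinearMap.ker ρ with hK
  obtain ⟨C, hC⟩ := Submodule.exists_isCompl K
  set e := Submodule.prodEquivOfIsCompl K C hC with he
  set g := (e.symm.conj f : (↥K × ↥C) →ₗ[ℝ] (↥K × ↥C)) with hg
  have hgf : trace ℝ M f = trace ℝ _ g := by
    rw [hg, LinearMap.trace_conj']
  have hblock1 : (fst ℝ ↥K ↥C) ∘ₗ g ∘ₗ (inl ℝ ↥K ↥C) = f.restrict hinv := by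
    ext x
    show ((e.symm (f (e (x, 0)))).1 : M) = f ↑x
    have hex : e (x, 0) = (x : M) := by
      rw [he, Submodule.coe_prodEquivOfIsCompl']
      simp
    rw [hex]
    have hfx : f ↑x ∈ K := hinv ↑x x.2
    have : e.symm (f ↑x) = (⟨f ↑x, hfx⟩, 0) := by
      rw [LinearEquiv.symm_apply_eq, he, Submodule.coe_prodEquivOfIsCompl']
      simp
    rw [this]
  have hinj : Function.Injective (ρ ∘ₗ C.subtype) := by
    intro x y hxy
    have hmemK : ((x : M) - (y : M)) ∈ K := by
      rw [hK, LinearMap.mem_ker, map_sub, sub_eq_zero]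
      exact hxy
    have hmemC : ((x : M) - (y : M)) ∈ C := sub_mem x.2 y.2
    have : ((x : M) - (y : M)) ∈ K ⊓ C := ⟨hmemK, hmemC⟩
    rw [hC.inf_eq_bot, Submodule.mem_bot, sub_eq_zero] at this
    exact Subtype.ext this
  have hsurjC : Function.Surjective (ρ ∘ₗ C.subtype) := by
    intro w
    obtain ⟨m, rfl⟩ := hs w
    have hm : m ∈ K ⊔ C := by rw [hC.sup_eq_top]; trivial
    obtain ⟨k, hk, c, hcC, rfl⟩ := Submodule.mem_sup.mp hm
    refine ⟨⟨c, hcC⟩, ?_⟩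
    have : ρ k = 0 := LinearMap.mem_ker.mp (hK ▸ hk)
    simp [this]
  set eρ := LinearEquiv.ofBijective (ρ ∘ₗ C.subtype) ⟨hinj, hsurjC⟩ with heρ
  set D := (snd ℝ ↥K ↥C) ∘ₗ g ∘ₗ (inr ℝ ↥K ↥C) with hD
  have hblock2 : eρ.conj D = σ := by
    ext w
    obtain ⟨c, rfl⟩ := eρ.surjective w
    rw [LinearEquiv.conj_apply]
    simp only [LinearMap.coe_comp, Function.comp_apply, LinearEquiv.coe_coe,
      LinearEquiv.symm_apply_apply]
    have hec : e (0, c) = (c : M) := by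
      rw [he, Submodule.coe_prodEquivOfIsCompl']
      simp
    have hDc : (D c : M) = ↑(e.symm (f ↑c)).2 := by
      rw [hD]
      simp only [LinearMap.comp_apply, LinearMap.inr_apply, LinearMap.snd_apply, hg,
        LinearEquiv.conj_apply, LinearMap.coe_comp, Function.comp_apply,
        LinearEquiv.coe_coe]
      rw [LinearEquiv.symm_symm, hec]
    show ρ ↑(D c) = σ (ρ ↑c)
    rw [hDc]
    set z := e.symm (f ↑c) with hz
    have hfz : f ↑c = ↑z.1 + ↑z.2 := by
      rw [hz, ← Submodule.coe_prodEquivOfIsCompl' K C hC, ← he, LinearEquiv.apply_symm_apply]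
    have h1 : ρ ↑z.1 = 0 := LinearMap.mem_ker.mp (hK ▸ z.1.2)
    have h2 : ρ (f ↑c) = σ (ρ ↑c) := by
      have := LinearMap.congr_fun hc (↑c : M)
      simpa using this
    rw [hfz, map_add, h1, zero_add] at h2
    exact h2
  have := trace_block g
  rw [hblock1] at this
  rw [hgf, this]
  congr 1
  rw [← hblock2]
  exact (trace_conj' D eρ).symm

/-- The linear map `m ↦ fun v => A *ᵥ m (π v)`. -/
def permMap (π : Equiv.Perm V) (A : Matrix (Fin 2) (Fin 2) ℝ) :
    (V → Fin 2 → ℝ) →ₗ[ℝ] (V → Fin 2 → ℝ) where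
  toFun m := fun v => A.mulVec (m (π v))
  map_add' m m' := by funext v; simp [Matrix.mulVec_add]
  map_smul' c m := by funext v; simp [Matrix.mulVec_smul]

lemma trace_permMap (π : Equiv.Perm V) (A : Matrix (Fin 2) (Fin 2) ℝ) :
    trace ℝ _ (permMap π A) = ∑ v : V, (if π v = v then A.trace else 0) := by
  classical
  set b := Pi.basis (fun _ : V => Pi.basisFun ℝ (Fin 2)) with hb
  rw [trace_eq_matrix_trace ℝ b]
  rw [Matrix.trace]
  rw [show (Finset.univ : Finset ((_ : V) × Fin 2)) = Finset.univ.sigma (fun _ => Finset.univ)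
    from rfl, Finset.sum_sigma]
  apply Finset.sum_congr rfl
  intro v _
  have hdiag : ∀ i : Fin 2, (LinearMap.toMatrix b b (permMap π A)).diag ⟨v, i⟩
      = (if π v = v then A i i else 0) := by
    intro i
    rw [Matrix.diag, LinearMap.toMatrix_apply, hb]
    rw [Pi.basis_repr]
    rw [Pi.basisFun_repr]
    show A.mulVec ((Pi.basis (fun _ : V => Pi.basisFun ℝ (Fin 2))) ⟨v, i⟩ (π v)) i
        = (if π v = v then A i i else 0)
    rw [Pi.basis_apply]
    by_cases h : π v = v
    · rw [h, Pi.single_eq_same, Pi.basisFun_apply, Matrix.mulVec_single]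
      simp
    · rw [Pi.single_eq_of_ne h, if_neg h]
      simp
  rw [Finset.sum_congr rfl (fun i _ => hdiag i)]
  by_cases h : π v = v
  · simp [h, Matrix.trace]
  · simp [h]

lemma trace_funLeft_perm {E : Type*} [Fintype E] [DecidableEq E] (ε : Equiv.Perm E)
    (hfix : ∀ e, ε e ≠ e) :
    trace ℝ (E → ℝ) (LinearMap.funLeft ℝ ℝ ε) = 0 := by
  rw [trace_eq_matrix_trace ℝ (Pi.basisFun ℝ E)]
  rw [LinearMap.toMatrix_eq_toMatrix']
  rw [Matrix.trace]
  apply Finset.sum_eq_zero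
  intro e _
  rw [Matrix.diag, LinearMap.toMatrix'_apply, LinearMap.funLeft_apply]
  simp [hfix e]

lemma trace_mulVecLin {n : ℕ} (A : Matrix (Fin n) (Fin n) ℝ) :
    trace ℝ _ (A.mulVecLin) = A.trace := by
  rw [trace_eq_matrix_trace ℝ (Pi.basisFun ℝ (Fin n)), LinearMap.toMatrix_eq_toMatrix',
    ← Matrix.toLin'_apply', LinearMap.toMatrix'_toLin']


/-- If `(G, p)` is an isostatic framework in `ℝ²` that is `C₃`-symmetric of type `γ`
(where `γ³ = id` and `|V(G)| ≥ 3`) and the points `p v` affinely span all of `ℝ²`,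
then `G` satisfies the Laman conditions and `γ` fixes no vertex. -/
theorem c3_isostatic_necessary {V : Type*} [Fintype V] [DecidableEq V]
    (G : SimpleGraph V) (hV : 3 ≤ Fintype.card V)
    (γ : G ≃g G) (hγ3 : ∀ v, γ (γ (γ v)) = v)
    (p : V → Fin 2 → ℝ) (hiso : Isostatic G p) (hsym : C3Symmetric G γ p)
    (hspan : affineSpan ℝ (Set.range p) = ⊤) :
    Laman G ∧ ∀ v, γ v ≠ v := by
  classical
  obtain ⟨hfw, hrig, hind⟩ := hiso
  haveI : Fintype ↥G.edgeSet := (Set.toFinite _).fintype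
  haveI : Nonempty V := Fintype.card_pos_iff.mp (by omega)
  obtain ⟨u₁, w₁, hp₁⟩ := exists_pts (p := p) hspan
  -- dimension bookkeeping
  have hEncard : G.edgeSet.ncard = Fintype.card ↥G.edgeSet := by
    rw [Set.ncard_eq_toFinset_card', Set.toFinset_card]
  have htop : (G.edgeSet.ncard : ℤ) ≤ 2 * (Fintype.card V : ℤ) - 3 := by
    have h2 : 2 ≤ (⊤ : G.Subgraph).verts.ncard := by
      show 2 ≤ (Set.univ : Set V).ncard
      rw [Set.ncard_univ, Nat.card_eq_fintype_card]
      omega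
    have := subgraph_bound G p hfw hind ⊤ h2
    have hv : (⊤ : G.Subgraph).verts.ncard = Fintype.card V := by
      show (Set.univ : Set V).ncard = _
      rw [Set.ncard_univ, Nat.card_eq_fintype_card]
    rw [SimpleGraph.Subgraph.edgeSet_top, hv] at this
    exact this
  have hkerdim : Module.finrank ℝ ↥(LinearMap.ker (rho G p)) = 3 := by
    rw [ker_rho G p hrig, LinearMap.finrank_range_of_inj (phi_inj hp₁)]
    rw [Module.finrank_prod, Module.finrank_self, Module.finrank_pi]
    simp
  have hM : Module.finrank ℝ (V → Fin 2 → ℝ) = 2 * Fintype.card V := by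
    rw [Module.finrank_pi_fintype]
    simp [Module.finrank_pi]
    ring
  have hrank : Module.finrank ℝ ↥(LinearMap.range (rho G p)) + 3 = 2 * Fintype.card V := by
    have := LinearMap.finrank_range_add_finrank_ker (rho G p)
    rw [hkerdim, hM] at this
    exact this
  have hle : Module.finrank ℝ ↥(LinearMap.range (rho G p)) ≤ Fintype.card ↥G.edgeSet := by
    have := Submodule.finrank_le (LinearMap.range (rho G p))
    rwa [Module.finrank_pi] at this
  have hlam1 : (G.edgeSet.ncard : ℤ) = 2 * (Fintype.card V : ℤ) - 3 := by
    rw [hEncard] at htop ⊢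
    omega
  have hrangedim : Module.finrank ℝ ↥(LinearMap.range (rho G p))
      = Fintype.card ↥G.edgeSet := by
    rw [hEncard] at htop
    omega
  have hsurj : Function.Surjective (rho G p) := by
    rw [← LinearMap.range_eq_top]
    apply Submodule.eq_top_of_finrank_eq
    rw [hrangedim, Module.finrank_pi]
  -- set up the symmetry operators
  set T := permMap (γ.symm.toEquiv) R3 with hT
  set ε : ↥G.edgeSet ≃ ↥G.edgeSet := SimpleGraph.Iso.mapEdgeSet (γ.symm) with hε
  set σm := LinearMap.funLeft ℝ ℝ ⇑ε with hσ
  have hsymm_p : ∀ v, p v = R3.mulVec (p (γ.symm.toEquiv v)) := by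
    intro v
    have h := hsym (γ.symm v)
    rwa [γ.apply_symm_apply] at h
  have hsymm2 : ∀ v, p (γ.symm.toEquiv v) = R3.mulVec (R3.mulVec (p v)) := by
    intro v
    have hvv : γ.symm v = γ (γ v) := by
      apply γ.injective
      rw [γ.apply_symm_apply, hγ3]
    show p (γ.symm v) = _
    rw [hvv, hsym (γ v), hsym v]
  have hcomm : (rho G p) ∘ₗ T = σm ∘ₗ (rho G p) := by
    apply LinearMap.ext
    intro m
    funext e
    obtain ⟨e, he⟩ := e
    induction e with
    | _ u w =>
      have hmemε : s(γ.symm.toEquiv u, γ.symm.toEquiv w) ∈ G.edgeSet := by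
        rw [SimpleGraph.mem_edgeSet]
        exact (γ.symm : G ≃g G).map_adj_iff.mpr (G.mem_edgeSet.mp he)
      have hεe : ε ⟨s(u, w), he⟩ = ⟨s(γ.symm.toEquiv u, γ.symm.toEquiv w), hmemε⟩ := by
        apply Subtype.ext
        show Sym2.map (⇑(γ.symm : G ≃g G)) s(u, w) = _
        rw [Sym2.map_pair_eq]
        rfl
      show (rho G p) (T m) ⟨s(u, w), he⟩ = (rho G p) m (ε ⟨s(u, w), he⟩)
      rw [hεe, rho_apply G p _ he, rho_apply G p m hmemε]
      have hTm : ∀ x, T m x = R3.mulVec (m (γ.symm.toEquiv x)) := fun _ => rfl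
      rw [hTm, hTm, hsymm_p u, hsymm_p w, ← Matrix.mulVec_sub, ← Matrix.mulVec_sub, R3_dot]
  have hinv : ∀ x ∈ LinearMap.ker (rho G p), T x ∈ LinearMap.ker (rho G p) := by
    intro x hx
    rw [LinearMap.mem_ker]
    have := LinearMap.congr_fun hcomm x
    simp only [LinearMap.comp_apply] at this
    rw [this, LinearMap.mem_ker.mp hx, map_zero]
  -- no edge is fixed by the symmetry
  have hfixfree : ∀ e : ↥G.edgeSet, ε e ≠ e := by
    rintro ⟨e, he⟩ hfix
    induction e with
    | _ u w =>
      have hadj : G.Adj u w := G.mem_edgeSet.mp he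
      have : Sym2.map (⇑(γ.symm : G ≃g G)) s(u, w) = s(u, w) := congrArg Subtype.val hfix
      rw [Sym2.map_pair_eq, Sym2.eq_iff] at this
      rcases this with ⟨h1, h2⟩ | ⟨h1, h2⟩
      · -- both endpoints fixed: their positions are 0, contradicting p u ≠ p w
        have hγu : γ u = u := by
          have := congrArg γ h1
          rw [γ.apply_symm_apply] at this
          exact this.symm
        have hγw : γ w = w := by
          have := congrArg γ h2
          rw [γ.apply_symm_apply] at this
          exact this.symm
        have hpu : p u = 0 := R3_fix _ (by rw [← hsym u, hγu])
        have hpw : p w = 0 := R3_fix _ (by rw [← hsym w, hγw])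
        exact hfw u w hadj (by rw [hpu, hpw])
      · -- swapped endpoints: contradicts γ³ = id
        have hgw : γ w = u := by
          have := congrArg γ h1
          rw [γ.apply_symm_apply] at this
          exact this.symm
        have hgu : γ u = w := by
          have := congrArg γ h2
          rw [γ.apply_symm_apply] at this
          exact this.symm
        have huw : u = w := by
          have h3 := hγ3 u
          rw [hgu, hgw, hgu] at h3
          exact h3.symm
        exact hadj.ne huw
  -- trace of the restriction to the kernel is zero
  have hφmem : ∀ x, phi (V := V) p x ∈ LinearMap.ker (rho G p) := by
    intro x
    rw [ker_rho G p hrig]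
    exact ⟨x, rfl⟩
  set φc := (phi (V := V) p).codRestrict (LinearMap.ker (rho G p)) hφmem with hφc
  have hφcinj : Function.Injective φc := by
    intro a b h
    exact phi_inj hp₁ (congrArg Subtype.val h)
  have hφcsurj : Function.Surjective φc := by
    rintro ⟨y, hy⟩
    rw [ker_rho G p hrig] at hy
    obtain ⟨x, hx⟩ := hy
    exact ⟨x, Subtype.ext hx⟩
  set ψ := LinearEquiv.ofBijective φc ⟨hφcinj, hφcsurj⟩ with hψ
  set B := LinearMap.prodMap (LinearMap.id : ℝ →ₗ[ℝ] ℝ) (Matrix.mulVecLin R3) with hB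
  have hTB : ∀ x, T (phi (V := V) p x) = phi (V := V) p (B x) := by
    rintro ⟨a, t⟩
    funext v
    show R3.mulVec (a • Jm.mulVec (p (γ.symm.toEquiv v)) + t)
        = a • Jm.mulVec (p v) + R3.mulVec t
    rw [Matrix.mulVec_add, Matrix.mulVec_smul]
    congr 1
    rw [hsymm2 v, RJRR]
  have hrestrict : T.restrict hinv = ψ.conj B := by
    apply LinearMap.ext
    intro x
    apply Subtype.ext
    rw [LinearMap.restrict_coe_apply]
    have h1 : (ψ.conj B x : V → Fin 2 → ℝ) = phi (V := V) p (B (ψ.symm x)) := by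
      rw [LinearEquiv.conj_apply]
      rfl
    have h2 : phi (V := V) p (ψ.symm x) = (x : V → Fin 2 → ℝ) :=
      congrArg Subtype.val (ψ.apply_symm_apply x)
    rw [h1, ← hTB, h2]
  have htrK : trace ℝ _ (T.restrict hinv) = 0 := by
    rw [hrestrict, LinearMap.trace_conj', LinearMap.trace_prodMap']
    rw [trace_mulVecLin, trace_R3]
    rw [show (LinearMap.id : ℝ →ₗ[ℝ] ℝ) = LinearMap.id from rfl, LinearMap.trace_id]
    simp
  have htrσ : trace ℝ _ σm = 0 := trace_funLeft_perm ε hfixfree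
  have htr := trace_decomp T (rho G p) σm hcomm hsurj hinv
  rw [htrK, htrσ, trace_permMap] at htr
  rw [zero_add] at htr
  -- conclude that γ has no fixed vertices
  have hnofix : ∀ v, γ v ≠ v := by
    intro v hv
    have hvfix : γ.symm.toEquiv v = v := by
      have := congrArg (⇑γ.symm) hv
      rw [γ.symm_apply_apply] at this
      exact this.symm
    have hnonpos : ∀ x ∈ Finset.univ,
        (if γ.symm.toEquiv x = x then Matrix.trace R3 else 0) ≤ 0 := by
      intro x _
      split
      · rw [trace_R3]; norm_num
      · exact le_refl 0
    have hzero := (Finset.sum_eq_zero_iff_of_nonpos hnonpos).mp htr v (Finset.mem_univ v)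
    rw [if_pos hvfix, trace_R3] at hzero
    norm_num at hzero
  refine ⟨⟨hlam1, fun H hH2 => subgraph_bound G p hfw hind H hH2⟩, hnofix⟩

end C3Laman
end
end

section
/- Let G be a finite simple graph with |V(G)| ≥ 3 and let γ be an automorphism of G with γ³ = id. If G satisfies the Laman conditions and γ(v) ≠ v for every vertex v of G, then there exists a (C₃,Φ) construction sequence for (G,γ). -/
open Matrix

noncomputable section

namespace C3Laman

variable {V : Type*} [Fintype V] [DecidableEq V]

/-- `H'` is a `(C₃, γ)` vertex addition of `H` (with vertex set `S`) by the new
vertices `v, w, z`. -/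
def VertexAdditionStep (γ : V → V) (S : Finset V) (H H' : SimpleGraph V)
    (v w z : V) : Prop :=
  ∃ v₁ ∈ S, ∃ v₂ ∈ S, v₁ ≠ v₂ ∧
    H'.edgeSet = H.edgeSet ∪
      {s(v, v₁), s(v, v₂), s(w, γ v₁), s(w, γ v₂), s(z, γ (γ v₁)), s(z, γ (γ v₂))}

/-- `H'` is a `(C₃, γ)` edge split of `H` (with vertex set `S`) by the new
vertices `v, w, z`. -/
def EdgeSplitStep (γ : V → V) (S : Finset V) (H H' : SimpleGraph V)
    (v w z : V) : Prop :=
  ∃ v₁ ∈ S, ∃ v₂ ∈ S, ∃ v₃ ∈ S, v₁ ≠ v₂ ∧ v₂ ≠ v₃ ∧ v₁ ≠ v₃ ∧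
    H.Adj v₁ v₂ ∧ ¬(γ v₁ = v₁ ∧ γ v₂ = v₂) ∧
    H'.edgeSet = (H.edgeSet \ {s(v₁, v₂), s(γ v₁, γ v₂), s(γ (γ v₁), γ (γ v₂))}) ∪
      {s(v, v₁), s(v, v₂), s(v, v₃),
       s(w, γ v₁), s(w, γ v₂), s(w, γ v₃),
       s(z, γ (γ v₁)), s(z, γ (γ v₂)), s(z, γ (γ v₃))}

/-- `H'` is a `(C₃, γ)` Δ extension of `H` (with vertex set `S`) by the new
vertices `v, w, z`. -/
def DeltaExtensionStep (γ : V → V) (S : Finset V) (H H' : SimpleGraph V)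
    (v w z : V) : Prop :=
  ∃ v₀ ∈ S, γ v₀ ≠ v₀ ∧
    H'.edgeSet = H.edgeSet ∪
      {s(v, w), s(w, z), s(z, v), s(v, v₀), s(w, γ v₀), s(z, γ (γ v₀))}

/-- A `(C₃, Φ)` construction sequence for `(G, γ)`:  a sequence of graphs `H i` on the
vertex sets `S i ⊆ V(G)`, starting with a triangle `K₃` on which `γ` acts as a 3-cycle,
each graph obtained from its predecessor by a `(C₃, γᵢ)` vertex addition, edge split, or
Δ extension by three new vertices permuted cyclically by `γ` (here `γᵢ` is the
restriction of `γ` to `S i`, which is required to be an automorphism of `H i`),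
and ending with `G` itself. -/
def C3ConstructionSeq (G : SimpleGraph V) (γ : V → V) : Prop :=
  ∃ (k : ℕ) (S : ℕ → Finset V) (H : ℕ → SimpleGraph V),
    (S 0).card = 3 ∧
    (∀ a b, (H 0).Adj a b ↔ a ∈ S 0 ∧ b ∈ S 0 ∧ a ≠ b) ∧
    (∀ u ∈ S 0, γ u ∈ S 0 ∧ γ u ≠ u) ∧
    (∀ i ≤ k,
      (∀ u ∈ S i, γ u ∈ S i) ∧
      (∀ a b, (H i).Adj a b → a ∈ S i ∧ b ∈ S i) ∧
      (∀ a b, (H i).Adj a b → (H i).Adj (γ a) (γ b))) ∧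
    (∀ i < k, ∃ v w z : V,
      v ∉ S i ∧ w ∉ S i ∧ z ∉ S i ∧ v ≠ w ∧ w ≠ z ∧ v ≠ z ∧
      γ v = w ∧ γ w = z ∧ γ z = v ∧
      S (i + 1) = S i ∪ {v, w, z} ∧
      (VertexAdditionStep γ (S i) (H i) (H (i + 1)) v w z ∨
       EdgeSplitStep γ (S i) (H i) (H (i + 1)) v w z ∨
       DeltaExtensionStep γ (S i) (H i) (H (i + 1)) v w z)) ∧
    S k = Finset.univ ∧ H k = G

set_option linter.unusedSectionVars false

/-! ### Counting toolbox -/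

/-- The set of edges of `H` lying within the vertex set `T`. -/
def ews (H : SimpleGraph V) (T : Finset V) : Set (Sym2 V) :=
  {e | e ∈ H.edgeSet ∧ ∀ x ∈ e, x ∈ T}

/-- The number of edges of `H` lying within `T`. -/
noncomputable def ecnt (H : SimpleGraph V) (T : Finset V) : ℕ :=
  (ews H T).ncard

lemma ews_finite (H : SimpleGraph V) (T : Finset V) : (ews H T).Finite :=
  Set.toFinite _

lemma mk_mem_ews {H : SimpleGraph V} {T : Finset V} {a b : V} :
    s(a, b) ∈ ews H T ↔ H.Adj a b ∧ a ∈ T ∧ b ∈ T := by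
  constructor
  · intro he
    exact ⟨he.1, he.2 a (by simp), he.2 b (by simp)⟩
  · rintro ⟨h1, h2, h3⟩
    refine ⟨h1, ?_⟩
    intro x hx
    rcases Sym2.mem_iff.1 hx with rfl | rfl
    · exact h2
    · exact h3

lemma mem_ews_elim {H : SimpleGraph V} {T : Finset V} {e : Sym2 V} (he : e ∈ ews H T) :
    ∃ a b, e = s(a, b) ∧ H.Adj a b ∧ a ∈ T ∧ b ∈ T := by
  induction e with
  | _ a b => exact ⟨a, b, rfl, (mk_mem_ews.1 he).1, (mk_mem_ews.1 he).2⟩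

lemma ews_mono {H : SimpleGraph V} {T U : Finset V} (h : T ⊆ U) : ews H T ⊆ ews H U := by
  intro e he; exact ⟨he.1, fun x hx => h (he.2 x hx)⟩

lemma ecnt_mono (H : SimpleGraph V) {T U : Finset V} (h : T ⊆ U) : ecnt H T ≤ ecnt H U :=
  Set.ncard_le_ncard (ews_mono h) (ews_finite H U)

lemma ews_inter (H : SimpleGraph V) (A B : Finset V) :
    ews H (A ∩ B) = ews H A ∩ ews H B := by
  ext e
  constructor
  · intro he
    exact ⟨⟨he.1, fun x hx => Finset.mem_inter.1 (he.2 x hx) |>.1⟩,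
           ⟨he.1, fun x hx => Finset.mem_inter.1 (he.2 x hx) |>.2⟩⟩
  · rintro ⟨hA, hB⟩
    exact ⟨hA.1, fun x hx => Finset.mem_inter.2 ⟨hA.2 x hx, hB.2 x hx⟩⟩

/-- Superadditivity of edge counts. -/
lemma ecnt_superadd (H : SimpleGraph V) (A B : Finset V) :
    ecnt H A + ecnt H B ≤ ecnt H (A ∪ B) + ecnt H (A ∩ B) := by
  have h1 : (ews H A ∪ ews H B).ncard + (ews H A ∩ ews H B).ncard
      = (ews H A).ncard + (ews H B).ncard :=
    Set.ncard_union_add_ncard_inter _ _ (ews_finite H A) (ews_finite H B)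
  have h2 : (ews H A ∪ ews H B).ncard ≤ ecnt H (A ∪ B) := by
    apply Set.ncard_le_ncard _ (ews_finite H _)
    rintro e (he | he)
    · exact ews_mono Finset.subset_union_left he
    · exact ews_mono Finset.subset_union_right he
  have h3 : (ews H A ∩ ews H B).ncard = ecnt H (A ∩ B) := by
    rw [ecnt, ews_inter]
  have e1 : ecnt H A = (ews H A).ncard := rfl
  have e2 : ecnt H B = (ews H B).ncard := rfl
  omega

/-- Decomposition of the edge count on removing a vertex. -/
lemma ecnt_eq_erase_add (H : SimpleGraph V) {T : Finset V} {v : V} (hv : v ∈ T) :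
    ecnt H T = ecnt H (T.erase v) + ((H.neighborSet v) ∩ ↑T).ncard := by
  have hdecomp : ews H T = ews H (T.erase v) ∪ (fun u => s(v, u)) '' ((H.neighborSet v) ∩ ↑T) := by
    ext e
    constructor
    · intro he
      obtain ⟨a, b, rfl, hab, haT, hbT⟩ := mem_ews_elim he
      by_cases hva : v = a
      · subst hva
        exact Or.inr ⟨b, ⟨hab, hbT⟩, rfl⟩
      · by_cases hvb : v = b
        · subst hvb
          exact Or.inr ⟨a, ⟨hab.symm, haT⟩, Sym2.eq_swap⟩
        · exact Or.inl (mk_mem_ews.2 ⟨hab, Finset.mem_erase.2 ⟨Ne.symm hva, haT⟩,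
            Finset.mem_erase.2 ⟨Ne.symm hvb, hbT⟩⟩)
    · rintro (he | ⟨u, ⟨hu, huT⟩, rfl⟩)
      · exact ews_mono (Finset.erase_subset v T) he
      · exact mk_mem_ews.2 ⟨hu, hv, huT⟩
  have hdisj : Disjoint (ews H (T.erase v)) ((fun u => s(v, u)) '' ((H.neighborSet v) ∩ ↑T)) := by
    rw [Set.disjoint_right]
    rintro e ⟨u, hu, rfl⟩ he
    have := he.2 v (by simp)
    simp at this
  have hinj : Set.InjOn (fun u => s(v, u)) ((H.neighborSet v) ∩ ↑T) := by
    intro a _ b _ hab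
    simp only [Sym2.eq_iff] at hab
    rcases hab with ⟨-, h⟩ | ⟨h1, h2⟩
    · exact h
    · rw [← h1, h2]
  rw [ecnt, hdecomp, Set.ncard_union_eq hdisj (ews_finite H _) (Set.toFinite _), ecnt,
    Set.ncard_image_of_injOn hinj]

/-- Edge counts are invariant under a graph automorphism. -/
lemma ecnt_image (H : SimpleGraph V) {γ : V → V} (hγ3 : ∀ x, γ (γ (γ x)) = x)
    (hinv : ∀ a b, H.Adj a b → H.Adj (γ a) (γ b)) (T : Finset V) :
    ecnt H (T.image γ) = ecnt H T := by
  have hγinj : Function.Injective γ := by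
    intro a b hab
    have := congrArg (fun t => γ (γ t)) hab
    simpa [hγ3] using this
  have himg : ews H (T.image γ) = Sym2.map γ '' ews H T := by
    ext e
    constructor
    · intro he
      obtain ⟨a, b, rfl, hab, haT, hbT⟩ := mem_ews_elim he
      obtain ⟨a', ha', rfl⟩ := Finset.mem_image.1 haT
      obtain ⟨b', hb', rfl⟩ := Finset.mem_image.1 hbT
      refine ⟨s(a', b'), mk_mem_ews.2 ⟨?_, ha', hb'⟩, by rw [Sym2.map_pair_eq]⟩
      have := hinv _ _ (hinv _ _ hab)
      simpa [hγ3] using this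
    · rintro ⟨e', he', rfl⟩
      obtain ⟨a, b, rfl, hab, haT, hbT⟩ := mem_ews_elim he'
      rw [Sym2.map_pair_eq]
      exact mk_mem_ews.2 ⟨hinv _ _ hab, Finset.mem_image_of_mem _ haT,
        Finset.mem_image_of_mem _ hbT⟩
  rw [ecnt, himg, Set.ncard_image_of_injective _ (Sym2.map.injective hγinj)]
  rfl

/-- A finite set closed under a fixed-point-free action of order 3 has cardinality
divisible by 3. -/
lemma orbit3_ncard {α : Type*} (g : α → α) (h3 : ∀ x, g (g (g x)) = x) :
    ∀ (n : ℕ) (s : Set α), s.Finite → s.ncard ≤ n → (∀ x ∈ s, g x ∈ s) →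
      (∀ x ∈ s, g x ≠ x) → 3 ∣ s.ncard := by
  have hginj : Function.Injective g := by
    intro a b hab
    have := congrArg (fun t => g (g t)) hab
    simpa [h3] using this
  intro n
  induction n with
  | zero =>
    intro s hfin hle _ _
    simp [Nat.le_zero.1 hle]
  | succ n ih =>
    intro s hfin hle hcl hfix
    rcases s.eq_empty_or_nonempty with rfl | ⟨x, hx⟩
    · simp
    · have hgx : g x ∈ s := hcl x hx
      have hggx : g (g x) ∈ s := hcl _ hgx
      have h1 : g x ≠ x := hfix x hx
      have h2 : g (g x) ≠ x := by
        intro h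
        have := congrArg g h
        rw [h3] at this
        exact h1 this.symm
      have h3' : g (g x) ≠ g x := fun h => h1 (hginj h)
      set A : Set α := {x, g x, g (g x)} with hA
      have hAsub : A ⊆ s := by
        intro y hy
        rcases hy with rfl | rfl | rfl
        · exact hx
        · exact hgx
        · exact hggx
      have hAcard : A.ncard = 3 :=
        Set.ncard_eq_three.2 ⟨x, g x, g (g x), Ne.symm h1, Ne.symm h2, Ne.symm h3', rfl⟩
      have hcard3 : 3 ≤ s.ncard := by
        rw [← hAcard]
        exact Set.ncard_le_ncard hAsub hfin
      set t : Set α := s \ A with ht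
      have htcard : t.ncard = s.ncard - 3 := by
        rw [ht, Set.ncard_diff hAsub (Set.toFinite A), hAcard]
      have htcl : ∀ y ∈ t, g y ∈ t := by
        rintro y ⟨hys, hyA⟩
        refine ⟨hcl y hys, fun hgA => ?_⟩
        rcases hgA with h | h | h
        · apply hyA; right; right; show y = g (g x); rw [← h, h3]
        · exact hyA (Or.inl (hginj h))
        · exact hyA (Or.inr (Or.inl (hginj h)))
      have htfix : ∀ y ∈ t, g y ≠ y := fun y hy => hfix y hy.1
      have hdvd : 3 ∣ t.ncard := ih t (hfin.subset Set.diff_subset) (by omega) htcl htfix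
      omega

/-! ### Invariance, divisibility, and the Laman predicate on finsets -/

/-- `γ` maps edges of `H` to edges of `H`. -/
def Inv3 (γ : V → V) (H : SimpleGraph V) : Prop :=
  ∀ a b, H.Adj a b → H.Adj (γ a) (γ b)

lemma inj_of_cube {γ : V → V} (hγ3 : ∀ x, γ (γ (γ x)) = x) : Function.Injective γ := by
  intro a b hab
  have := congrArg (fun t => γ (γ t)) hab
  simpa [hγ3] using this

lemma orbit3_finset {γ : V → V} (hγ3 : ∀ x, γ (γ (γ x)) = x) (hfree : ∀ x, γ x ≠ x)
    (T : Finset V) (hcl : ∀ u ∈ T, γ u ∈ T) : 3 ∣ T.card := by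
  have h := orbit3_ncard γ hγ3 (↑T : Set V).ncard ↑T (Set.toFinite _) le_rfl
    (fun x hx => hcl x hx) (fun x _ => hfree x)
  simpa [Set.ncard_coe_finset] using h

lemma sym2_map_cube {γ : V → V} (hγ3 : ∀ x, γ (γ (γ x)) = x) (e : Sym2 V) :
    Sym2.map γ (Sym2.map γ (Sym2.map γ e)) = e := by
  induction e with
  | _ a b => simp [Sym2.map_pair_eq, hγ3]

lemma orbit3_ecnt (H : SimpleGraph V) {γ : V → V} (hγ3 : ∀ x, γ (γ (γ x)) = x)
    (hfree : ∀ x, γ x ≠ x) (hinv : Inv3 γ H) (U : Finset V) (hcl : ∀ u ∈ U, γ u ∈ U) :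
    3 ∣ ecnt H U := by
  apply orbit3_ncard (Sym2.map γ) (sym2_map_cube hγ3) (ews H U).ncard _ (ews_finite H U) le_rfl
  · intro e he
    obtain ⟨a, b, rfl, hab, haU, hbU⟩ := mem_ews_elim he
    rw [Sym2.map_pair_eq]
    exact mk_mem_ews.2 ⟨hinv _ _ hab, hcl _ haU, hcl _ hbU⟩
  · intro e he h
    obtain ⟨a, b, rfl, hab, -, -⟩ := mem_ews_elim he
    rw [Sym2.map_pair_eq, Sym2.eq_iff] at h
    rcases h with ⟨h1, -⟩ | ⟨h1, h2⟩
    · exact hfree a h1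
    · have : γ (γ a) = a := by rw [h1, h2]
      have := congrArg γ this
      rw [hγ3] at this
      exact hfree a this.symm

/-- The Laman property of a graph `H` relative to a vertex set `S`. -/
def LamOn (H : SimpleGraph V) (S : Finset V) : Prop :=
  (∀ a b, H.Adj a b → a ∈ S ∧ b ∈ S) ∧
  (ecnt H S : ℤ) = 2 * S.card - 3 ∧
  ∀ T ⊆ S, 2 ≤ T.card → (ecnt H T : ℤ) ≤ 2 * T.card - 3

lemma laman_to_lamOn (G : SimpleGraph V) (h : Laman G) : LamOn G Finset.univ := by
  have hews : ∀ T : Finset V, (T = Finset.univ) → ews G T = G.edgeSet := by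
    rintro T rfl
    ext e
    refine ⟨fun he => he.1, fun he => ⟨he, fun x _ => Finset.mem_univ x⟩⟩
  refine ⟨fun a b _ => ⟨Finset.mem_univ a, Finset.mem_univ b⟩, ?_, ?_⟩
  · rw [ecnt, hews _ rfl, Finset.card_univ]
    exact h.1
  · intro T _ hT2
    set HT : G.Subgraph :=
      { verts := ↑T
        Adj := fun x y => G.Adj x y ∧ x ∈ T ∧ y ∈ T
        adj_sub := fun ha => ha.1
        edge_vert := fun ha => ha.2.1
        symm := ⟨fun x y ⟨ha, hx, hy⟩ => ⟨ha.symm, hy, hx⟩⟩ } with hHT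
    have hverts : HT.verts.ncard = T.card := Set.ncard_coe_finset T
    have hedge : HT.edgeSet = ews G T := by
      ext e
      induction e with
      | _ a b =>
        rw [SimpleGraph.Subgraph.mem_edgeSet, mk_mem_ews]
    have := h.2 HT (by rw [hverts]; exact hT2)
    rw [hverts, hedge] at this
    exact this

/-! ### Helpers for the reduction -/

lemma nbr_image {γ : V → V} {H : SimpleGraph V} (hγ3 : ∀ x, γ (γ (γ x)) = x)
    (hinv : Inv3 γ H) (v : V) :
    H.neighborSet (γ v) = γ '' H.neighborSet v := by
  ext x
  constructor
  · intro hx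
    have h1 : H.Adj (γ (γ (γ v))) (γ (γ x)) := hinv _ _ (hinv _ _ hx)
    rw [hγ3] at h1
    exact ⟨γ (γ x), h1, hγ3 x⟩
  · rintro ⟨u, hu, rfl⟩
    exact hinv _ _ hu

lemma edge_containing {H : SimpleGraph V} {e : Sym2 V} {v : V} (hv : v ∈ e)
    (he : e ∈ H.edgeSet) : ∃ u, H.Adj v u ∧ e = s(v, u) := by
  induction e with
  | _ a b =>
    rcases Sym2.mem_iff.1 hv with rfl | rfl
    · exact ⟨b, he, rfl⟩
    · exact ⟨a, (H.mem_edgeSet.1 he).symm, Sym2.eq_swap.symm⟩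

lemma two_le_deg {H : SimpleGraph V} {S : Finset V} (hlam : LamOn H S) {v : V}
    (hv : v ∈ S) (hS : 4 ≤ S.card) : 2 ≤ (H.neighborSet v).ncard := by
  by_contra hlt
  push_neg at hlt
  have h1 : ecnt H S = ecnt H (S.erase v) + ((H.neighborSet v) ∩ ↑S).ncard :=
    ecnt_eq_erase_add H hv
  have h2 : ((H.neighborSet v) ∩ ↑S).ncard ≤ (H.neighborSet v).ncard :=
    Set.ncard_le_ncard Set.inter_subset_left (Set.toFinite _)
  have h3 : (ecnt H (S.erase v) : ℤ) ≤ 2 * (S.erase v).card - 3 := by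
    apply hlam.2.2 _ (Finset.erase_subset v S)
    rw [Finset.card_erase_of_mem hv]
    omega
  have h4 := hlam.2.1
  rw [Finset.card_erase_of_mem hv] at h3
  have h5 : 1 ≤ S.card := by omega
  push_cast [h5] at h3
  omega

lemma exists_deg_le_three {H : SimpleGraph V} {S : Finset V} (hlam : LamOn H S)
    (hS : 2 ≤ S.card) : ∃ v ∈ S, (H.neighborSet v).ncard ≤ 3 := by
  classical
  by_contra hno
  push_neg at hno
  have hdeg : ∀ v, (H.neighborSet v).ncard = H.degree v := by
    intro v
    rw [Set.ncard_eq_toFinset_card']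
    rfl
  have hedges : ews H S = H.edgeSet := by
    ext e
    refine ⟨fun he => he.1, fun he => ⟨he, ?_⟩⟩
    obtain ⟨a, b, rfl⟩ := e.exists_rep
    intro x hx
    rcases Sym2.mem_iff.1 hx with rfl | rfl
    · exact (hlam.1 _ _ (H.mem_edgeSet.1 he)).1
    · exact (hlam.1 _ _ (H.mem_edgeSet.1 he)).2
  have hcnt : ecnt H S = H.edgeFinset.card := by
    rw [ecnt, hedges, Set.ncard_eq_toFinset_card']
    congr 1
  have hhs := SimpleGraph.sum_degrees_eq_twice_card_edges H
  have hlow : 4 * S.card ≤ ∑ v ∈ S, H.degree v := by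
    calc 4 * S.card = ∑ _v ∈ S, 4 := by rw [Finset.sum_const, smul_eq_mul, mul_comm]
    _ ≤ ∑ v ∈ S, H.degree v := by
        apply Finset.sum_le_sum
        intro i hi
        have := hno i hi
        rw [hdeg i] at this
        omega
  have hsub : ∑ v ∈ S, H.degree v ≤ ∑ v : V, H.degree v := by
    apply Finset.sum_le_sum_of_subset_of_nonneg (Finset.subset_univ S)
    intro i _ _
    exact Nat.zero_le _
  have hc := hlam.2.1
  rw [hcnt] at hc
  rw [hhs] at hsub
  omega

/-- A pair of vertices is *covered* if some tight set inside `S.erase v` contains it. -/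
def Cov (H : SimpleGraph V) (S : Finset V) (v x y : V) : Prop :=
  ∃ T : Finset V, T ⊆ S.erase v ∧ 2 ≤ T.card ∧ x ∈ T ∧ y ∈ T ∧
    (ecnt H T : ℤ) = 2 * T.card - 3

lemma exists_uncovered {H : SimpleGraph V} {S : Finset V} (hlam : LamOn H S)
    {v a b c : V} (hv : v ∈ S)
    (ha : H.Adj v a) (hb : H.Adj v b) (hc : H.Adj v c)
    (hab : a ≠ b) (hbc : b ≠ c) (hac : a ≠ c) :
    ∃ x y t : V, ({x, y, t} : Set V) = {a, b, c} ∧ x ≠ y ∧ y ≠ t ∧ x ≠ t ∧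
      H.Adj v x ∧ H.Adj v y ∧ H.Adj v t ∧ ¬ H.Adj x y ∧
      ∀ T ⊆ S.erase v, 2 ≤ T.card → x ∈ T → y ∈ T →
        (ecnt H T : ℤ) ≤ 2 * T.card - 4 := by
  have haS : a ∈ S := (hlam.1 _ _ ha).2
  have hbS : b ∈ S := (hlam.1 _ _ hb).2
  have hcS : c ∈ S := (hlam.1 _ _ hc).2
  have hav : a ≠ v := fun h => H.irrefl (h ▸ ha)
  have hbv : b ≠ v := fun h => H.irrefl (h ▸ hb)
  have hcv : c ≠ v := fun h => H.irrefl (h ▸ hc)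
  have haE : a ∈ S.erase v := Finset.mem_erase.2 ⟨hav, haS⟩
  have hbE : b ∈ S.erase v := Finset.mem_erase.2 ⟨hbv, hbS⟩
  have hcE : c ∈ S.erase v := Finset.mem_erase.2 ⟨hcv, hcS⟩
  -- adding `v` back to a tight set containing `a, b, c` violates the Laman count
  have hins : ∀ X : Finset V, X ⊆ S.erase v → a ∈ X → b ∈ X → c ∈ X →
      (2 * X.card - 3 : ℤ) ≤ ecnt H X → False := by
    intro X hX haX hbX hcX hbig
    have hvX : v ∉ X := fun h => (Finset.mem_erase.1 (hX h)).1 rfl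
    have h1 : ecnt H (insert v X)
        = ecnt H ((insert v X).erase v) + ((H.neighborSet v) ∩ ↑(insert v X)).ncard :=
      ecnt_eq_erase_add H (Finset.mem_insert_self v X)
    rw [Finset.erase_insert hvX] at h1
    have h2 : ({a, b, c} : Set V) ⊆ (H.neighborSet v) ∩ ↑(insert v X) := by
      intro u hu
      rcases hu with rfl | rfl | rfl
      · exact ⟨ha, by simp [haX]⟩
      · exact ⟨hb, by simp [hbX]⟩
      · exact ⟨hc, by simp [hcX]⟩
    have h3 : 3 ≤ ((H.neighborSet v) ∩ ↑(insert v X)).ncard := by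
      calc 3 = ({a, b, c} : Set V).ncard :=
            (Set.ncard_eq_three.2 ⟨a, b, c, hab, hac, hbc, rfl⟩).symm
      _ ≤ _ := Set.ncard_le_ncard h2 (Set.toFinite _)
    have h4 : insert v X ⊆ S := by
      intro u hu
      rcases Finset.mem_insert.1 hu with rfl | hu
      · exact hv
      · exact (Finset.mem_erase.1 (hX hu)).2
    have hXpos : 1 ≤ X.card := Finset.card_pos.2 ⟨a, haX⟩
    have h5 := hlam.2.2 (insert v X) h4 (by
      rw [Finset.card_insert_of_notMem hvX]; omega)
    rw [Finset.card_insert_of_notMem hvX] at h5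
    push_cast at h5 hbig
    omega
  -- union of two overlapping tight sets is tight
  have tool1 : ∀ T U : Finset V, T ⊆ S.erase v → U ⊆ S.erase v → 2 ≤ (T ∩ U).card →
      (ecnt H T : ℤ) = 2 * T.card - 3 → (ecnt H U : ℤ) = 2 * U.card - 3 →
      (2 * (T ∪ U).card - 3 : ℤ) ≤ ecnt H (T ∪ U) := by
    intro T U hT hU hTU h1 h2
    have hsup := ecnt_superadd H T U
    have hsubS : T ∩ U ⊆ S := fun u hu =>
      (Finset.mem_erase.1 (hT (Finset.mem_inter.1 hu).1)).2
    have h3 := hlam.2.2 (T ∩ U) hsubS hTU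
    have h4 := Finset.card_union_add_card_inter T U
    push_cast at *
    omega
  -- main claim: not all three pairs are covered
  have hmain : ¬ (Cov H S v a b ∧ Cov H S v b c ∧ Cov H S v a c) := by
    rintro ⟨⟨T₁, hT₁sub, hT₁2, haT₁, hbT₁, hT₁t⟩,
            ⟨T₂, hT₂sub, hT₂2, hbT₂, hcT₂, hT₂t⟩,
            ⟨T₃, hT₃sub, hT₃2, haT₃, hcT₃, hT₃t⟩⟩
    by_cases h12 : 2 ≤ (T₁ ∩ T₂).card
    · exact hins (T₁ ∪ T₂) (Finset.union_subset hT₁sub hT₂sub)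
        (Finset.mem_union_left _ haT₁) (Finset.mem_union_left _ hbT₁)
        (Finset.mem_union_right _ hcT₂) (tool1 T₁ T₂ hT₁sub hT₂sub h12 hT₁t hT₂t)
    by_cases h23 : 2 ≤ (T₂ ∩ T₃).card
    · exact hins (T₂ ∪ T₃) (Finset.union_subset hT₂sub hT₃sub)
        (Finset.mem_union_right _ haT₃) (Finset.mem_union_left _ hbT₂)
        (Finset.mem_union_left _ hcT₂) (tool1 T₂ T₃ hT₂sub hT₃sub h23 hT₂t hT₃t)
    by_cases h13 : 2 ≤ (T₁ ∩ T₃).card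
    · exact hins (T₁ ∪ T₃) (Finset.union_subset hT₁sub hT₃sub)
        (Finset.mem_union_left _ haT₁) (Finset.mem_union_left _ hbT₁)
        (Finset.mem_union_right _ hcT₃) (tool1 T₁ T₃ hT₁sub hT₃sub h13 hT₁t hT₃t)
    push_neg at h12 h23 h13
    have e12 : T₁ ∩ T₂ = {b} :=
      Finset.eq_singleton_iff_unique_mem.2 ⟨Finset.mem_inter.2 ⟨hbT₁, hbT₂⟩,
        fun x hx => Finset.card_le_one.1 (by omega) x hx b (Finset.mem_inter.2 ⟨hbT₁, hbT₂⟩)⟩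
    have e23 : T₂ ∩ T₃ = {c} :=
      Finset.eq_singleton_iff_unique_mem.2 ⟨Finset.mem_inter.2 ⟨hcT₂, hcT₃⟩,
        fun x hx => Finset.card_le_one.1 (by omega) x hx c (Finset.mem_inter.2 ⟨hcT₂, hcT₃⟩)⟩
    have e13 : T₁ ∩ T₃ = {a} :=
      Finset.eq_singleton_iff_unique_mem.2 ⟨Finset.mem_inter.2 ⟨haT₁, haT₃⟩,
        fun x hx => Finset.card_le_one.1 (by omega) x hx a (Finset.mem_inter.2 ⟨haT₁, haT₃⟩)⟩
    -- edge sets in the three tight sets are pairwise disjoint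
    have hdisj : ∀ T U : Finset V, (T ∩ U).card ≤ 1 → Disjoint (ews H T) (ews H U) := by
      intro T U hcard
      rw [Set.disjoint_left]
      intro e h1 h2
      have h3 : e ∈ ews H (T ∩ U) := by rw [ews_inter]; exact ⟨h1, h2⟩
      obtain ⟨p, q, rfl, hpq, hpT, hqT⟩ := mem_ews_elim h3
      have : p = q := Finset.card_le_one.1 hcard p hpT q hqT
      exact hpq.ne this
    have hXsub : T₁ ∪ T₂ ∪ T₃ ⊆ S.erase v :=
      Finset.union_subset (Finset.union_subset hT₁sub hT₂sub) hT₃sub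
    have hcard12 : (T₁ ∪ T₂).card + 1 = T₁.card + T₂.card := by
      have := Finset.card_union_add_card_inter T₁ T₂
      rw [e12, Finset.card_singleton] at this
      omega
    have hinter2 : (T₁ ∪ T₂) ∩ T₃ = {a, c} := by
      rw [Finset.union_inter_distrib_right, e13, e23]
      rfl
    have hcardX : (T₁ ∪ T₂ ∪ T₃).card + 3 = T₁.card + T₂.card + T₃.card := by
      have h := Finset.card_union_add_card_inter (T₁ ∪ T₂) T₃
      rw [hinter2] at h
      have : ({a, c} : Finset V).card = 2 := by
        rw [Finset.card_insert_of_notMem (by simpa using hac), Finset.card_singleton]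
      omega
    have hecount : ecnt H T₁ + ecnt H T₂ + ecnt H T₃ ≤ ecnt H (T₁ ∪ T₂ ∪ T₃) := by
      have d12 := hdisj T₁ T₂ (by omega)
      have d13 := hdisj T₁ T₃ (by omega)
      have d23 := hdisj T₂ T₃ (by omega)
      have hu1 : (ews H T₁ ∪ ews H T₂).ncard = ecnt H T₁ + ecnt H T₂ :=
        Set.ncard_union_eq d12 (ews_finite H _) (ews_finite H _)
      have hu2 : (ews H T₁ ∪ ews H T₂ ∪ ews H T₃).ncard
          = (ews H T₁ ∪ ews H T₂).ncard + ecnt H T₃ :=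
        Set.ncard_union_eq (Set.disjoint_union_left.2 ⟨d13, d23⟩)
          ((ews_finite H _).union (ews_finite H _)) (ews_finite H _)
      have hsub2 : ews H T₁ ∪ ews H T₂ ∪ ews H T₃ ⊆ ews H (T₁ ∪ T₂ ∪ T₃) := by
        rintro e ((he | he) | he)
        · exact ews_mono (fun u hu => Finset.mem_union_left _ (Finset.mem_union_left _ hu)) he
        · exact ews_mono (fun u hu => Finset.mem_union_left _ (Finset.mem_union_right _ hu)) he
        · exact ews_mono (fun u hu => Finset.mem_union_right _ hu) he
      have h9 := Set.ncard_le_ncard hsub2 (ews_finite H _)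
      have h10 : (ews H (T₁ ∪ T₂ ∪ T₃)).ncard = ecnt H (T₁ ∪ T₂ ∪ T₃) := rfl
      omega
    apply hins (T₁ ∪ T₂ ∪ T₃) hXsub
      (Finset.mem_union_left _ (Finset.mem_union_left _ haT₁))
      (Finset.mem_union_left _ (Finset.mem_union_left _ hbT₁))
      (Finset.mem_union_right _ hcT₃)
    push_cast at *
    omega
  -- a pair that is adjacent is covered
  have hadjcov : ∀ x y : V, x ∈ S.erase v → y ∈ S.erase v → x ≠ y → H.Adj x y →
      Cov H S v x y := by
    intro x y hx hy hxy hadj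
    refine ⟨{x, y}, ?_, ?_, by simp, by simp, ?_⟩
    · intro u hu
      rcases Finset.mem_insert.1 hu with rfl | hu
      · exact hx
      · rw [Finset.mem_singleton.1 hu]; exact hy
    · rw [Finset.card_insert_of_notMem (by simpa using hxy), Finset.card_singleton]
    · have hews : ews H {x, y} = {s(x, y)} := by
        ext e
        constructor
        · intro he
          obtain ⟨p, q, rfl, hpq, hpT, hqT⟩ := mem_ews_elim he
          simp only [Finset.mem_insert, Finset.mem_singleton] at hpT hqT
          rcases hpT with rfl | rfl <;> rcases hqT with rfl | rfl
          · exact absurd rfl hpq.ne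
          · rfl
          · exact Sym2.eq_swap
          · exact absurd rfl hpq.ne
        · rintro rfl
          exact mk_mem_ews.2 ⟨hadj, by simp, by simp⟩
      rw [ecnt, hews, Set.ncard_singleton,
        Finset.card_insert_of_notMem (by simpa using hxy), Finset.card_singleton]
      norm_num
  -- conclude
  have hfinal : ∀ x y t : V, ({x, y, t} : Set V) = {a, b, c} → x ≠ y → y ≠ t → x ≠ t →
      x ∈ S.erase v → y ∈ S.erase v → H.Adj v x → H.Adj v y → H.Adj v t → ¬ Cov H S v x y →
      ∃ x' y' t' : V, ({x', y', t'} : Set V) = {a, b, c} ∧ x' ≠ y' ∧ y' ≠ t' ∧ x' ≠ t' ∧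
        H.Adj v x' ∧ H.Adj v y' ∧ H.Adj v t' ∧ ¬ H.Adj x' y' ∧
        ∀ T ⊆ S.erase v, 2 ≤ T.card → x' ∈ T → y' ∈ T →
          (ecnt H T : ℤ) ≤ 2 * T.card - 4 := by
    intro x y t hset hxy hyt hxt hxE hyE hvx hvy hvt hnc
    refine ⟨x, y, t, hset, hxy, hyt, hxt, hvx, hvy, hvt, ?_, ?_⟩
    · intro hadj
      exact hnc (hadjcov x y hxE hyE hxy hadj)
    · intro T hT hT2 hxT hyT
      have h1 := hlam.2.2 T (fun u hu => (Finset.mem_erase.1 (hT hu)).2) hT2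
      have h2 : (ecnt H T : ℤ) ≠ 2 * T.card - 3 := by
        intro heq
        exact hnc ⟨T, hT, hT2, hxT, hyT, heq⟩
      omega
  by_cases h1 : Cov H S v a b
  · by_cases h2 : Cov H S v b c
    · have h3 : ¬ Cov H S v a c := fun h3 => hmain ⟨h1, h2, h3⟩
      exact hfinal a c b (by ext u; simp; tauto) hac (Ne.symm hbc) hab haE hcE ha hc hb h3
    · exact hfinal b c a (by ext u; simp; tauto) hbc (Ne.symm hac) (Ne.symm hab)
        hbE hcE hb hc ha h2
  · exact hfinal a b c rfl hab hbc hac haE hbE ha hb hc h1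

/-! ### Blocker analysis for the symmetric edge split -/

lemma two_le_card_of_mem {T : Finset V} {p q : V} (hp : p ∈ T) (hq : q ∈ T) (h : p ≠ q) :
    2 ≤ T.card := by
  have : ({p, q} : Finset V) ⊆ T := by
    intro u hu
    rcases Finset.mem_insert.1 hu with rfl | hu
    · exact hp
    · rw [Finset.mem_singleton.1 hu]; exact hq
  have h2 : ({p, q} : Finset V).card = 2 := by
    rw [Finset.card_insert_of_notMem (by simpa using h), Finset.card_singleton]
  calc 2 = ({p, q} : Finset V).card := h2.symm
  _ ≤ T.card := Finset.card_le_card this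

lemma image_cube {γ : V → V} (hγ3 : ∀ u, γ (γ (γ u)) = u) (T : Finset V) :
    ((T.image γ).image γ).image γ = T := by
  rw [Finset.image_image, Finset.image_image]
  have h : T.image ((γ ∘ γ) ∘ γ) = T.image id := Finset.image_congr (fun u _ => hγ3 u)
  rw [h, Finset.image_id]

/-- Membership patterns for the three symmetric images of the candidate pair `{x, y}`. -/
def IsPair (γ : V → V) (x y p q : V) : Prop :=
  (p = x ∧ q = y) ∨ (p = γ x ∧ q = γ y) ∨ (p = γ (γ x) ∧ q = γ (γ y))

lemma isPair_next {γ : V → V} (hγ3 : ∀ u, γ (γ (γ u)) = u) {x y p q : V}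
    (h : IsPair γ x y p q) : IsPair γ x y (γ p) (γ q) := by
  rcases h with ⟨rfl, rfl⟩ | ⟨rfl, rfl⟩ | ⟨rfl, rfl⟩
  · exact Or.inr (Or.inl ⟨rfl, rfl⟩)
  · exact Or.inr (Or.inr ⟨rfl, rfl⟩)
  · exact Or.inl ⟨hγ3 x, hγ3 y⟩

lemma isPair_ne {γ : V → V} (hγ3 : ∀ u, γ (γ (γ u)) = u) {x y p q : V} (hxy : x ≠ y)
    (h : IsPair γ x y p q) : p ≠ q := by
  have hinj := inj_of_cube hγ3
  rcases h with ⟨rfl, rfl⟩ | ⟨rfl, rfl⟩ | ⟨rfl, rfl⟩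
  · exact hxy
  · exact fun h => hxy (hinj h)
  · exact fun h => hxy (hinj (hinj h))

section Blockers

variable {γ : V → V} {H : SimpleGraph V} {S S₀ : Finset V} {x y : V}

/-- P1: no tight set inside `S₀` contains any symmetric image of the pair. -/
lemma pair_bound (hγ3 : ∀ u, γ (γ (γ u)) = u)
    (hinv : Inv3 γ H) (hcl₀ : ∀ u ∈ S₀, γ u ∈ S₀) (hxy : x ≠ y)
    (huncov : ∀ T ⊆ S₀, 2 ≤ T.card → x ∈ T → y ∈ T → (ecnt H T : ℤ) ≤ 2 * T.card - 4) :
    ∀ T ⊆ S₀, 2 ≤ T.card → ∀ p q : V, IsPair γ x y p q → p ∈ T → q ∈ T →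
      (ecnt H T : ℤ) ≤ 2 * T.card - 4 := by
  have hinj := inj_of_cube hγ3
  have himgsub : ∀ T : Finset V, T ⊆ S₀ → T.image γ ⊆ S₀ := by
    intro T hT u hu
    obtain ⟨t, ht, rfl⟩ := Finset.mem_image.1 hu
    exact hcl₀ t (hT ht)
  have hcard : ∀ T : Finset V, (T.image γ).card = T.card :=
    fun T => Finset.card_image_of_injective T hinj
  intro T hT hT2 p q hpq hp hq
  rcases hpq with ⟨rfl, rfl⟩ | ⟨rfl, rfl⟩ | ⟨rfl, rfl⟩
  · exact huncov T hT hT2 hp hq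
  · -- pair is (γ x, γ y); apply `γ` twice
    set T' := (T.image γ).image γ with hT'
    have hx' : x ∈ T' := by
      rw [hT']
      have h1 : γ (γ x) ∈ T.image γ := Finset.mem_image_of_mem γ hp
      have h2 : γ (γ (γ x)) ∈ T' := Finset.mem_image_of_mem γ h1
      rwa [hγ3] at h2
    have hy' : y ∈ T' := by
      rw [hT']
      have h1 : γ (γ y) ∈ T.image γ := Finset.mem_image_of_mem γ hq
      have h2 : γ (γ (γ y)) ∈ T' := Finset.mem_image_of_mem γ h1
      rwa [hγ3] at h2
    have := huncov T' (himgsub _ (himgsub _ hT)) (by rw [hT', hcard, hcard]; exact hT2) hx' hy'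
    rwa [hT', ecnt_image H hγ3 hinv, ecnt_image H hγ3 hinv, hcard, hcard] at this
  · -- pair is (γ² x, γ² y); apply `γ` once
    set T' := T.image γ with hT'
    have hx' : x ∈ T' := by
      have h2 : γ (γ (γ x)) ∈ T' := Finset.mem_image_of_mem γ hp
      rwa [hγ3] at h2
    have hy' : y ∈ T' := by
      have h2 : γ (γ (γ y)) ∈ T' := Finset.mem_image_of_mem γ hq
      rwa [hγ3] at h2
    have := huncov T' (himgsub _ hT) (by rw [hT', hcard]; exact hT2) hx' hy'
    rwa [hT', ecnt_image H hγ3 hinv, hcard] at this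

/-- P2: a set inside `S₀` containing two consecutive symmetric images of the pair. -/
lemma pair2_bound (hγ3 : ∀ u, γ (γ (γ u)) = u) (hfree : ∀ u, γ u ≠ u)
    (hinv : Inv3 γ H) (hcl₀ : ∀ u ∈ S₀, γ u ∈ S₀) (hxy : x ≠ y)
    (huncov : ∀ T ⊆ S₀, 2 ≤ T.card → x ∈ T → y ∈ T → (ecnt H T : ℤ) ≤ 2 * T.card - 4) :
    ∀ T ⊆ S₀, 2 ≤ T.card → ∀ p q : V, IsPair γ x y p q → p ∈ T → q ∈ T →
      γ p ∈ T → γ q ∈ T → (ecnt H T : ℤ) ≤ 2 * T.card - 5 := by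
  have hinj := inj_of_cube hγ3
  have P1 := pair_bound hγ3 hinv hcl₀ hxy huncov
  have himgsub : ∀ T : Finset V, T ⊆ S₀ → T.image γ ⊆ S₀ := by
    intro T hT u hu
    obtain ⟨t, ht, rfl⟩ := Finset.mem_image.1 hu
    exact hcl₀ t (hT ht)
  have hcard : ∀ T : Finset V, (T.image γ).card = T.card :=
    fun T => Finset.card_image_of_injective T hinj
  intro T hT hT2 p q hpq hp hq hgp hgq
  by_contra hcon
  push_neg at hcon
  have hpqne : p ≠ q := isPair_ne hγ3 hxy hpq
  have hgpq : IsPair γ x y (γ p) (γ q) := isPair_next hγ3 hpq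
  have hggpq : IsPair γ x y (γ (γ p)) (γ (γ q)) := isPair_next hγ3 hgpq
  set B := T.image γ with hB
  set C := B.image γ with hC
  have hBsub : B ⊆ S₀ := himgsub _ hT
  have hCsub : C ⊆ S₀ := himgsub _ hBsub
  have hBcard : B.card = T.card := hcard T
  have hCcard : C.card = T.card := by rw [hC, hcard, hBcard]
  have hBe : ecnt H B = ecnt H T := ecnt_image H hγ3 hinv T
  have hCe : ecnt H C = ecnt H T := by rw [hC, ecnt_image H hγ3 hinv, hBe]
  -- γp, γq ∈ T ∩ B
  have hgpB : γ p ∈ B := Finset.mem_image_of_mem γ hp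
  have hgqB : γ q ∈ B := Finset.mem_image_of_mem γ hq
  have hI1 : γ p ∈ T ∩ B := Finset.mem_inter.2 ⟨hgp, hgpB⟩
  have hI1' : γ q ∈ T ∩ B := Finset.mem_inter.2 ⟨hgq, hgqB⟩
  have hgpgq : γ p ≠ γ q := fun h => hpqne (hinj h)
  have hIcard : 2 ≤ (T ∩ B).card := two_le_card_of_mem hI1 hI1' hgpgq
  have hIbound : (ecnt H (T ∩ B) : ℤ) ≤ 2 * (T ∩ B).card - 4 :=
    P1 (T ∩ B) (fun u hu => hT (Finset.mem_inter.1 hu).1) hIcard _ _ hgpq hI1 hI1'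
  have hsup1 := ecnt_superadd H T B
  have hmod1 := Finset.card_union_add_card_inter T B
  -- γ²p, γ²q ∈ (T ∪ B) ∩ C
  have hggpC : γ (γ p) ∈ C := Finset.mem_image_of_mem γ hgpB
  have hggqC : γ (γ q) ∈ C := Finset.mem_image_of_mem γ hgqB
  have hggpB : γ (γ p) ∈ B := Finset.mem_image_of_mem γ hgp
  have hggqB : γ (γ q) ∈ B := Finset.mem_image_of_mem γ hgq
  have hI2 : γ (γ p) ∈ (T ∪ B) ∩ C :=
    Finset.mem_inter.2 ⟨Finset.mem_union_right _ hggpB, hggpC⟩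
  have hI2' : γ (γ q) ∈ (T ∪ B) ∩ C :=
    Finset.mem_inter.2 ⟨Finset.mem_union_right _ hggqB, hggqC⟩
  have hggpggq : γ (γ p) ≠ γ (γ q) := fun h => hpqne (hinj (hinj h))
  have hI2card : 2 ≤ ((T ∪ B) ∩ C).card := two_le_card_of_mem hI2 hI2' hggpggq
  have hI2bound : (ecnt H ((T ∪ B) ∩ C) : ℤ) ≤ 2 * ((T ∪ B) ∩ C).card - 4 :=
    P1 _ (fun u hu => hCsub (Finset.mem_inter.1 hu).2) hI2card _ _ hggpq hI2 hI2'
  have hsup2 := ecnt_superadd H (T ∪ B) C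
  have hmod2 := Finset.card_union_add_card_inter (T ∪ B) C
  -- the union U is γ-invariant
  set U := T ∪ B ∪ C with hU
  have hUsub : U ⊆ S₀ := Finset.union_subset (Finset.union_subset hT hBsub) hCsub
  have hUcl : ∀ u ∈ U, γ u ∈ U := by
    intro u hu
    rcases Finset.mem_union.1 hu with hu | hu
    · rcases Finset.mem_union.1 hu with hu | hu
      · exact Finset.mem_union_left _ (Finset.mem_union_right _ (Finset.mem_image_of_mem γ hu))
      · exact Finset.mem_union_right _ (Finset.mem_image_of_mem γ hu)
    · have : γ u ∈ C.image γ := Finset.mem_image_of_mem γ hu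
      rw [hC, hB, image_cube hγ3] at this
      exact Finset.mem_union_left _ (Finset.mem_union_left _ this)
  have hUdvd : 3 ∣ U.card := orbit3_finset hγ3 hfree U hUcl
  have hUedvd : 3 ∣ ecnt H U := orbit3_ecnt H hγ3 hfree hinv U hUcl
  have hpU : p ∈ U := Finset.mem_union_left _ (Finset.mem_union_left _ hp)
  have hqU : q ∈ U := Finset.mem_union_left _ (Finset.mem_union_left _ hq)
  have hUcard : 2 ≤ U.card := two_le_card_of_mem hpU hqU hpqne
  have hUbound : (ecnt H U : ℤ) ≤ 2 * U.card - 4 := P1 U hUsub hUcard _ _ hpq hpU hqU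
  push_cast at *
  omega

/-- P3: a set inside `S₀` containing all three symmetric images of the pair. -/
lemma pair3_bound (hγ3 : ∀ u, γ (γ (γ u)) = u) (hfree : ∀ u, γ u ≠ u)
    (hinv : Inv3 γ H) (hcl₀ : ∀ u ∈ S₀, γ u ∈ S₀) (hxy : x ≠ y)
    (huncov : ∀ T ⊆ S₀, 2 ≤ T.card → x ∈ T → y ∈ T → (ecnt H T : ℤ) ≤ 2 * T.card - 4) :
    ∀ T ⊆ S₀, 2 ≤ T.card → x ∈ T → y ∈ T → γ x ∈ T → γ y ∈ T →
      γ (γ x) ∈ T → γ (γ y) ∈ T → (ecnt H T : ℤ) ≤ 2 * T.card - 6 := by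
  classical
  have hinj := inj_of_cube hγ3
  have P1 := pair_bound hγ3 hinv hcl₀ hxy huncov
  have himgsub : ∀ T : Finset V, T ⊆ S₀ → T.image γ ⊆ S₀ := by
    intro T hT u hu
    obtain ⟨t, ht, rfl⟩ := Finset.mem_image.1 hu
    exact hcl₀ t (hT ht)
  have hcard : ∀ T : Finset V, (T.image γ).card = T.card :=
    fun T => Finset.card_image_of_injective T hinj
  by_contra hcon
  push_neg at hcon
  obtain ⟨T₀, hT₀sub, hT₀2, hx0, hy0, hgx0, hgy0, hggx0, hggy0, hbad0⟩ := hcon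
  -- collect all "bad" sets and pick one of minimum cardinality
  set Bad : Finset V → Prop := fun T => T ⊆ S₀ ∧ x ∈ T ∧ y ∈ T ∧ γ x ∈ T ∧ γ y ∈ T ∧
    γ (γ x) ∈ T ∧ γ (γ y) ∈ T ∧ (2 * T.card - 5 : ℤ) ≤ ecnt H T with hBad
  have hbadset : (S₀.powerset.filter Bad).Nonempty := by
    refine ⟨T₀, Finset.mem_filter.2 ⟨Finset.mem_powerset.2 hT₀sub, ?_⟩⟩
    exact ⟨hT₀sub, hx0, hy0, hgx0, hgy0, hggx0, hggy0, by omega⟩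
  obtain ⟨T, hTmem, hTmin⟩ := Finset.exists_min_image (S₀.powerset.filter Bad) Finset.card hbadset
  obtain ⟨-, hTsub, hx, hy, hgx, hgy, hggx, hggy, hbadT⟩ := Finset.mem_filter.1 hTmem
  have hT2 : 2 ≤ T.card := two_le_card_of_mem hx hy hxy
  have hTup : (ecnt H T : ℤ) ≤ 2 * T.card - 4 :=
    P1 T hTsub hT2 x y (Or.inl ⟨rfl, rfl⟩) hx hy
  set B := T.image γ with hB
  set C := B.image γ with hC
  have hBsub : B ⊆ S₀ := himgsub _ hTsub
  have hCsub : C ⊆ S₀ := himgsub _ hBsub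
  have hBcard : B.card = T.card := hcard T
  have hCcard : C.card = T.card := by rw [hC, hcard, hBcard]
  have hBe : ecnt H B = ecnt H T := ecnt_image H hγ3 hinv T
  have hCe : ecnt H C = ecnt H T := by rw [hC, ecnt_image H hγ3 hinv, hBe]
  -- all six vertices lie in B and in C
  have hmemB : x ∈ B ∧ y ∈ B ∧ γ x ∈ B ∧ γ y ∈ B ∧ γ (γ x) ∈ B ∧ γ (γ y) ∈ B := by
    refine ⟨?_, ?_, Finset.mem_image_of_mem γ hx, Finset.mem_image_of_mem γ hy,
      Finset.mem_image_of_mem γ hgx, Finset.mem_image_of_mem γ hgy⟩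
    · have := Finset.mem_image_of_mem γ hggx
      rwa [hγ3] at this
    · have := Finset.mem_image_of_mem γ hggy
      rwa [hγ3] at this
  have hmemC : x ∈ C ∧ y ∈ C := by
    constructor
    · have := Finset.mem_image_of_mem γ hmemB.2.2.2.2.1
      rwa [hγ3] at this
    · have := Finset.mem_image_of_mem γ hmemB.2.2.2.2.2
      rwa [hγ3] at this
  by_cases hTB : T ⊆ B
  · -- T is γ-invariant
    have hTeq : T = B := Finset.eq_of_subset_of_card_le hTB (by omega)
    have hTcl : ∀ u ∈ T, γ u ∈ T := by
      intro u hu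
      rw [hTeq, hB]
      exact Finset.mem_image_of_mem γ hu
    have h1 : 3 ∣ T.card := orbit3_finset hγ3 hfree T hTcl
    have h2 : 3 ∣ ecnt H T := orbit3_ecnt H hγ3 hfree hinv T hTcl
    omega
  · have hA : T ∩ B ⊂ T := by
      constructor
      · exact Finset.inter_subset_left
      · intro hsub
        exact hTB (fun u hu => (Finset.mem_inter.1 (hsub hu)).2)
    have hAcardlt : (T ∩ B).card < T.card := Finset.card_lt_card hA
    have hAmem : x ∈ T ∩ B := Finset.mem_inter.2 ⟨hx, hmemB.1⟩
    have hAmem' : y ∈ T ∩ B := Finset.mem_inter.2 ⟨hy, hmemB.2.1⟩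
    have hAsub : T ∩ B ⊆ S₀ := fun u hu => hTsub (Finset.mem_inter.1 hu).1
    -- minimality: T ∩ B is not bad
    have hAgood : (ecnt H (T ∩ B) : ℤ) ≤ 2 * (T ∩ B).card - 6 := by
      by_contra hAbad
      push_neg at hAbad
      have : T ∩ B ∈ S₀.powerset.filter Bad := by
        refine Finset.mem_filter.2 ⟨Finset.mem_powerset.2 hAsub, hAsub, hAmem, hAmem',
          Finset.mem_inter.2 ⟨hgx, hmemB.2.2.1⟩, Finset.mem_inter.2 ⟨hgy, hmemB.2.2.2.1⟩,
          Finset.mem_inter.2 ⟨hggx, hmemB.2.2.2.2.1⟩, Finset.mem_inter.2 ⟨hggy, hmemB.2.2.2.2.2⟩,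
          by omega⟩
      have := hTmin _ this
      omega
    have hsup1 := ecnt_superadd H T B
    have hmod1 := Finset.card_union_add_card_inter T B
    -- second union with C
    have hI2 : x ∈ (T ∪ B) ∩ C := Finset.mem_inter.2 ⟨Finset.mem_union_left _ hx, hmemC.1⟩
    have hI2' : y ∈ (T ∪ B) ∩ C := Finset.mem_inter.2 ⟨Finset.mem_union_left _ hy, hmemC.2⟩
    have hI2card : 2 ≤ ((T ∪ B) ∩ C).card := two_le_card_of_mem hI2 hI2' hxy
    have hI2bound : (ecnt H ((T ∪ B) ∩ C) : ℤ) ≤ 2 * ((T ∪ B) ∩ C).card - 4 :=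
      P1 _ (fun u hu => hCsub (Finset.mem_inter.1 hu).2) hI2card x y (Or.inl ⟨rfl, rfl⟩) hI2 hI2'
    have hsup2 := ecnt_superadd H (T ∪ B) C
    have hmod2 := Finset.card_union_add_card_inter (T ∪ B) C
    set U := T ∪ B ∪ C with hU
    have hUsub : U ⊆ S₀ := Finset.union_subset (Finset.union_subset hTsub hBsub) hCsub
    have hUcl : ∀ u ∈ U, γ u ∈ U := by
      intro u hu
      rcases Finset.mem_union.1 hu with hu | hu
      · rcases Finset.mem_union.1 hu with hu | hu
        · exact Finset.mem_union_left _ (Finset.mem_union_right _ (Finset.mem_image_of_mem γ hu))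
        · exact Finset.mem_union_right _ (Finset.mem_image_of_mem γ hu)
      · have : γ u ∈ C.image γ := Finset.mem_image_of_mem γ hu
        rw [hC, hB, image_cube hγ3] at this
        exact Finset.mem_union_left _ (Finset.mem_union_left _ this)
    have hUdvd : 3 ∣ U.card := orbit3_finset hγ3 hfree U hUcl
    have hUedvd : 3 ∣ ecnt H U := orbit3_ecnt H hγ3 hfree hinv U hUcl
    have hxU : x ∈ U := Finset.mem_union_left _ (Finset.mem_union_left _ hx)
    have hyU : y ∈ U := Finset.mem_union_left _ (Finset.mem_union_left _ hy)
    have hUcard : 2 ≤ U.card := two_le_card_of_mem hxU hyU hxy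
    have hUbound : (ecnt H U : ℤ) ≤ 2 * U.card - 4 :=
      P1 U hUsub hUcard x y (Or.inl ⟨rfl, rfl⟩) hxU hyU
    push_cast at *
    omega

end Blockers

/-! ### Counting the edges removed with a vertex orbit -/

lemma ecnt_drop3 {H : SimpleGraph V} {S : Finset V} {v w z : V}
    (hvS : v ∈ S) (hwS : w ∈ S) (hzS : z ∈ S) (hvw : v ≠ w) (hwz : w ≠ z) (hvz : v ≠ z)
    {dv dw dz : ℕ}
    (h1 : (H.neighborSet v ∩ ↑S).ncard = dv)
    (h2 : (H.neighborSet w ∩ ↑(S.erase v)).ncard = dw)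
    (h3 : (H.neighborSet z ∩ ↑((S.erase v).erase w)).ncard = dz) :
    ecnt H S = ecnt H (S \ {v, w, z}) + (dv + dw + dz) := by
  have e1 := ecnt_eq_erase_add H hvS
  have e2 := ecnt_eq_erase_add H (Finset.mem_erase.2 ⟨Ne.symm hvw, hwS⟩)
  have e3 := ecnt_eq_erase_add H
    (Finset.mem_erase.2 ⟨Ne.symm hwz, Finset.mem_erase.2 ⟨Ne.symm hvz, hzS⟩⟩)
  have heq : ((S.erase v).erase w).erase z = S \ {v, w, z} := by
    ext u
    simp only [Finset.mem_erase, Finset.mem_sdiff, Finset.mem_insert, Finset.mem_singleton]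
    tauto
  rw [heq] at e3
  omega

/-! ### The reduction lemma -/

lemma reduction' (γ : V → V) (hγ3 : ∀ x, γ (γ (γ x)) = x) (hfree : ∀ x, γ x ≠ x)
    (S : Finset V) (H : SimpleGraph V)
    (hcl : ∀ u ∈ S, γ u ∈ S) (hinv : Inv3 γ H) (hlam : LamOn H S) (hS : 6 ≤ S.card) :
    ∃ v w z H₀, v ∈ S ∧ γ v = w ∧ γ w = z ∧ γ z = v ∧ v ≠ w ∧ w ≠ z ∧ v ≠ z ∧
      Inv3 γ H₀ ∧ LamOn H₀ (S \ {v, w, z}) ∧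
      (VertexAdditionStep γ (S \ {v, w, z}) H₀ H v w z ∨
       EdgeSplitStep γ (S \ {v, w, z}) H₀ H v w z ∨
       DeltaExtensionStep γ (S \ {v, w, z}) H₀ H v w z) := by
  classical
  have hinj := inj_of_cube hγ3
  obtain ⟨v, hvS, hvdeg3⟩ := exists_deg_le_three hlam (by omega)
  have hvdeg2 : 2 ≤ (H.neighborSet v).ncard := two_le_deg hlam hvS (by omega)
  set w := γ v with hw
  set z := γ w with hz
  have hγz : γ z = v := hγ3 v
  have hvw : v ≠ w := fun h => hfree v h.symm
  have hwz : w ≠ z := fun h => hfree w h.symm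
  have hvz : v ≠ z := by
    intro h
    have h2 : γ v = γ z := congrArg γ h
    rw [hγz] at h2
    exact hfree v h2
  have hwS : w ∈ S := hcl v hvS
  have hzS : z ∈ S := hcl w hwS
  have hbackv : ∀ u, γ u = v → u = z := fun u h => hinj (h.trans hγz.symm)
  have hbackw : ∀ u, γ u = w → u = v := fun u h => hinj h
  have hbackz : ∀ u, γ u = z → u = w := fun u h => hinj h
  set S₀ := S \ {v, w, z} with hS₀
  have horbmem : ∀ u, u ∈ S₀ ↔ u ∈ S ∧ u ≠ v ∧ u ≠ w ∧ u ≠ z := by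
    intro u
    simp only [hS₀, Finset.mem_sdiff, Finset.mem_insert, Finset.mem_singleton]
    tauto
  have hvS₀ : v ∉ S₀ := fun h => ((horbmem v).1 h).2.1 rfl
  have hwS₀ : w ∉ S₀ := fun h => ((horbmem w).1 h).2.2.1 rfl
  have hzS₀ : z ∉ S₀ := fun h => ((horbmem z).1 h).2.2.2 rfl
  have hS₀S : S₀ ⊆ S := Finset.sdiff_subset
  have hsub3 : ({v, w, z} : Finset V) ⊆ S := by
    intro u hu
    rcases Finset.mem_insert.1 hu with rfl | hu
    · exact hvS
    · rcases Finset.mem_insert.1 hu with rfl | hu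
      · exact hwS
      · rw [Finset.mem_singleton.1 hu]; exact hzS
  have hc3 : ({v, w, z} : Finset V).card = 3 := by
    rw [Finset.card_insert_of_notMem (by simp [hvw, hvz]),
      Finset.card_insert_of_notMem (by simp [hwz]), Finset.card_singleton]
  have hS₀card : S₀.card = S.card - 3 := by
    rw [hS₀, Finset.card_sdiff_of_subset hsub3, hc3]
  have hcl₀ : ∀ u ∈ S₀, γ u ∈ S₀ := by
    intro u hu
    rw [horbmem] at hu ⊢
    refine ⟨hcl u hu.1, ?_, ?_, ?_⟩
    · intro h; exact hu.2.2.2 (hbackv u h)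
    · intro h; exact hu.2.1 (hbackw u h)
    · intro h; exact hu.2.2.1 (hbackz u h)
  -- the graph with the orbit edges removed
  set D : Set (Sym2 V) := {e | v ∈ e ∨ w ∈ e ∨ z ∈ e} with hD
  set H₀ := H.deleteEdges D with hH₀
  have hH₀E : H₀.edgeSet = H.edgeSet \ D := SimpleGraph.edgeSet_deleteEdges D
  have hH₀le : H₀.edgeSet ⊆ H.edgeSet := by rw [hH₀E]; exact Set.diff_subset
  have hH₀adj : ∀ a b, H₀.Adj a b ↔ H.Adj a b ∧ s(a, b) ∉ D := by
    intro a b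
    rw [hH₀]
    exact SimpleGraph.deleteEdges_adj
  have hH₀edges : ∀ a b, H₀.Adj a b → a ∈ S₀ ∧ b ∈ S₀ := by
    intro a b hab
    rw [hH₀adj] at hab
    have haS := hlam.1 a b hab.1
    have hnot := hab.2
    rw [hD] at hnot
    simp only [Set.mem_setOf_eq, Sym2.mem_iff] at hnot
    push_neg at hnot
    constructor
    · exact (horbmem a).2 ⟨haS.1, Ne.symm hnot.1.1, Ne.symm hnot.2.1.1, Ne.symm hnot.2.2.1⟩
    · exact (horbmem b).2 ⟨haS.2, Ne.symm hnot.1.2, Ne.symm hnot.2.1.2, Ne.symm hnot.2.2.2⟩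
  have hH₀inv : Inv3 γ H₀ := by
    intro a b hab
    rw [hH₀adj] at hab ⊢
    refine ⟨hinv _ _ hab.1, ?_⟩
    intro hmem
    apply hab.2
    rw [hD] at hmem ⊢
    simp only [Set.mem_setOf_eq, Sym2.mem_iff] at hmem ⊢
    rcases hmem with (h | h) | (h | h) | (h | h)
    · exact Or.inr (Or.inr (Or.inl (hbackv _ h.symm).symm))
    · exact Or.inr (Or.inr (Or.inr (hbackv _ h.symm).symm))
    · exact Or.inl (Or.inl (hbackw _ h.symm).symm)
    · exact Or.inl (Or.inr (hbackw _ h.symm).symm)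
    · exact Or.inr (Or.inl (Or.inl (hbackz _ h.symm).symm))
    · exact Or.inr (Or.inl (Or.inr (hbackz _ h.symm).symm))
  have hews₀ : ∀ T : Finset V, T ⊆ S₀ → ews H₀ T = ews H T := by
    intro T hT
    ext e
    constructor
    · intro he
      exact ⟨hH₀le he.1, he.2⟩
    · intro he
      refine ⟨?_, he.2⟩
      rw [hH₀E]
      refine ⟨he.1, ?_⟩
      rw [hD]
      simp only [Set.mem_setOf_eq]
      rintro (h | h | h)
      · exact absurd (hT (he.2 v h)) hvS₀
      · exact absurd (hT (he.2 w h)) hwS₀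
      · exact absurd (hT (he.2 z h)) hzS₀
  have hecnt₀ : ∀ T : Finset V, T ⊆ S₀ → ecnt H₀ T = ecnt H T := by
    intro T hT
    rw [ecnt, hews₀ T hT, ecnt]
  -- neighbour sets of w and z
  have hNw : H.neighborSet w = γ '' H.neighborSet v := nbr_image hγ3 hinv v
  have hNz : H.neighborSet z = γ '' H.neighborSet w := nbr_image hγ3 hinv w
  have hS₀2 : 2 ≤ S₀.card := by omega
  have hS₀bound := hlam.2.2 S₀ hS₀S hS₀2
  have hcnt := hlam.2.1
  have hS₀card' : S₀.card + 3 = S.card := by omega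
  -- the LamOn structure for `H₀` given the count drop of 6
  have hlam₀ : ecnt H S = ecnt H S₀ + 6 → LamOn H₀ S₀ := by
    intro hdrop
    refine ⟨hH₀edges, ?_, ?_⟩
    · rw [hecnt₀ S₀ (fun u hu => hu)]
      push_cast
      omega
    · intro T hT h2
      rw [hecnt₀ T hT]
      exact hlam.2.2 T (hT.trans hS₀S) h2
  by_cases hadjint : H.Adj v w ∨ H.Adj v z
  · -- the orbit spans a triangle
    have hadjvw : H.Adj v w := by
      rcases hadjint with h | h
      · exact h
      · have h2 := hinv v z h
        rw [hγz] at h2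
        exact h2.symm
    have hadjwz : H.Adj w z := hinv v w hadjvw
    have hadjvz : H.Adj v z := by
      have h2 := hinv w z hadjwz
      rw [hγz] at h2
      exact h2.symm
    have hwzN : ({w, z} : Set V) ⊆ H.neighborSet v := by
      rintro u (rfl | rfl)
      · exact hadjvw
      · exact hadjvz
    have hdeg3 : (H.neighborSet v).ncard = 3 := by
      rcases (by omega : (H.neighborSet v).ncard = 2 ∨ (H.neighborSet v).ncard = 3) with h2 | h3
      · -- degree 2 would make the orbit a triangle component: contradiction
        exfalso
        have hpair2 : ({w, z} : Set V).ncard = 2 := Set.ncard_pair hwz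
        have hNv : ({w, z} : Set V) = H.neighborSet v :=
          Set.eq_of_subset_of_ncard_le hwzN (by omega) (Set.toFinite _)
        have hNw' : H.neighborSet w = {z, v} := by
          rw [hNw, ← hNv, Set.image_insert_eq, Set.image_singleton, ← hz, hγz]
        have hNz' : H.neighborSet z = {v, w} := by
          rw [hNz, hNw', Set.image_insert_eq, Set.image_singleton, hγz, ← hw]
        have hNvsub : ({w, z} : Set V) ⊆ ↑S := by
          rintro u (rfl | rfl)
          · exact hwS
          · exact hzS
        have i1 : (H.neighborSet v ∩ ↑S).ncard = 2 := by
          rw [← hNv, Set.inter_eq_self_of_subset_left hNvsub]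
          exact Set.ncard_pair hwz
        have i2 : (H.neighborSet w ∩ ↑(S.erase v)).ncard = 1 := by
          have heq : H.neighborSet w ∩ ↑(S.erase v) = {z} := by
            rw [hNw']
            ext u
            simp only [Set.mem_inter_iff, Set.mem_insert_iff, Set.mem_singleton_iff,
              Finset.mem_coe, Finset.mem_erase]
            constructor
            · rintro ⟨rfl | rfl, h2, h3⟩
              · rfl
              · exact absurd rfl h2
            · rintro rfl
              exact ⟨Or.inl rfl, Ne.symm hvz, hzS⟩
          rw [heq, Set.ncard_singleton]
        have i3 : (H.neighborSet z ∩ ↑((S.erase v).erase w)).ncard = 0 := by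
          have heq : H.neighborSet z ∩ ↑((S.erase v).erase w) = ∅ := by
            rw [hNz']
            ext u
            simp only [Set.mem_inter_iff, Set.mem_insert_iff, Set.mem_singleton_iff,
              Finset.mem_coe, Finset.mem_erase, Set.mem_empty_iff_false, iff_false]
            rintro ⟨rfl | rfl, h2, h3, h4⟩
            · exact h3 rfl
            · exact h2 rfl
          rw [heq, Set.ncard_empty]
        have hdrop := ecnt_drop3 hvS hwS hzS hvw hwz hvz i1 i2 i3
        rw [← hS₀] at hdrop
        omega
      · exact h3
    -- degree 3 with two orbit neighbours: Δ reduction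
    obtain ⟨c₀, hc₀⟩ : ∃ c₀, H.neighborSet v \ {w, z} = {c₀} := by
      apply Set.ncard_eq_one.1
      rw [Set.ncard_diff hwzN (Set.toFinite _), hdeg3, Set.ncard_pair hwz]
    have hc₀mem : c₀ ∈ H.neighborSet v \ ({w, z} : Set V) := by rw [hc₀]; rfl
    have hadjvc : H.Adj v c₀ := hc₀mem.1
    have hcw : c₀ ≠ w := fun h => hc₀mem.2 (Or.inl h)
    have hcz : c₀ ≠ z := fun h => hc₀mem.2 (Or.inr h)
    have hcv : c₀ ≠ v := fun h => H.irrefl (h ▸ hadjvc)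
    have hcS : c₀ ∈ S := (hlam.1 v c₀ hadjvc).2
    have hcS₀ : c₀ ∈ S₀ := (horbmem c₀).2 ⟨hcS, hcv, hcw, hcz⟩
    have hgcv : γ c₀ ≠ v := fun h => hcz (hbackv c₀ h)
    have hgcw : γ c₀ ≠ w := fun h => hcv (hbackw c₀ h)
    have hgcz : γ c₀ ≠ z := fun h => hcw (hbackz c₀ h)
    have hggcv : γ (γ c₀) ≠ v := fun h => hgcz (hbackv _ h)
    have hggcw : γ (γ c₀) ≠ w := fun h => hgcv (hbackw _ h)
    have hggcz : γ (γ c₀) ≠ z := fun h => hgcw (hbackz _ h)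
    have hNv : H.neighborSet v = {w, z, c₀} := by
      have h1 := Set.union_diff_cancel hwzN
      rw [hc₀] at h1
      rw [← h1]
      ext u
      simp only [Set.mem_union, Set.mem_insert_iff, Set.mem_singleton_iff]
      constructor
      · rintro ((rfl | rfl) | rfl)
        · exact Or.inl rfl
        · exact Or.inr (Or.inl rfl)
        · exact Or.inr (Or.inr rfl)
      · rintro (rfl | rfl | rfl)
        · exact Or.inl (Or.inl rfl)
        · exact Or.inl (Or.inr rfl)
        · exact Or.inr rfl
    have hNw' : H.neighborSet w = {z, v, γ c₀} := by
      rw [hNw, hNv, Set.image_insert_eq, Set.image_insert_eq, Set.image_singleton, ← hz, hγz]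
    have hNz' : H.neighborSet z = {v, w, γ (γ c₀)} := by
      rw [hNz, hNw', Set.image_insert_eq, Set.image_insert_eq, Set.image_singleton, hγz, ← hw]
    have hgcS : γ c₀ ∈ S := hcl c₀ hcS
    have hggcS : γ (γ c₀) ∈ S := hcl _ hgcS
    have hNvsubS : ({w, z, c₀} : Set V) ⊆ ↑S := by
      rintro u (rfl | rfl | rfl)
      · exact hwS
      · exact hzS
      · exact hcS
    have i1 : (H.neighborSet v ∩ ↑S).ncard = 3 := by
      rw [hNv, Set.inter_eq_self_of_subset_left hNvsubS]
      exact Set.ncard_eq_three.2 ⟨w, z, c₀, hwz, Ne.symm hcw, Ne.symm hcz, rfl⟩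
    have i2 : (H.neighborSet w ∩ ↑(S.erase v)).ncard = 2 := by
      have heq : H.neighborSet w ∩ ↑(S.erase v) = {z, γ c₀} := by
        rw [hNw']
        ext u
        simp only [Set.mem_inter_iff, Set.mem_insert_iff, Set.mem_singleton_iff,
          Finset.mem_coe, Finset.mem_erase]
        constructor
        · rintro ⟨rfl | rfl | rfl, h2, h3⟩
          · exact Or.inl rfl
          · exact absurd rfl h2
          · exact Or.inr rfl
        · rintro (rfl | rfl)
          · exact ⟨Or.inl rfl, Ne.symm hvz, hzS⟩
          · exact ⟨Or.inr (Or.inr rfl), hgcv, hgcS⟩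
      rw [heq]
      exact Set.ncard_pair (Ne.symm hgcz)
    have i3 : (H.neighborSet z ∩ ↑((S.erase v).erase w)).ncard = 1 := by
      have heq : H.neighborSet z ∩ ↑((S.erase v).erase w) = {γ (γ c₀)} := by
        rw [hNz']
        ext u
        simp only [Set.mem_inter_iff, Set.mem_insert_iff, Set.mem_singleton_iff,
          Finset.mem_coe, Finset.mem_erase]
        constructor
        · rintro ⟨rfl | rfl | rfl, h2, h3, h4⟩
          · exact absurd rfl h3
          · exact absurd rfl h2
          · rfl
        · rintro rfl
          exact ⟨Or.inr (Or.inr rfl), hggcw, hggcv, hggcS⟩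
      rw [heq]
      exact Set.ncard_singleton _
    have hdrop := ecnt_drop3 hvS hwS hzS hvw hwz hvz i1 i2 i3
    rw [← hS₀] at hdrop
    refine ⟨v, w, z, H₀, hvS, hw.symm, hz.symm, hγz, hvw, hwz, hvz, hH₀inv,
      hlam₀ (by omega), Or.inr (Or.inr ?_)⟩
    refine ⟨c₀, hcS₀, hfree c₀, ?_⟩
    ext e
    constructor
    · intro he
      by_cases heD : e ∈ D
      · right
        rw [hD] at heD
        simp only [Set.mem_setOf_eq] at heD
        simp only [Set.mem_insert_iff, Set.mem_singleton_iff]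
        rcases heD with hm | hm | hm
        · obtain ⟨u, hu, rfl⟩ := edge_containing hm he
          have : u ∈ H.neighborSet v := hu
          rw [hNv] at this
          rcases this with rfl | rfl | rfl
          · exact Or.inl rfl
          · exact Or.inr (Or.inr (Or.inl Sym2.eq_swap))
          · exact Or.inr (Or.inr (Or.inr (Or.inl rfl)))
        · obtain ⟨u, hu, rfl⟩ := edge_containing hm he
          have : u ∈ H.neighborSet w := hu
          rw [hNw'] at this
          rcases this with rfl | rfl | rfl
          · exact Or.inr (Or.inl rfl)
          · exact Or.inl Sym2.eq_swap
          · exact Or.inr (Or.inr (Or.inr (Or.inr (Or.inl rfl))))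
        · obtain ⟨u, hu, rfl⟩ := edge_containing hm he
          have : u ∈ H.neighborSet z := hu
          rw [hNz'] at this
          rcases this with rfl | rfl | rfl
          · exact Or.inr (Or.inr (Or.inl rfl))
          · exact Or.inr (Or.inl Sym2.eq_swap)
          · exact Or.inr (Or.inr (Or.inr (Or.inr (Or.inr rfl))))
      · left
        rw [hH₀E]
        exact ⟨he, heD⟩
    · intro he
      rcases he with he | he
      · exact hH₀le he
      · simp only [Set.mem_insert_iff, Set.mem_singleton_iff] at he
        rcases he with rfl | rfl | rfl | rfl | rfl | rfl
        · exact hadjvw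
        · exact hadjwz
        · exact hadjvz.symm
        · exact hadjvc
        · exact hinv v c₀ hadjvc
        · exact hinv w (γ c₀) (hinv v c₀ hadjvc)
  · -- no orbit edges
    push_neg at hadjint
    obtain ⟨hnvw, hnvz⟩ := hadjint
    have hNorb : ∀ u ∈ H.neighborSet v, u ≠ v ∧ u ≠ w ∧ u ≠ z := by
      intro u hu
      refine ⟨fun h => H.irrefl (h ▸ hu), fun h => hnvw (h ▸ hu), fun h => hnvz (h ▸ hu)⟩
    rcases (by omega : (H.neighborSet v).ncard = 2 ∨ (H.neighborSet v).ncard = 3) with hdeg | hdeg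
    · -- degree 2: vertex addition reduction
      obtain ⟨a, b, hab, hNv⟩ := Set.ncard_eq_two.1 hdeg
      have haN : a ∈ H.neighborSet v := by rw [hNv]; exact Or.inl rfl
      have hbN : b ∈ H.neighborSet v := by rw [hNv]; exact Or.inr rfl
      have hadjva : H.Adj v a := haN
      have hadjvb : H.Adj v b := hbN
      obtain ⟨hav, haw, haz⟩ := hNorb a haN
      obtain ⟨hbv, hbw, hbz⟩ := hNorb b hbN
      have haS : a ∈ S := (hlam.1 _ _ hadjva).2
      have hbS : b ∈ S := (hlam.1 _ _ hadjvb).2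
      have haS₀ : a ∈ S₀ := (horbmem a).2 ⟨haS, hav, haw, haz⟩
      have hbS₀ : b ∈ S₀ := (horbmem b).2 ⟨hbS, hbv, hbw, hbz⟩
      have hgav : γ a ≠ v := fun h => haz (hbackv a h)
      have hgaw : γ a ≠ w := fun h => hav (hbackw a h)
      have hgbv : γ b ≠ v := fun h => hbz (hbackv b h)
      have hgbw : γ b ≠ w := fun h => hbv (hbackw b h)
      have hggav : γ (γ a) ≠ v := fun h => (fun h2 => haw (hbackz a h2)) (hbackv _ h)
      have hggaw : γ (γ a) ≠ w := fun h => hgav (hbackw _ h)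
      have hggbv : γ (γ b) ≠ v := fun h => (fun h2 => hbw (hbackz b h2)) (hbackv _ h)
      have hggbw : γ (γ b) ≠ w := fun h => hgbv (hbackw _ h)
      have hgaS : γ a ∈ S := hcl a haS
      have hgbS : γ b ∈ S := hcl b hbS
      have hggaS : γ (γ a) ∈ S := hcl _ hgaS
      have hggbS : γ (γ b) ∈ S := hcl _ hgbS
      have hgab : γ a ≠ γ b := fun h => hab (hinj h)
      have hggab : γ (γ a) ≠ γ (γ b) := fun h => hab (hinj (hinj h))
      have hNw' : H.neighborSet w = {γ a, γ b} := by
        rw [hNw, hNv, Set.image_insert_eq, Set.image_singleton]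
      have hNz' : H.neighborSet z = {γ (γ a), γ (γ b)} := by
        rw [hNz, hNw', Set.image_insert_eq, Set.image_singleton]
      have i1 : (H.neighborSet v ∩ ↑S).ncard = 2 := by
        have hsub : H.neighborSet v ∩ ↑S = {a, b} := by
          rw [hNv]
          apply Set.inter_eq_self_of_subset_left
          rintro u (rfl | rfl)
          · exact haS
          · exact hbS
        rw [hsub]
        exact Set.ncard_pair hab
      have i2 : (H.neighborSet w ∩ ↑(S.erase v)).ncard = 2 := by
        have heq : H.neighborSet w ∩ ↑(S.erase v) = {γ a, γ b} := by
          rw [hNw']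
          apply Set.inter_eq_self_of_subset_left
          rintro u (rfl | rfl)
          · exact Finset.mem_coe.2 (Finset.mem_erase.2 ⟨hgav, hgaS⟩)
          · exact Finset.mem_coe.2 (Finset.mem_erase.2 ⟨hgbv, hgbS⟩)
        rw [heq]
        exact Set.ncard_pair hgab
      have i3 : (H.neighborSet z ∩ ↑((S.erase v).erase w)).ncard = 2 := by
        have heq : H.neighborSet z ∩ ↑((S.erase v).erase w) = {γ (γ a), γ (γ b)} := by
          rw [hNz']
          apply Set.inter_eq_self_of_subset_left
          rintro u (rfl | rfl)
          · exact Finset.mem_coe.2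
              (Finset.mem_erase.2 ⟨hggaw, Finset.mem_erase.2 ⟨hggav, hggaS⟩⟩)
          · exact Finset.mem_coe.2
              (Finset.mem_erase.2 ⟨hggbw, Finset.mem_erase.2 ⟨hggbv, hggbS⟩⟩)
        rw [heq]
        exact Set.ncard_pair hggab
      have hdrop := ecnt_drop3 hvS hwS hzS hvw hwz hvz i1 i2 i3
      rw [← hS₀] at hdrop
      refine ⟨v, w, z, H₀, hvS, hw.symm, hz.symm, hγz, hvw, hwz, hvz, hH₀inv,
        hlam₀ (by omega), Or.inl ?_⟩
      refine ⟨a, haS₀, b, hbS₀, hab, ?_⟩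
      ext e
      constructor
      · intro he
        by_cases heD : e ∈ D
        · right
          rw [hD] at heD
          simp only [Set.mem_setOf_eq] at heD
          simp only [Set.mem_insert_iff, Set.mem_singleton_iff]
          rcases heD with hm | hm | hm
          · obtain ⟨u, hu, rfl⟩ := edge_containing hm he
            have huN : u ∈ H.neighborSet v := hu
            rw [hNv] at huN
            rcases huN with rfl | rfl
            · exact Or.inl rfl
            · exact Or.inr (Or.inl rfl)
          · obtain ⟨u, hu, rfl⟩ := edge_containing hm he
            have huN : u ∈ H.neighborSet w := hu
            rw [hNw'] at huN
            rcases huN with rfl | rfl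
            · exact Or.inr (Or.inr (Or.inl rfl))
            · exact Or.inr (Or.inr (Or.inr (Or.inl rfl)))
          · obtain ⟨u, hu, rfl⟩ := edge_containing hm he
            have huN : u ∈ H.neighborSet z := hu
            rw [hNz'] at huN
            rcases huN with rfl | rfl
            · exact Or.inr (Or.inr (Or.inr (Or.inr (Or.inl rfl))))
            · exact Or.inr (Or.inr (Or.inr (Or.inr (Or.inr rfl))))
        · left
          rw [hH₀E]
          exact ⟨he, heD⟩
      · intro he
        rcases he with he | he
        · exact hH₀le he
        · simp only [Set.mem_insert_iff, Set.mem_singleton_iff] at he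
          rcases he with rfl | rfl | rfl | rfl | rfl | rfl
          · exact hadjva
          · exact hadjvb
          · exact hinv _ _ hadjva
          · exact hinv _ _ hadjvb
          · exact hinv _ _ (hinv _ _ hadjva)
          · exact hinv _ _ (hinv _ _ hadjvb)
    · -- degree 3: symmetric edge split reduction
      obtain ⟨a, b, c, hab, hac, hbc, hNv⟩ := Set.ncard_eq_three.1 hdeg
      have haN : a ∈ H.neighborSet v := by rw [hNv]; exact Or.inl rfl
      have hbN : b ∈ H.neighborSet v := by rw [hNv]; exact Or.inr (Or.inl rfl)
      have hcN : c ∈ H.neighborSet v := by rw [hNv]; exact Or.inr (Or.inr rfl)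
      obtain ⟨x, y, t, hset, hxy, hyt, hxt, hvx, hvy, hvt, hnadj, huncov⟩ :=
        exists_uncovered hlam hvS haN hbN hcN hab hbc hac
      have hNv' : H.neighborSet v = {x, y, t} := by rw [hNv, ← hset]
      obtain ⟨hxv, hxw, hxz⟩ := hNorb x hvx
      obtain ⟨hyv, hyw, hyz⟩ := hNorb y hvy
      obtain ⟨htv, htw, htz⟩ := hNorb t hvt
      have hxS : x ∈ S := (hlam.1 _ _ hvx).2
      have hyS : y ∈ S := (hlam.1 _ _ hvy).2
      have htS : t ∈ S := (hlam.1 _ _ hvt).2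
      have hxS₀ : x ∈ S₀ := (horbmem x).2 ⟨hxS, hxv, hxw, hxz⟩
      have hyS₀ : y ∈ S₀ := (horbmem y).2 ⟨hyS, hyv, hyw, hyz⟩
      have htS₀ : t ∈ S₀ := (horbmem t).2 ⟨htS, htv, htw, htz⟩
      have hgxS₀ : γ x ∈ S₀ := hcl₀ x hxS₀
      have hgyS₀ : γ y ∈ S₀ := hcl₀ y hyS₀
      have hgtS₀ : γ t ∈ S₀ := hcl₀ t htS₀
      have hggxS₀ : γ (γ x) ∈ S₀ := hcl₀ _ hgxS₀
      have hggyS₀ : γ (γ y) ∈ S₀ := hcl₀ _ hgyS₀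
      have hggtS₀ : γ (γ t) ∈ S₀ := hcl₀ _ hgtS₀
      have hgxy : γ x ≠ γ y := fun h => hxy (hinj h)
      have hgyt : γ y ≠ γ t := fun h => hyt (hinj h)
      have hgxt : γ x ≠ γ t := fun h => hxt (hinj h)
      have hggxy : γ (γ x) ≠ γ (γ y) := fun h => hgxy (hinj h)
      have hggyt : γ (γ y) ≠ γ (γ t) := fun h => hgyt (hinj h)
      have hggxt : γ (γ x) ≠ γ (γ t) := fun h => hgxt (hinj h)
      have hNw' : H.neighborSet w = {γ x, γ y, γ t} := by
        rw [hNw, hNv', Set.image_insert_eq, Set.image_insert_eq, Set.image_singleton]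
      have hNz' : H.neighborSet z = {γ (γ x), γ (γ y), γ (γ t)} := by
        rw [hNz, hNw', Set.image_insert_eq, Set.image_insert_eq, Set.image_singleton]
      have i1 : (H.neighborSet v ∩ ↑S).ncard = 3 := by
        have hsub : H.neighborSet v ∩ ↑S = {x, y, t} := by
          rw [hNv']
          apply Set.inter_eq_self_of_subset_left
          rintro u (rfl | rfl | rfl)
          · exact hxS
          · exact hyS
          · exact htS
        rw [hsub]
        exact Set.ncard_eq_three.2 ⟨x, y, t, hxy, hxt, hyt, rfl⟩
      have i2 : (H.neighborSet w ∩ ↑(S.erase v)).ncard = 3 := by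
        have heq : H.neighborSet w ∩ ↑(S.erase v) = {γ x, γ y, γ t} := by
          rw [hNw']
          apply Set.inter_eq_self_of_subset_left
          rintro u (rfl | rfl | rfl)
          · exact Finset.mem_coe.2 (Finset.mem_erase.2
              ⟨fun h => ((horbmem (γ x)).1 hgxS₀).2.1 h, hS₀S hgxS₀⟩)
          · exact Finset.mem_coe.2 (Finset.mem_erase.2
              ⟨fun h => ((horbmem (γ y)).1 hgyS₀).2.1 h, hS₀S hgyS₀⟩)
          · exact Finset.mem_coe.2 (Finset.mem_erase.2
              ⟨fun h => ((horbmem (γ t)).1 hgtS₀).2.1 h, hS₀S hgtS₀⟩)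
        rw [heq]
        exact Set.ncard_eq_three.2 ⟨_, _, _, hgxy, hgxt, hgyt, rfl⟩
      have i3 : (H.neighborSet z ∩ ↑((S.erase v).erase w)).ncard = 3 := by
        have heq : H.neighborSet z ∩ ↑((S.erase v).erase w) = {γ (γ x), γ (γ y), γ (γ t)} := by
          rw [hNz']
          apply Set.inter_eq_self_of_subset_left
          rintro u (rfl | rfl | rfl)
          · exact Finset.mem_coe.2 (Finset.mem_erase.2
              ⟨fun h => ((horbmem _).1 hggxS₀).2.2.1 h, Finset.mem_erase.2
                ⟨fun h => ((horbmem _).1 hggxS₀).2.1 h, hS₀S hggxS₀⟩⟩)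
          · exact Finset.mem_coe.2 (Finset.mem_erase.2
              ⟨fun h => ((horbmem _).1 hggyS₀).2.2.1 h, Finset.mem_erase.2
                ⟨fun h => ((horbmem _).1 hggyS₀).2.1 h, hS₀S hggyS₀⟩⟩)
          · exact Finset.mem_coe.2 (Finset.mem_erase.2
              ⟨fun h => ((horbmem _).1 hggtS₀).2.2.1 h, Finset.mem_erase.2
                ⟨fun h => ((horbmem _).1 hggtS₀).2.1 h, hS₀S hggtS₀⟩⟩)
        rw [heq]
        exact Set.ncard_eq_three.2 ⟨_, _, _, hggxy, hggxt, hggyt, rfl⟩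
      have hdrop := ecnt_drop3 hvS hwS hzS hvw hwz hvz i1 i2 i3
      rw [← hS₀] at hdrop
      -- non-adjacency of all three symmetric pairs
      have hnadj2 : ¬ H.Adj (γ x) (γ y) := by
        intro h
        have h2 := hinv _ _ (hinv _ _ h)
        rw [hγ3, hγ3] at h2
        exact hnadj h2
      have hnadj3 : ¬ H.Adj (γ (γ x)) (γ (γ y)) := by
        intro h
        have h2 := hinv _ _ h
        rw [hγ3, hγ3] at h2
        exact hnadj h2
      -- the three new edges are distinct
      have d12 : s(x, y) ≠ s(γ x, γ y) := by
        intro h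
        rcases Sym2.eq_iff.1 h with ⟨h1, -⟩ | ⟨h1, h2⟩
        · exact hfree x h1.symm
        · have h3 : x = γ (γ x) := h1.trans (congrArg γ h2)
          have h4 := congrArg γ h3
          rw [hγ3] at h4
          exact hfree x h4
      have d23 : s(γ x, γ y) ≠ s(γ (γ x), γ (γ y)) := by
        intro h
        rcases Sym2.eq_iff.1 h with ⟨h1, -⟩ | ⟨h1, h2⟩
        · exact hfree (γ x) h1.symm
        · have h3 : γ x = γ (γ (γ x)) := h1.trans (congrArg γ h2)
          have h4 := congrArg γ h3
          rw [hγ3] at h4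
          exact hfree (γ x) h4
      have d13 : s(x, y) ≠ s(γ (γ x), γ (γ y)) := by
        intro h
        rcases Sym2.eq_iff.1 h with ⟨h1, -⟩ | ⟨h1, h2⟩
        · have h4 := congrArg γ h1
          rw [hγ3] at h4
          exact hfree x h4
        · have h3 : x = γ x := h1.trans (by rw [h2, hγ3])
          exact hfree x h3.symm
      set P : Set (Sym2 V) := {s(x, y), s(γ x, γ y), s(γ (γ x), γ (γ y))} with hP
      have hPnoH : ∀ e ∈ P, e ∉ H.edgeSet := by
        rintro e (rfl | rfl | rfl)
        · exact hnadj
        · exact hnadj2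
        · exact hnadj3
      have hPcard : P.ncard = 3 := Set.ncard_eq_three.2 ⟨_, _, _, d12, d13, d23, rfl⟩
      set Gh := H₀ ⊔ SimpleGraph.fromEdgeSet P with hGhdef
      have hGhE : Gh.edgeSet = H₀.edgeSet ∪ P := by
        rw [hGhdef, SimpleGraph.edgeSet_sup, SimpleGraph.edgeSet_fromEdgeSet]
        congr 1
        ext e
        constructor
        · exact fun h => h.1
        · intro he
          refine ⟨he, ?_⟩
          rcases he with rfl | rfl | rfl
          · exact fun hd => hxy (Sym2.mk_isDiag_iff.1 hd)
          · exact fun hd => hgxy (Sym2.mk_isDiag_iff.1 hd)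
          · exact fun hd => hggxy (Sym2.mk_isDiag_iff.1 hd)
      have hGhkey : ∀ T : Finset V, T ⊆ S₀ →
          ews Gh T = ews H T ∪ (P ∩ {e : Sym2 V | ∀ u ∈ e, u ∈ T}) := by
        intro T hT
        ext e
        constructor
        · intro he
          have h1 := he.1
          rw [hGhE] at h1
          rcases h1 with h1 | h1
          · exact Or.inl ⟨hH₀le h1, he.2⟩
          · exact Or.inr ⟨h1, he.2⟩
        · rintro (he | he)
          · have h2 : e ∈ ews H₀ T := by rw [hews₀ T hT]; exact he
            exact ⟨by rw [hGhE]; exact Or.inl h2.1, he.2⟩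
          · exact ⟨by rw [hGhE]; exact Or.inr he.1, he.2⟩
      have hGhecnt : ∀ T : Finset V, T ⊆ S₀ →
          ecnt Gh T = ecnt H T + (P ∩ {e : Sym2 V | ∀ u ∈ e, u ∈ T}).ncard := by
        intro T hT
        rw [ecnt, hGhkey T hT]
        apply Set.ncard_union_eq _ (ews_finite H T) (Set.toFinite _)
        rw [Set.disjoint_right]
        rintro e ⟨heP, -⟩ heE
        exact hPnoH e heP heE.1
      refine ⟨v, w, z, Gh, hvS, hw.symm, hz.symm, hγz, hvw, hwz, hvz, ?_, ?_, ?_⟩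
      · -- invariance of Gh
        intro p q hpq
        rw [hGhdef, SimpleGraph.sup_adj] at hpq ⊢
        rcases hpq with h | h
        · exact Or.inl (hH₀inv p q h)
        · right
          rw [SimpleGraph.fromEdgeSet_adj] at h ⊢
          refine ⟨?_, fun hh => h.2 (hinj hh)⟩
          rcases h.1 with hh | hh | hh
          · rcases Sym2.eq_iff.1 hh with ⟨rfl, rfl⟩ | ⟨rfl, rfl⟩
            · exact Or.inr (Or.inl rfl)
            · exact Or.inr (Or.inl Sym2.eq_swap)
          · rcases Sym2.eq_iff.1 hh with ⟨rfl, rfl⟩ | ⟨rfl, rfl⟩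
            · exact Or.inr (Or.inr rfl)
            · exact Or.inr (Or.inr Sym2.eq_swap)
          · rcases Sym2.eq_iff.1 hh with ⟨rfl, rfl⟩ | ⟨rfl, rfl⟩
            · rw [hγ3, hγ3]
              exact Or.inl rfl
            · rw [hγ3, hγ3]
              exact Or.inl Sym2.eq_swap
      · -- LamOn Gh S₀
        refine ⟨?_, ?_, ?_⟩
        · intro p q hpq
          rw [hGhdef, SimpleGraph.sup_adj] at hpq
          rcases hpq with h | h
          · exact hH₀edges p q h
          · rw [SimpleGraph.fromEdgeSet_adj] at h
            rcases h.1 with hh | hh | hh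
            · rcases Sym2.eq_iff.1 hh with ⟨rfl, rfl⟩ | ⟨rfl, rfl⟩
              · exact ⟨hxS₀, hyS₀⟩
              · exact ⟨hyS₀, hxS₀⟩
            · rcases Sym2.eq_iff.1 hh with ⟨rfl, rfl⟩ | ⟨rfl, rfl⟩
              · exact ⟨hgxS₀, hgyS₀⟩
              · exact ⟨hgyS₀, hgxS₀⟩
            · rcases Sym2.eq_iff.1 hh with ⟨rfl, rfl⟩ | ⟨rfl, rfl⟩
              · exact ⟨hggxS₀, hggyS₀⟩
              · exact ⟨hggyS₀, hggxS₀⟩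
        · have hPin : P ∩ {e : Sym2 V | ∀ u ∈ e, u ∈ S₀} = P := by
            apply Set.inter_eq_self_of_subset_left
            rintro e (rfl | rfl | rfl) <;> intro u hu
            · rcases Sym2.mem_iff.1 hu with rfl | rfl
              · exact hxS₀
              · exact hyS₀
            · rcases Sym2.mem_iff.1 hu with rfl | rfl
              · exact hgxS₀
              · exact hgyS₀
            · rcases Sym2.mem_iff.1 hu with rfl | rfl
              · exact hggxS₀
              · exact hggyS₀
          rw [← hS₀, hGhecnt S₀ (fun u hu => hu), hPin, hPcard]
          push_cast
          omega
        · intro T hT hT2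
          rw [hGhecnt T hT]
          have hW : ∀ p q : V, (∀ u ∈ s(p, q), u ∈ T) ↔ p ∈ T ∧ q ∈ T := by
            intro p q
            constructor
            · intro h
              exact ⟨h p (by simp), h q (by simp)⟩
            · rintro ⟨h1, h2⟩ u hu
              rcases Sym2.mem_iff.1 hu with rfl | rfl
              · exact h1
              · exact h2
          have huncov₀ : ∀ T' ⊆ S₀, 2 ≤ T'.card → x ∈ T' → y ∈ T' →
              (ecnt H T' : ℤ) ≤ 2 * T'.card - 4 := by
            intro T' hT' h2' hx' hy'
            exact huncov T' (fun u hu => Finset.mem_erase.2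
              ⟨((horbmem u).1 (hT' hu)).2.1, hS₀S (hT' hu)⟩) h2' hx' hy'
          have hsingle_le : ∀ e₀ : Sym2 V, ({e₀} : Set (Sym2 V)).ncard ≤ 1 := by
            intro e₀
            rw [Set.ncard_singleton]
          have hdouble_le : ∀ e₀ e₁ : Sym2 V, ({e₀, e₁} : Set (Sym2 V)).ncard ≤ 2 := by
            intro e₀ e₁
            refine le_trans (Set.ncard_insert_le _ _) ?_
            rw [Set.ncard_singleton]
          by_cases c0 : x ∈ T ∧ y ∈ T
          · by_cases c1 : γ x ∈ T ∧ γ y ∈ T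
            · by_cases c2 : γ (γ x) ∈ T ∧ γ (γ y) ∈ T
              · have nb : (P ∩ {e : Sym2 V | ∀ u ∈ e, u ∈ T}).ncard ≤ 3 := by
                  have h1 := Set.ncard_le_ncard
                    (Set.inter_subset_left (s := P) (t := {e : Sym2 V | ∀ u ∈ e, u ∈ T}))
                    (Set.toFinite P)
                  omega
                have eb := pair3_bound hγ3 hfree hinv hcl₀ hxy huncov₀ T hT hT2
                  c0.1 c0.2 c1.1 c1.2 c2.1 c2.2
                push_cast
                omega
              · have hsub : P ∩ {e : Sym2 V | ∀ u ∈ e, u ∈ T} ⊆ {s(x, y), s(γ x, γ y)} := by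
                  rintro e ⟨(rfl | rfl | rfl), hW'⟩
                  · exact Or.inl rfl
                  · exact Or.inr rfl
                  · exact absurd ((hW _ _).1 hW') c2
                have nb := le_trans (Set.ncard_le_ncard hsub (Set.toFinite _)) (hdouble_le _ _)
                have eb := pair2_bound hγ3 hfree hinv hcl₀ hxy huncov₀ T hT hT2
                  x y (Or.inl ⟨rfl, rfl⟩) c0.1 c0.2 c1.1 c1.2
                push_cast
                omega
            · by_cases c2 : γ (γ x) ∈ T ∧ γ (γ y) ∈ T
              · have hsub : P ∩ {e : Sym2 V | ∀ u ∈ e, u ∈ T}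
                    ⊆ {s(x, y), s(γ (γ x), γ (γ y))} := by
                  rintro e ⟨(rfl | rfl | rfl), hW'⟩
                  · exact Or.inl rfl
                  · exact absurd ((hW _ _).1 hW') c1
                  · exact Or.inr rfl
                have nb := le_trans (Set.ncard_le_ncard hsub (Set.toFinite _)) (hdouble_le _ _)
                have eb := pair2_bound hγ3 hfree hinv hcl₀ hxy huncov₀ T hT hT2
                  (γ (γ x)) (γ (γ y)) (Or.inr (Or.inr ⟨rfl, rfl⟩)) c2.1 c2.2
                  (by rw [hγ3]; exact c0.1) (by rw [hγ3]; exact c0.2)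
                push_cast
                omega
              · have hsub : P ∩ {e : Sym2 V | ∀ u ∈ e, u ∈ T} ⊆ {s(x, y)} := by
                  rintro e ⟨(rfl | rfl | rfl), hW'⟩
                  · exact rfl
                  · exact absurd ((hW _ _).1 hW') c1
                  · exact absurd ((hW _ _).1 hW') c2
                have nb := le_trans (Set.ncard_le_ncard hsub (Set.toFinite _)) (hsingle_le _)
                have eb := pair_bound hγ3 hinv hcl₀ hxy huncov₀ T hT hT2
                  x y (Or.inl ⟨rfl, rfl⟩) c0.1 c0.2
                push_cast
                omega
          · by_cases c1 : γ x ∈ T ∧ γ y ∈ T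
            · by_cases c2 : γ (γ x) ∈ T ∧ γ (γ y) ∈ T
              · have hsub : P ∩ {e : Sym2 V | ∀ u ∈ e, u ∈ T}
                    ⊆ {s(γ x, γ y), s(γ (γ x), γ (γ y))} := by
                  rintro e ⟨(rfl | rfl | rfl), hW'⟩
                  · exact absurd ((hW _ _).1 hW') c0
                  · exact Or.inl rfl
                  · exact Or.inr rfl
                have nb := le_trans (Set.ncard_le_ncard hsub (Set.toFinite _)) (hdouble_le _ _)
                have eb := pair2_bound hγ3 hfree hinv hcl₀ hxy huncov₀ T hT hT2
                  (γ x) (γ y) (Or.inr (Or.inl ⟨rfl, rfl⟩)) c1.1 c1.2 c2.1 c2.2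
                push_cast
                omega
              · have hsub : P ∩ {e : Sym2 V | ∀ u ∈ e, u ∈ T} ⊆ {s(γ x, γ y)} := by
                  rintro e ⟨(rfl | rfl | rfl), hW'⟩
                  · exact absurd ((hW _ _).1 hW') c0
                  · exact rfl
                  · exact absurd ((hW _ _).1 hW') c2
                have nb := le_trans (Set.ncard_le_ncard hsub (Set.toFinite _)) (hsingle_le _)
                have eb := pair_bound hγ3 hinv hcl₀ hxy huncov₀ T hT hT2
                  (γ x) (γ y) (Or.inr (Or.inl ⟨rfl, rfl⟩)) c1.1 c1.2
                push_cast
                omega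
            · by_cases c2 : γ (γ x) ∈ T ∧ γ (γ y) ∈ T
              · have hsub : P ∩ {e : Sym2 V | ∀ u ∈ e, u ∈ T} ⊆ {s(γ (γ x), γ (γ y))} := by
                  rintro e ⟨(rfl | rfl | rfl), hW'⟩
                  · exact absurd ((hW _ _).1 hW') c0
                  · exact absurd ((hW _ _).1 hW') c1
                  · exact rfl
                have nb := le_trans (Set.ncard_le_ncard hsub (Set.toFinite _)) (hsingle_le _)
                have eb := pair_bound hγ3 hinv hcl₀ hxy huncov₀ T hT hT2
                  (γ (γ x)) (γ (γ y)) (Or.inr (Or.inr ⟨rfl, rfl⟩)) c2.1 c2.2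
                push_cast
                omega
              · have hsub : P ∩ {e : Sym2 V | ∀ u ∈ e, u ∈ T} ⊆ (∅ : Set (Sym2 V)) := by
                  rintro e ⟨(rfl | rfl | rfl), hW'⟩
                  · exact absurd ((hW _ _).1 hW') c0
                  · exact absurd ((hW _ _).1 hW') c1
                  · exact absurd ((hW _ _).1 hW') c2
                have nb : (P ∩ {e : Sym2 V | ∀ u ∈ e, u ∈ T}).ncard ≤ 0 := by
                  have h1 := Set.ncard_le_ncard hsub (Set.toFinite _)
                  rwa [Set.ncard_empty] at h1
                have eb := hlam.2.2 T (hT.trans hS₀S) hT2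
                push_cast
                omega
      · -- the edge split step
        refine Or.inr (Or.inl ⟨x, hxS₀, y, hyS₀, t, htS₀, hxy, hyt, hxt, ?_, ?_, ?_⟩)
        · rw [hGhdef, SimpleGraph.sup_adj]
          right
          rw [SimpleGraph.fromEdgeSet_adj]
          exact ⟨Or.inl rfl, hxy⟩
        · rintro ⟨h1, -⟩
          exact hfree x h1
        · have hdiff : Gh.edgeSet \ P = H₀.edgeSet := by
            rw [hGhE]
            ext e
            constructor
            · rintro ⟨he | he, hn⟩
              · exact he
              · exact absurd he hn
            · intro he
              exact ⟨Or.inl he, fun hP' => hPnoH e hP' (hH₀le he)⟩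
          show H.edgeSet = (Gh.edgeSet \ P) ∪ _
          rw [hdiff]
          ext e
          constructor
          · intro he
            by_cases heD : e ∈ D
            · right
              rw [hD] at heD
              simp only [Set.mem_setOf_eq] at heD
              simp only [Set.mem_insert_iff, Set.mem_singleton_iff]
              rcases heD with hm | hm | hm
              · obtain ⟨u, hu, rfl⟩ := edge_containing hm he
                have huN : u ∈ H.neighborSet v := hu
                rw [hNv'] at huN
                rcases huN with rfl | rfl | rfl
                · exact Or.inl rfl
                · exact Or.inr (Or.inl rfl)
                · exact Or.inr (Or.inr (Or.inl rfl))
              · obtain ⟨u, hu, rfl⟩ := edge_containing hm he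
                have huN : u ∈ H.neighborSet w := hu
                rw [hNw'] at huN
                rcases huN with rfl | rfl | rfl
                · exact Or.inr (Or.inr (Or.inr (Or.inl rfl)))
                · exact Or.inr (Or.inr (Or.inr (Or.inr (Or.inl rfl))))
                · exact Or.inr (Or.inr (Or.inr (Or.inr (Or.inr (Or.inl rfl)))))
              · obtain ⟨u, hu, rfl⟩ := edge_containing hm he
                have huN : u ∈ H.neighborSet z := hu
                rw [hNz'] at huN
                rcases huN with rfl | rfl | rfl
                · exact Or.inr (Or.inr (Or.inr (Or.inr (Or.inr (Or.inr (Or.inl rfl))))))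
                · exact Or.inr (Or.inr (Or.inr (Or.inr (Or.inr
                    (Or.inr (Or.inr (Or.inl rfl)))))))
                · exact Or.inr (Or.inr (Or.inr (Or.inr (Or.inr
                    (Or.inr (Or.inr (Or.inr rfl)))))))
            · left
              rw [hH₀E]
              exact ⟨he, heD⟩
          · intro he
            rcases he with he | he
            · exact hH₀le he
            · simp only [Set.mem_insert_iff, Set.mem_singleton_iff] at he
              rcases he with rfl | rfl | rfl | rfl | rfl | rfl | rfl | rfl | rfl
              · exact hvx
              · exact hvy
              · exact hvt
              · exact hinv _ _ hvx
              · exact hinv _ _ hvy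
              · exact hinv _ _ hvt
              · exact hinv _ _ (hinv _ _ hvx)
              · exact hinv _ _ (hinv _ _ hvy)
              · exact hinv _ _ (hinv _ _ hvt)



/-! ### Construction sequences -/

/-- A construction sequence ending at the pair `(SF, GF)`. -/
def SeqTo (γ : V → V) (SF : Finset V) (GF : SimpleGraph V) : Prop :=
  ∃ (k : ℕ) (S : ℕ → Finset V) (H : ℕ → SimpleGraph V),
    (S 0).card = 3 ∧
    (∀ a b, (H 0).Adj a b ↔ a ∈ S 0 ∧ b ∈ S 0 ∧ a ≠ b) ∧
    (∀ u ∈ S 0, γ u ∈ S 0 ∧ γ u ≠ u) ∧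
    (∀ i ≤ k,
      (∀ u ∈ S i, γ u ∈ S i) ∧
      (∀ a b, (H i).Adj a b → a ∈ S i ∧ b ∈ S i) ∧
      (∀ a b, (H i).Adj a b → (H i).Adj (γ a) (γ b))) ∧
    (∀ i < k, ∃ v w z : V,
      v ∉ S i ∧ w ∉ S i ∧ z ∉ S i ∧ v ≠ w ∧ w ≠ z ∧ v ≠ z ∧
      γ v = w ∧ γ w = z ∧ γ z = v ∧
      S (i + 1) = S i ∪ {v, w, z} ∧
      (VertexAdditionStep γ (S i) (H i) (H (i + 1)) v w z ∨
       EdgeSplitStep γ (S i) (H i) (H (i + 1)) v w z ∨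
       DeltaExtensionStep γ (S i) (H i) (H (i + 1)) v w z)) ∧
    S k = SF ∧ H k = GF

lemma seqTo_base (γ : V → V) (hfree : ∀ x, γ x ≠ x) (S : Finset V) (H : SimpleGraph V)
    (hcard : S.card = 3) (hcl : ∀ u ∈ S, γ u ∈ S) (hinv : Inv3 γ H) (hlam : LamOn H S) :
    SeqTo γ S H := by
  obtain ⟨p, q, r, hpq, hpr, hqr, hS⟩ := Finset.card_eq_three.1 hcard
  have hSmem : ∀ x ∈ S, x = p ∨ x = q ∨ x = r := by
    intro x hx; rw [hS] at hx; simpa using hx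
  have hpS : p ∈ S := by rw [hS]; simp
  have hqS : q ∈ S := by rw [hS]; simp
  have hrS : r ∈ S := by rw [hS]; simp
  have hecnt : ecnt H S = 3 := by
    have h := hlam.2.1
    rw [hcard] at h
    omega
  set F : Set (Sym2 V) := {s(p, q), s(p, r), s(q, r)} with hF
  have hFcard : F.ncard = 3 := by
    refine Set.ncard_eq_three.2 ⟨_, _, _, ?_, ?_, ?_, rfl⟩ <;>
      (rw [Ne, Sym2.eq_iff]; rintro (⟨h1, h2⟩ | ⟨h1, h2⟩) <;> tauto)
  have hsub : ews H S ⊆ F := by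
    intro e he
    obtain ⟨a, b, rfl, hab, haS, hbS⟩ := mem_ews_elim he
    have hne := hab.ne
    rcases hSmem a haS with rfl | rfl | rfl <;> rcases hSmem b hbS with rfl | rfl | rfl <;>
      first
        | exact absurd rfl hne
        | (left; rfl)
        | (right; left; rfl)
        | (right; right; rfl)
        | (left; exact Sym2.eq_swap)
        | (right; left; exact Sym2.eq_swap)
        | (right; right; exact Sym2.eq_swap)
  have hFeq : ews H S = F := Set.eq_of_subset_of_ncard_le hsub (by
      rw [hFcard, ← hecnt]; exact le_rfl) (Set.toFinite F)
  have hadj : ∀ a b, H.Adj a b ↔ a ∈ S ∧ b ∈ S ∧ a ≠ b := by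
    intro a b
    constructor
    · intro hab
      exact ⟨(hlam.1 a b hab).1, (hlam.1 a b hab).2, hab.ne⟩
    · rintro ⟨ha, hb, hne⟩
      have : s(a, b) ∈ ews H S := by
        rw [hFeq]
        rcases hSmem a ha with rfl | rfl | rfl <;> rcases hSmem b hb with rfl | rfl | rfl <;>
          first
            | exact absurd rfl hne
            | (left; rfl)
            | (right; left; rfl)
            | (right; right; rfl)
            | (left; exact Sym2.eq_swap)
            | (right; left; exact Sym2.eq_swap)
            | (right; right; exact Sym2.eq_swap)
      exact (mk_mem_ews.1 this).1
  exact ⟨0, fun _ => S, fun _ => H, hcard, hadj, fun u hu => ⟨hcl u hu, hfree u⟩,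
    fun i _ => ⟨hcl, hlam.1, hinv⟩, fun i hi => absurd hi (by omega), rfl, rfl⟩

lemma seqTo_extend (γ : V → V) (S₀ SB : Finset V) (H₀ HB : SimpleGraph V)
    (hseq : SeqTo γ S₀ H₀) (v w z : V)
    (hv : v ∉ S₀) (hw : w ∉ S₀) (hz : z ∉ S₀)
    (hvw : v ≠ w) (hwz : w ≠ z) (hvz : v ≠ z)
    (hγv : γ v = w) (hγw : γ w = z) (hγz : γ z = v)
    (hSB : SB = S₀ ∪ {v, w, z})
    (hclB : ∀ u ∈ SB, γ u ∈ SB)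
    (hedB : ∀ a b, HB.Adj a b → a ∈ SB ∧ b ∈ SB)
    (hinvB : Inv3 γ HB)
    (hstep : VertexAdditionStep γ S₀ H₀ HB v w z ∨ EdgeSplitStep γ S₀ H₀ HB v w z ∨
      DeltaExtensionStep γ S₀ H₀ HB v w z) :
    SeqTo γ SB HB := by
  obtain ⟨k, S, H, h0card, h0adj, h0γ, hall, hsteps, hSk, hHk⟩ := hseq
  refine ⟨k + 1, fun i => if i ≤ k then S i else SB, fun i => if i ≤ k then H i else HB,
    ?_, ?_, ?_, ?_, ?_, ?_, ?_⟩
  · simp only [if_pos (Nat.zero_le k)]; exact h0card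
  · simp only [if_pos (Nat.zero_le k)]; exact h0adj
  · simp only [if_pos (Nat.zero_le k)]; exact h0γ
  · intro i hi
    by_cases hik : i ≤ k
    · simp only [if_pos hik]; exact hall i hik
    · simp only [if_neg hik]; exact ⟨hclB, hedB, hinvB⟩
  · intro i hi
    by_cases hik : i < k
    · have h1 : i ≤ k := le_of_lt hik
      have h2 : i + 1 ≤ k := hik
      simp only [if_pos h1, if_pos h2]
      exact hsteps i hik
    · have hik' : i = k := by omega
      subst hik'
      have h1 : i ≤ i := le_rfl
      have h2 : ¬ (i + 1 ≤ i) := by omega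
      simp only [if_pos h1, if_neg h2]
      rw [hSk, hHk]
      exact ⟨v, w, z, hv, hw, hz, hvw, hwz, hvz, hγv, hγw, hγz, hSB, hstep⟩
  · have h2 : ¬ (k + 1 ≤ k) := by omega
    simp only [if_neg h2]
  · have h2 : ¬ (k + 1 ≤ k) := by omega
    simp only [if_neg h2]

/-! ### The reduction lemma (statement) -/

lemma reduction (γ : V → V) (hγ3 : ∀ x, γ (γ (γ x)) = x) (hfree : ∀ x, γ x ≠ x)
    (S : Finset V) (H : SimpleGraph V)
    (hcl : ∀ u ∈ S, γ u ∈ S) (hinv : Inv3 γ H) (hlam : LamOn H S) (hS : 6 ≤ S.card) :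
    ∃ v w z H₀, v ∈ S ∧ γ v = w ∧ γ w = z ∧ γ z = v ∧ v ≠ w ∧ w ≠ z ∧ v ≠ z ∧
      Inv3 γ H₀ ∧ LamOn H₀ (S \ {v, w, z}) ∧
      (VertexAdditionStep γ (S \ {v, w, z}) H₀ H v w z ∨
       EdgeSplitStep γ (S \ {v, w, z}) H₀ H v w z ∨
       DeltaExtensionStep γ (S \ {v, w, z}) H₀ H v w z) :=
  reduction' γ hγ3 hfree S H hcl hinv hlam hS

/-! ### The main induction -/

lemma buildSeq (γ : V → V) (hγ3 : ∀ x, γ (γ (γ x)) = x) (hfree : ∀ x, γ x ≠ x) :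
    ∀ (n : ℕ) (S : Finset V) (H : SimpleGraph V), S.card ≤ n → 3 ≤ S.card →
      (∀ u ∈ S, γ u ∈ S) → Inv3 γ H → LamOn H S → SeqTo γ S H := by
  intro n
  induction n with
  | zero => intro S H h1 h2 _ _ _; omega
  | succ n ih =>
    intro S H hle h3 hcl hinv hlam
    rcases eq_or_lt_of_le h3 with heq | hlt
    · exact seqTo_base γ hfree S H heq.symm hcl hinv hlam
    · have hdvd : 3 ∣ S.card := orbit3_finset hγ3 hfree S hcl
      have h6 : 6 ≤ S.card := by omega
      obtain ⟨v, w, z, H₀, hvS, hγv, hγw, hγz, hvw, hwz, hvz, hinv₀, hlam₀, hstep⟩ :=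
        reduction γ hγ3 hfree S H hcl hinv hlam h6
      have hwS : w ∈ S := hγv ▸ hcl v hvS
      have hzS : z ∈ S := hγw ▸ hcl w hwS
      set S₀ : Finset V := S \ {v, w, z} with hS₀
      have hsub : ({v, w, z} : Finset V) ⊆ S := by
        intro u hu
        rcases Finset.mem_insert.1 hu with rfl | hu
        · exact hvS
        · rcases Finset.mem_insert.1 hu with rfl | hu
          · exact hwS
          · rw [Finset.mem_singleton.1 hu]; exact hzS
      have hc3 : ({v, w, z} : Finset V).card = 3 := by
        rw [Finset.card_insert_of_notMem (by simp [hvw, hvz]),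
          Finset.card_insert_of_notMem (by simp [hwz]), Finset.card_singleton]
      have hS₀card : S₀.card = S.card - 3 := by
        rw [hS₀, Finset.card_sdiff_of_subset hsub, hc3]
      have hcl₀ : ∀ u ∈ S₀, γ u ∈ S₀ := by
        intro u hu
        rw [hS₀, Finset.mem_sdiff] at hu ⊢
        refine ⟨hcl u hu.1, ?_⟩
        intro hmem
        apply hu.2
        have hu3 : u = γ (γ (γ u)) := (hγ3 u).symm
        rcases Finset.mem_insert.1 hmem with h | h
        · have : u = z := by rw [hu3, h, hγv, hγw]
          simp [this]
        · rcases Finset.mem_insert.1 h with h | h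
          · have : u = v := by rw [hu3, h, hγw, hγz]
            simp [this]
          · have : u = w := by rw [hu3, Finset.mem_singleton.1 h, hγz, hγv]
            simp [this]
      have hSeq : S = S₀ ∪ {v, w, z} := by
        rw [hS₀]
        ext u
        simp only [Finset.mem_union, Finset.mem_sdiff]
        constructor
        · intro hu
          by_cases hm : u ∈ ({v, w, z} : Finset V)
          · exact Or.inr hm
          · exact Or.inl ⟨hu, hm⟩
        · rintro (⟨hu, -⟩ | hu)
          · exact hu
          · exact hsub hu
      have hseq0 : SeqTo γ S₀ H₀ :=
        ih S₀ H₀ (by omega) (by omega) hcl₀ hinv₀ hlam₀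
      exact seqTo_extend γ S₀ S H₀ H hseq0 v w z (by simp [hS₀]) (by simp [hS₀])
        (by simp [hS₀]) hvw hwz hvz hγv hγw hγz hSeq hcl hlam.1 hinv hstep
/-- If `G` (with `|V(G)| ≥ 3`) satisfies the Laman conditions and the automorphism `γ`
with `γ³ = id` fixes no vertex, then there is a `(C₃, Φ)` construction sequence
for `(G, γ)`. -/
theorem c3_laman_implies_construction {V : Type*} [Fintype V] [DecidableEq V]
    (G : SimpleGraph V) (hV : 3 ≤ Fintype.card V)
    (γ : G ≃g G) (hγ3 : ∀ v, γ (γ (γ v)) = v)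
    (hlaman : Laman G) (hfree : ∀ v, γ v ≠ v) :
    C3ConstructionSeq G (fun v => γ v) := by
  have hinv : Inv3 (fun v => γ v) G := fun a b hab => (SimpleGraph.Iso.map_adj_iff γ).2 hab
  have hseq : SeqTo (fun v => γ v) Finset.univ G := by
    apply buildSeq (fun v => γ v) hγ3 hfree (Fintype.card V) Finset.univ G
      (by rw [Finset.card_univ]) (by rw [Finset.card_univ]; exact hV)
      (fun u _ => Finset.mem_univ _) hinv (laman_to_lamOn G hlaman)
  exact hseq

end C3Laman
end
end

section
/- Let G be a finite simple graph satisfying the Laman conditions with |V(G)| ≥ 6, and let γ be an automorphism of G with γ³ = id and γ(u) ≠ u for every vertex u. If v is a vertex of G of degree 2, then no two of the three (distinct) vertices v, γ(v), γ²(v) are adjacent in G. -/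
open Matrix

noncomputable section

namespace C3Laman

variable {V : Type*} [Fintype V] [DecidableEq V]

/-- Let `G` be a graph satisfying the Laman conditions with `|V(G)| ≥ 6` and `γ` an
automorphism of `G` with `γ³ = id` fixing no vertex.  If `v` is a vertex of degree 2,
then no two of the three (distinct) vertices `v, γ v, γ² v` are adjacent in `G`. -/
theorem c3_degree_two_independent {V : Type*} [Fintype V] [DecidableEq V]
    (G : SimpleGraph V) (hlaman : Laman G) (hV : 6 ≤ Fintype.card V)
    (γ : G ≃g G) (hγ3 : ∀ u, γ (γ (γ u)) = u) (hfree : ∀ u, γ u ≠ u)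
    (v : V) (hdeg : (G.neighborSet v).ncard = 2) :
    ¬ G.Adj v (γ v) ∧ ¬ G.Adj (γ v) (γ (γ v)) ∧ ¬ G.Adj v (γ (γ v)) := by
  suffices h : ¬ G.Adj v (γ v) by
    refine ⟨h, fun ha => h (γ.map_adj_iff.mp ha), fun ha => ?_⟩
    have h2 : G.Adj (γ (γ v)) (γ (γ (γ v))) := by rw [hγ3]; exact ha.symm
    exact h (γ.map_adj_iff.mp (γ.map_adj_iff.mp h2))
  intro hadj
  set w := γ v with hw
  set w2 := γ (γ v) with hw2
  have hinj : Function.Injective γ := γ.toEquiv.injective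
  have hvw : v ≠ w := fun h => hfree v h.symm
  have hww2 : w ≠ w2 := fun h => hfree w h.symm
  have hvw2 : v ≠ w2 := by
    intro h
    rw [hw2] at h
    have := congrArg γ h
    rw [hγ3] at this
    exact hfree v this
  have a1 : G.Adj v w := hadj
  have a2 : G.Adj w w2 := γ.map_adj_iff.mpr hadj
  have a3 : G.Adj v w2 := by
    have : G.Adj w2 (γ w2) := γ.map_adj_iff.mpr a2
    rw [hw2, hγ3 v] at this
    exact this.symm
  have nv : G.neighborSet v = {w, w2} := by
    have hsub : ({w, w2} : Set V) ⊆ G.neighborSet v := by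
      intro u hu
      rcases hu with h | h <;> subst h
      · exact a1
      · exact a3
    have hcard : (G.neighborSet v).ncard ≤ ({w, w2} : Set V).ncard := by
      rw [hdeg, Set.ncard_pair hww2]
    exact (Set.eq_of_subset_of_ncard_le hsub hcard (Set.toFinite _)).symm
  have keyv : ∀ u, G.Adj v u → u = w ∨ u = w2 := by
    intro u hu
    have : u ∈ G.neighborSet v := hu
    rw [nv] at this
    exact this
  have keyw : ∀ u, G.Adj w u → u = w2 ∨ u = v := by
    intro u hu
    have h2 : G.Adj (γ v) (γ (γ (γ u))) := by rw [hγ3]; exact hu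
    have h3 : G.Adj v (γ (γ u)) := γ.map_adj_iff.mp h2
    rcases keyv _ h3 with h | h
    · -- γ (γ u) = w = γ v  ⇒ γ u = v ⇒ u = γ (γ v) = w2
      left
      rw [hw] at h
      have h4 : γ u = v := hinj h
      have := congrArg γ (congrArg γ h4)
      rw [hγ3] at this
      rw [this, ← hw2]
    · -- γ (γ u) = w2 = γ (γ v) ⇒ u = v
      right
      rw [hw2] at h
      exact hinj (hinj h)
  have keyw2 : ∀ u, G.Adj w2 u → u = v ∨ u = w := by
    intro u hu
    have h2 : G.Adj (γ w) (γ (γ (γ u))) := by rw [hγ3, ← hw2]; exact hu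
    have h3 : G.Adj w (γ (γ u)) := γ.map_adj_iff.mp h2
    rcases keyw _ h3 with h | h
    · -- γ (γ u) = w2 = γ w = γ (γ v) ⇒ u = v
      left
      rw [hw2] at h
      exact hinj (hinj h)
    · -- γ (γ u) = v ⇒ u = γ v = w
      right
      have := congrArg γ h
      rw [hγ3] at this
      rw [this, ← hw]
  set T : Set V := {v, w, w2} with hT
  have hkeyT : ∀ a ∈ T, ∀ b, G.Adj a b → b ∈ T := by
    intro a ha b hab
    rcases ha with h | h | h <;> subst h
    · rcases keyv b hab with h | h <;> subst h <;> simp [hT]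
    · rcases keyw b hab with h | h <;> subst h <;> simp [hT]
    · rcases keyw2 b hab with h | h <;> subst h <;> simp [hT]
  set H : G.Subgraph :=
    { verts := Tᶜ
      Adj := fun a b => G.Adj a b ∧ a ∈ Tᶜ ∧ b ∈ Tᶜ
      adj_sub := fun h => h.1
      edge_vert := fun h => h.2.1
      symm := ⟨fun a b h => ⟨h.1.symm, h.2.2, h.2.1⟩⟩ } with hH
  set Ts : Set (Sym2 V) := {s(v, w), s(w, w2), s(v, w2)} with hTs
  have heq : G.edgeSet = Ts ∪ H.edgeSet := by
    ext e
    induction e using Sym2.ind with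
    | _ a b =>
      simp only [SimpleGraph.mem_edgeSet, Set.mem_union, SimpleGraph.Subgraph.mem_edgeSet,
        hTs, Set.mem_insert_iff, Set.mem_singleton_iff, Sym2.eq_iff]
      constructor
      · intro hab
        by_cases ha : a ∈ T
        · left
          rcases ha with h | h | h <;> subst h
          · rcases keyv b hab with h | h <;> subst h <;> tauto
          · rcases keyw b hab with h | h <;> subst h <;> tauto
          · rcases keyw2 b hab with h | h <;> subst h <;> tauto
        · by_cases hb : b ∈ T
          · exact absurd (hkeyT b hb a hab.symm) ha
          · right
            exact ⟨hab, ha, hb⟩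
      · rintro (h | h)
        · rcases h with (⟨h1, h2⟩ | ⟨h1, h2⟩) | (⟨h1, h2⟩ | ⟨h1, h2⟩) | (⟨h1, h2⟩ | ⟨h1, h2⟩) <;>
            subst h1 <;> subst h2
          · exact a1
          · exact a1.symm
          · exact a2
          · exact a2.symm
          · exact a3
          · exact a3.symm
        · exact h.1
  have hdisj : Disjoint Ts H.edgeSet := by
    rw [Set.disjoint_left]
    rintro e (h | h | h) he <;> subst h <;>
      · rw [SimpleGraph.Subgraph.mem_edgeSet] at he
        refine absurd ?_ he.2.1
        simp [hT]
  have hTscard : Ts.ncard = 3 := by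
    have h1 : s(v, w) ≠ s(w, w2) := by simp [Sym2.eq_iff]; tauto
    have h2 : s(v, w) ≠ s(v, w2) := by simp [Sym2.eq_iff]; tauto
    have h3 : s(w, w2) ≠ s(v, w2) := by simp [Sym2.eq_iff]; tauto
    rw [hTs, Set.ncard_insert_of_notMem (by simp [h1, h2]) (Set.toFinite _),
      Set.ncard_pair h3]
  have hEcount : G.edgeSet.ncard = 3 + H.edgeSet.ncard := by
    rw [heq, Set.ncard_union_eq hdisj (Set.toFinite _) (Set.toFinite _), hTscard]
  have hTcard : T.ncard = 3 := by
    rw [hT, Set.ncard_insert_of_notMem (by simp [hvw, hvw2]) (Set.toFinite _),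
      Set.ncard_pair hww2]
  have hVcount : 3 + H.verts.ncard = Fintype.card V := by
    have := Set.ncard_add_ncard_compl T
    rw [hTcard, Nat.card_eq_fintype_card] at this
    exact this
  have hH2 : 2 ≤ H.verts.ncard := by omega
  have hlem := hlaman.2 H hH2
  have hE := hlaman.1
  have hc1 : (G.edgeSet.ncard : ℤ) = 3 + (H.edgeSet.ncard : ℤ) := by exact_mod_cast hEcount
  have hc2 : 3 + (H.verts.ncard : ℤ) = (Fintype.card V : ℤ) := by exact_mod_cast hVcount
  have hc3 : (6 : ℤ) ≤ (Fintype.card V : ℤ) := by exact_mod_cast hV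
  linarith

end C3Laman
end
end

section
/- Let G' be a finite simple graph and γ an automorphism of G' with γ³ = id and γ(u) ≠ u for every vertex u, and let v₁, v₂ be distinct vertices of G'. Suppose that every subgraph H of G' with v₁, v₂ ∈ V(H) satisfies |E(H)| ≤ 2|V(H)| − 4. Then: (a) every subgraph H of G' with v₁, v₂, γ(v₁), γ(v₂) ∈ V(H) satisfies |E(H)| ≤ 2|V(H)| − 5; and (b) every subgraph H of G' with v₁, v₂, γ(v₁), γ(v₂), γ²(v₁), γ²(v₂) ∈ V(H) satisfies |E(H)| ≤ 2|V(H)| − 6. -/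
private lemma div3_finset {α : Type*} [DecidableEq α] (f : α → α)
    (h3 : ∀ x, f (f (f x)) = x) (h1 : ∀ x, f x ≠ x) (h2 : ∀ x, f (f x) ≠ x) :
    ∀ s : Finset α, (∀ x ∈ s, f x ∈ s) → 3 ∣ s.card := by
  have finj : Function.Injective f := by
    intro a b hab
    have := h3 a
    rw [hab, h3 b] at this
    exact this.symm
  intro s
  induction s using Finset.strongInduction with
  | _ s ih =>
    intro hs
    rcases s.eq_empty_or_nonempty with rfl | ⟨x, hx⟩
    · simp
    · have hfx : f x ∈ s := hs x hx
      have hffx : f (f x) ∈ s := hs _ hfx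
      set t := s \ {x, f x, f (f x)} with ht
      have hsub : t ⊆ s := Finset.sdiff_subset
      have hssub : t ⊂ s := by
        refine Finset.ssubset_iff_of_subset hsub |>.2 ⟨x, hx, ?_⟩
        simp [ht]
      have htclosed : ∀ y ∈ t, f y ∈ t := by
        intro y hy
        rw [ht, Finset.mem_sdiff] at hy ⊢
        obtain ⟨hys, hynot⟩ := hy
        simp only [Finset.mem_insert, Finset.mem_singleton] at hynot
        push_neg at hynot
        refine ⟨hs y hys, ?_⟩
        simp only [Finset.mem_insert, Finset.mem_singleton]
        push_neg
        refine ⟨?_, fun h => hynot.1 (finj h), fun h => hynot.2.1 (finj h)⟩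
        intro h
        apply hynot.2.2
        have := congrArg (fun z => f (f z)) h
        rw [h3 y] at this
        rw [← this]
      have hdistinct : ({x, f x, f (f x)} : Finset α).card = 3 := by
        rw [Finset.card_insert_of_notMem, Finset.card_insert_of_notMem, Finset.card_singleton]
        · simp only [Finset.mem_singleton]
          exact fun h => h1 x (finj h).symm
        · simp only [Finset.mem_insert, Finset.mem_singleton]
          push_neg
          exact ⟨fun h => h1 x h.symm, fun h => h2 x h.symm⟩
      have hsubset3 : ({x, f x, f (f x)} : Finset α) ⊆ s := by
        intro y hy
        simp only [Finset.mem_insert, Finset.mem_singleton] at hy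
        rcases hy with rfl | rfl | rfl <;> assumption
      have hcard : t.card = s.card - 3 := by
        rw [ht, Finset.card_sdiff_of_subset hsubset3, hdistinct]
      have h3t := ih t hssub htclosed
      have : s.card = t.card + 3 := by
        have := Finset.card_le_card hsubset3
        omega
      omega

private lemma div3_ncard {α : Type*} [DecidableEq α] (f : α → α)
    (h3 : ∀ x, f (f (f x)) = x) (h1 : ∀ x, f x ≠ x) (h2 : ∀ x, f (f x) ≠ x)
    (S : Set α) (hfin : S.Finite) (hS : ∀ x ∈ S, f x ∈ S) : 3 ∣ S.ncard := by
  rw [Set.ncard_eq_toFinset_card S hfin]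
  exact div3_finset f h3 h1 h2 hfin.toFinset
    (fun x hx => hfin.mem_toFinset.2 (hS x (hfin.mem_toFinset.1 hx)))

private lemma edgeSet_map' {V : Type*} {G' : SimpleGraph V} (f : G' →g G') (H : G'.Subgraph) :
    (H.map f).edgeSet = Sym2.map f '' H.edgeSet := by
  ext e
  induction e using Sym2.ind with
  | _ a b =>
    simp only [SimpleGraph.Subgraph.mem_edgeSet, SimpleGraph.Subgraph.map_adj, Relation.Map,
      Set.mem_image]
    constructor
    · rintro ⟨u, v, huv, rfl, rfl⟩
      exact ⟨s(u, v), SimpleGraph.Subgraph.mem_edgeSet.2 huv, by simp⟩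
    · rintro ⟨e', he', hmap⟩
      induction e' using Sym2.ind with
      | _ u v =>
        rw [Sym2.map_pair_eq, Sym2.eq_iff] at hmap
        rw [SimpleGraph.Subgraph.mem_edgeSet] at he'
        rcases hmap with ⟨rfl, rfl⟩ | ⟨rfl, rfl⟩
        · exact ⟨u, v, he', rfl, rfl⟩
        · exact ⟨v, u, he'.symm, rfl, rfl⟩

private lemma improve {V : Type*} [Fintype V] [DecidableEq V] {G' : SimpleGraph V}
    (γ : G' ≃g G') (hγ3 : ∀ u, γ (γ (γ u)) = u) (hfree : ∀ u, γ u ≠ u)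
    (c : ℤ) (hc : ¬ (3:ℤ) ∣ c) (H : G'.Subgraph)
    (hsup : ∀ K : G'.Subgraph, H ≤ K → (K.edgeSet.ncard : ℤ) ≤ 2 * K.verts.ncard - c)
    (hinf : ∀ K : G'.Subgraph, H ≤ K →
      (((K ⊓ K.map γ.toHom).edgeSet.ncard : ℤ)) ≤ 2 * ((K ⊓ K.map γ.toHom).verts.ncard : ℤ) - c) :
    (H.edgeSet.ncard : ℤ) ≤ 2 * (H.verts.ncard : ℤ) - (c + 1) := by
  have hcoe : ⇑γ.toHom = ⇑γ := rfl
  have hinj : Function.Injective ⇑γ.toHom := by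
    rw [hcoe]; exact γ.toEquiv.injective
  have h2v : ∀ u, γ (γ u) ≠ u := by
    intro u h
    have h' := hγ3 u
    rw [h] at h'
    exact hfree u h'
  -- count preservation under map
  have hνmap : ∀ K : G'.Subgraph, (K.map γ.toHom).verts.ncard = K.verts.ncard := by
    intro K
    simp only [SimpleGraph.Subgraph.map_verts]
    exact Set.ncard_image_of_injective _ hinj
  have hεmap : ∀ K : G'.Subgraph, (K.map γ.toHom).edgeSet.ncard = K.edgeSet.ncard := by
    intro K
    rw [edgeSet_map']
    exact Set.ncard_image_of_injective _ (Sym2.map.injective hinj)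
  by_contra hcon
  push_neg at hcon
  have htight : (H.edgeSet.ncard : ℤ) = 2 * H.verts.ncard - c :=
    le_antisymm (hsup H le_rfl) (by linarith)
  have step : ∀ K : G'.Subgraph, H ≤ K → (K.edgeSet.ncard : ℤ) = 2 * K.verts.ncard - c →
      ((K ⊔ K.map γ.toHom).edgeSet.ncard : ℤ)
        = 2 * ((K ⊔ K.map γ.toHom).verts.ncard : ℤ) - c := by
    intro K hK htK
    set L := K.map γ.toHom with hL
    have hmodE : ((K ⊔ L).edgeSet.ncard : ℤ) + ((K ⊓ L).edgeSet.ncard : ℤ)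
        = (K.edgeSet.ncard : ℤ) + (L.edgeSet.ncard : ℤ) := by
      rw [SimpleGraph.Subgraph.edgeSet_sup, SimpleGraph.Subgraph.edgeSet_inf]
      exact_mod_cast Set.ncard_union_add_ncard_inter _ _ (Set.toFinite _) (Set.toFinite _)
    have hmodV : ((K ⊔ L).verts.ncard : ℤ) + ((K ⊓ L).verts.ncard : ℤ)
        = (K.verts.ncard : ℤ) + (L.verts.ncard : ℤ) := by
      rw [SimpleGraph.Subgraph.verts_sup, SimpleGraph.Subgraph.verts_inf]
      exact_mod_cast Set.ncard_union_add_ncard_inter _ _ (Set.toFinite _) (Set.toFinite _)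
    have he1 : (L.edgeSet.ncard : ℤ) = (K.edgeSet.ncard : ℤ) := by exact_mod_cast hεmap K
    have he2 : (L.verts.ncard : ℤ) = (K.verts.ncard : ℤ) := by exact_mod_cast hνmap K
    have hs := hsup (K ⊔ L) (hK.trans le_sup_left)
    have hi := hinf K hK
    rw [← hL] at hi
    linarith
  set M := H ⊔ H.map γ.toHom with hMdef
  have hM : H ≤ M := le_sup_left
  have hMt := step H le_rfl htight
  rw [← hMdef] at hMt
  set T := M ⊔ M.map γ.toHom with hTdef
  have hTt := step M hM hMt
  rw [← hTdef] at hTt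
  -- invariance of T
  have hhom : (γ.toHom.comp γ.toHom).comp γ.toHom = SimpleGraph.Hom.id :=
    DFunLike.ext _ _ fun u => hγ3 u
  have hmap3 : ∀ K : G'.Subgraph, ((K.map γ.toHom).map γ.toHom).map γ.toHom = K := by
    intro K
    rw [← SimpleGraph.Subgraph.map_comp, ← SimpleGraph.Subgraph.map_comp, hhom,
      SimpleGraph.Subgraph.map_id]
  have tri : ∀ X Y Z : G'.Subgraph, (X ⊔ Y) ⊔ (Y ⊔ Z) = X ⊔ Y ⊔ Z := by
    intro X Y Z
    rw [sup_assoc X Y, ← sup_assoc Y Y Z, sup_idem, ← sup_assoc]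
  have hTinv : T.map γ.toHom = T := by
    have e1 : T = H ⊔ H.map γ.toHom ⊔ (H.map γ.toHom).map γ.toHom := by
      rw [hTdef, hMdef, SimpleGraph.Subgraph.map_sup, tri]
    have e2 : T.map γ.toHom
        = H.map γ.toHom ⊔ (H.map γ.toHom).map γ.toHom ⊔ H := by
      rw [e1, SimpleGraph.Subgraph.map_sup, SimpleGraph.Subgraph.map_sup, hmap3, sup_assoc]
    rw [e2, e1,
      sup_comm (H.map γ.toHom ⊔ (H.map γ.toHom).map γ.toHom) H, sup_assoc]
  -- closure
  have hvc : ∀ x ∈ T.verts, γ x ∈ T.verts := by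
    intro x hx
    have : γ x ∈ (T.map γ.toHom).verts := ⟨x, hx, rfl⟩
    rwa [hTinv] at this
  have hec : ∀ e ∈ T.edgeSet, Sym2.map ⇑γ e ∈ T.edgeSet := by
    intro e he
    have : Sym2.map ⇑γ.toHom e ∈ (T.map γ.toHom).edgeSet := by
      rw [edgeSet_map']
      exact ⟨e, he, rfl⟩
    rw [hTinv] at this
    rwa [hcoe] at this
  -- Sym2 freeness
  have hE3 : ∀ e : Sym2 V, Sym2.map ⇑γ (Sym2.map ⇑γ (Sym2.map ⇑γ e)) = e := by
    intro e
    induction e using Sym2.ind with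
    | _ a b => simp [Sym2.map_pair_eq, hγ3]
  have hE1 : ∀ e : Sym2 V, Sym2.map ⇑γ e ≠ e := by
    intro e
    induction e using Sym2.ind with
    | _ a b =>
      rw [Sym2.map_pair_eq]
      intro heq
      rw [Sym2.eq_iff] at heq
      rcases heq with ⟨h, -⟩ | ⟨h1', h2'⟩
      · exact hfree a h
      · apply h2v a
        rw [h1', h2']
  have hE2 : ∀ e : Sym2 V, Sym2.map ⇑γ (Sym2.map ⇑γ e) ≠ e := by
    intro e
    induction e using Sym2.ind with
    | _ a b =>
      rw [Sym2.map_pair_eq, Sym2.map_pair_eq]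
      intro heq
      rw [Sym2.eq_iff] at heq
      rcases heq with ⟨h, -⟩ | ⟨h1', h2'⟩
      · exact h2v a h
      · apply hfree a
        have h4 : γ (γ (γ (γ a))) = γ a := congrArg γ (hγ3 a)
        rw [h1', h2'] at h4
        exact h4.symm
  have hdv : 3 ∣ T.verts.ncard :=
    div3_ncard ⇑γ hγ3 hfree h2v T.verts (Set.toFinite _) hvc
  have hde : 3 ∣ T.edgeSet.ncard :=
    div3_ncard (Sym2.map ⇑γ) hE3 hE1 hE2 T.edgeSet (Set.toFinite _) hec
  obtain ⟨a, ha⟩ := hdv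
  obtain ⟨b, hb⟩ := hde
  apply hc
  refine ⟨2 * a - b, ?_⟩
  rw [ha, hb] at hTt
  push_cast at hTt
  linarith

/-- Let `G'` be a graph with an automorphism `γ` satisfying `γ³ = id` and fixing no
vertex, and let `v₁ ≠ v₂` be vertices of `G'`.  Suppose that every subgraph `H` of `G'`
containing `v₁` and `v₂` satisfies `|E(H)| ≤ 2|V(H)| - 4`.  Then:
(a) every subgraph `H` of `G'` containing `v₁, v₂, γ v₁, γ v₂` satisfies
    `|E(H)| ≤ 2|V(H)| - 5`; and
(b) every subgraph `H` of `G'` containing `v₁, v₂, γ v₁, γ v₂, γ² v₁, γ² v₂` satisfies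
    `|E(H)| ≤ 2|V(H)| - 6`. -/
theorem c3_refined_subgraph_counts {V : Type*} [Fintype V] [DecidableEq V]
    (G' : SimpleGraph V) (γ : G' ≃g G')
    (hγ3 : ∀ u, γ (γ (γ u)) = u) (hfree : ∀ u, γ u ≠ u)
    (v₁ v₂ : V) (h12 : v₁ ≠ v₂)
    (hsub12 : ∀ H : G'.Subgraph, v₁ ∈ H.verts → v₂ ∈ H.verts →
      (H.edgeSet.ncard : ℤ) ≤ 2 * (H.verts.ncard : ℤ) - 4) :
    (∀ H : G'.Subgraph, v₁ ∈ H.verts → v₂ ∈ H.verts →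
      γ v₁ ∈ H.verts → γ v₂ ∈ H.verts →
      (H.edgeSet.ncard : ℤ) ≤ 2 * (H.verts.ncard : ℤ) - 5) ∧
    (∀ H : G'.Subgraph, v₁ ∈ H.verts → v₂ ∈ H.verts →
      γ v₁ ∈ H.verts → γ v₂ ∈ H.verts →
      γ (γ v₁) ∈ H.verts → γ (γ v₂) ∈ H.verts →
      (H.edgeSet.ncard : ℤ) ≤ 2 * (H.verts.ncard : ℤ) - 6) := by
  have hcoe : ⇑γ.toHom = ⇑γ := rfl
  have hinj : Function.Injective ⇑γ.toHom := by
    rw [hcoe]; exact γ.toEquiv.injective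
  have hνmap : ∀ K : G'.Subgraph, (K.map γ.toHom).verts.ncard = K.verts.ncard := by
    intro K
    simp only [SimpleGraph.Subgraph.map_verts]
    exact Set.ncard_image_of_injective _ hinj
  have hεmap : ∀ K : G'.Subgraph, (K.map γ.toHom).edgeSet.ncard = K.edgeSet.ncard := by
    intro K
    rw [edgeSet_map']
    exact Set.ncard_image_of_injective _ (Sym2.map.injective hinj)
  -- membership in mapped subgraph
  have hmem : ∀ (K : G'.Subgraph) (x : V), γ (γ x) ∈ K.verts → x ∈ (K.map γ.toHom).verts := by
    intro K x hx
    simp only [SimpleGraph.Subgraph.map_verts, Set.mem_image]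
    exact ⟨γ (γ x), hx, hγ3 x⟩
  have hmem1 : ∀ (K : G'.Subgraph) (x : V), x ∈ K.verts → γ x ∈ (K.map γ.toHom).verts := by
    intro K x hx
    simp only [SimpleGraph.Subgraph.map_verts, Set.mem_image]
    exact ⟨x, hx, rfl⟩
  -- translated hypothesis: bound 4 for subgraphs containing γ v₁, γ v₂
  have hsub12' : ∀ K : G'.Subgraph, γ v₁ ∈ K.verts → γ v₂ ∈ K.verts →
      (K.edgeSet.ncard : ℤ) ≤ 2 * (K.verts.ncard : ℤ) - 4 := by
    intro K hk1 hk2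
    set K2 := (K.map γ.toHom).map γ.toHom with hK2
    have hv1 : v₁ ∈ K2.verts := hmem _ _ (hmem1 K _ hk1)
    have hv2 : v₂ ∈ K2.verts := hmem _ _ (hmem1 K _ hk2)
    have := hsub12 K2 hv1 hv2
    rwa [hK2, hεmap, hεmap, hνmap, hνmap] at this
  -- Part (a)
  have parta : ∀ H : G'.Subgraph, v₁ ∈ H.verts → v₂ ∈ H.verts →
      γ v₁ ∈ H.verts → γ v₂ ∈ H.verts →
      (H.edgeSet.ncard : ℤ) ≤ 2 * (H.verts.ncard : ℤ) - 5 := by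
    intro H h1 h2 h3 h4
    have := improve γ hγ3 hfree 4 (by norm_num) H
      (fun K hK => hsub12 K (hK.1 h1) (hK.1 h2))
      (fun K hK => by
        refine hsub12' _ ⟨hK.1 h3, hmem1 K _ (hK.1 h1)⟩ ⟨hK.1 h4, hmem1 K _ (hK.1 h2)⟩)
    linarith
  refine ⟨parta, ?_⟩
  -- Part (b)
  intro H h1 h2 h3 h4 h5 h6
  have := improve γ hγ3 hfree 5 (by norm_num) H
    (fun K hK => parta K (hK.1 h1) (hK.1 h2) (hK.1 h3) (hK.1 h4))
    (fun K hK => by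
      refine parta _ ⟨hK.1 h1, hmem K _ (hK.1 h5)⟩ ⟨hK.1 h2, hmem K _ (hK.1 h6)⟩
        ⟨hK.1 h3, hmem1 K _ (hK.1 h1)⟩ ⟨hK.1 h4, hmem1 K _ (hK.1 h2)⟩)
  linarith
end

section
/- Let G be a finite simple graph satisfying the Laman conditions and let γ be an automorphism of G with γ³ = id. Then every (C₃,γ) vertex addition of G satisfies the Laman conditions. -/
open Matrix

noncomputable section

namespace C3Laman

variable {V : Type*} [Fintype V] [DecidableEq V]

/-- A `(C₃, γ)` vertex addition of `G` on distinct base vertices `v₁, v₂`, realized on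
the vertex type `V ⊕ Fin 3` with the three new vertices `Sum.inr 0, Sum.inr 1,
Sum.inr 2`. -/
def vertexAdditionGraph (G : SimpleGraph V) (γ : G ≃g G) (v₁ v₂ : V) :
    SimpleGraph (V ⊕ Fin 3) :=
  SimpleGraph.fromEdgeSet
    (Sym2.map Sum.inl '' G.edgeSet ∪
      {s((Sum.inr 0 : V ⊕ Fin 3), Sum.inl v₁), s((Sum.inr 0 : V ⊕ Fin 3), Sum.inl v₂),
       s((Sum.inr 1 : V ⊕ Fin 3), Sum.inl (γ v₁)),
       s((Sum.inr 1 : V ⊕ Fin 3), Sum.inl (γ v₂)),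
       s((Sum.inr 2 : V ⊕ Fin 3), Sum.inl (γ (γ v₁))),
       s((Sum.inr 2 : V ⊕ Fin 3), Sum.inl (γ (γ v₂)))})

/-! ### Auxiliary material -/

/-- The six new edges of a `(C₃, γ)` vertex addition. -/
def newEdges (G : SimpleGraph V) (γ : G ≃g G) (v₁ v₂ : V) : Set (Sym2 (V ⊕ Fin 3)) :=
  {s((Sum.inr 0 : V ⊕ Fin 3), Sum.inl v₁), s((Sum.inr 0 : V ⊕ Fin 3), Sum.inl v₂),
   s((Sum.inr 1 : V ⊕ Fin 3), Sum.inl (γ v₁)),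
   s((Sum.inr 1 : V ⊕ Fin 3), Sum.inl (γ v₂)),
   s((Sum.inr 2 : V ⊕ Fin 3), Sum.inl (γ (γ v₁))),
   s((Sum.inr 2 : V ⊕ Fin 3), Sum.inl (γ (γ v₂)))}

lemma not_inr_mem_map (e : Sym2 V) (i : Fin 3) :
    (Sum.inr i : V ⊕ Fin 3) ∉ Sym2.map Sum.inl e := by
  simp [Sym2.mem_map]

lemma edgeSet_vag (G : SimpleGraph V) (γ : G ≃g G) (v₁ v₂ : V) :
    (vertexAdditionGraph G γ v₁ v₂).edgeSet =
      Sym2.map Sum.inl '' G.edgeSet ∪ newEdges G γ v₁ v₂ := by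
  have hrfl : vertexAdditionGraph G γ v₁ v₂ =
      SimpleGraph.fromEdgeSet (Sym2.map Sum.inl '' G.edgeSet ∪ newEdges G γ v₁ v₂) := rfl
  rw [hrfl, SimpleGraph.edgeSet_fromEdgeSet]
  rw [sdiff_eq_left]
  rw [Set.disjoint_left]
  rintro e (⟨e₀, he₀, rfl⟩ | he)
  · intro hd
    induction e₀ using Sym2.ind with
    | _ x y =>
      rw [SimpleGraph.mem_edgeSet] at he₀
      rw [Sym2.map_pair_eq] at hd
      simp only [Sym2.mem_diagSet, Set.mem_setOf_eq, Sym2.isDiag_iff_proj_eq] at hd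
      exact G.ne_of_adj he₀ (Sum.inl_injective hd)
  · rcases he with h | h | h | h | h | h <;> subst h <;> simp

lemma map_ne_inr (e : Sym2 V) (i : Fin 3) (z : V ⊕ Fin 3) :
    Sym2.map (Sum.inl : V → V ⊕ Fin 3) e ≠ s((Sum.inr i : V ⊕ Fin 3), z) := by
  intro h
  exact not_inr_mem_map e i (by rw [h]; simp)

lemma disjoint_map_newEdges (G : SimpleGraph V) (γ : G ≃g G) (v₁ v₂ : V) :
    Disjoint (Sym2.map (Sum.inl : V → V ⊕ Fin 3) '' G.edgeSet) (newEdges G γ v₁ v₂) := by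
  rw [Set.disjoint_right]
  rintro e he ⟨e₀, _, rfl⟩
  rcases he with h | h | h | h | h | h <;> exact map_ne_inr e₀ _ _ h

lemma ncard_newEdges (G : SimpleGraph V) (γ : G ≃g G) (v₁ v₂ : V) (h12 : v₁ ≠ v₂) :
    (newEdges G γ v₁ v₂).ncard = 6 := by
  have hg : Function.Injective (γ : V → V) := γ.toEquiv.injective
  have h1 : γ v₁ ≠ γ v₂ := fun h => h12 (hg h)
  have h2 : γ (γ v₁) ≠ γ (γ v₂) := fun h => h1 (hg h)
  unfold newEdges
  rw [Set.ncard_insert_of_notMem (by simp [Sym2.eq_iff, h12]),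
    Set.ncard_insert_of_notMem (by simp [Sym2.eq_iff]),
    Set.ncard_insert_of_notMem (by simp [Sym2.eq_iff, h1]),
    Set.ncard_insert_of_notMem (by simp [Sym2.eq_iff]),
    Set.ncard_insert_of_notMem (by simp [Sym2.eq_iff, h2]),
    Set.ncard_singleton]

lemma sum_ncard (s : Set (V ⊕ Fin 3)) :
    s.ncard = (Sum.inl ⁻¹' s).ncard + (Sum.inr ⁻¹' s).ncard := by
  have h1 : s = Sum.inl '' (Sum.inl ⁻¹' s) ∪ Sum.inr '' (Sum.inr ⁻¹' s) := by
    ext x; cases x <;> simp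
  have hd : Disjoint (Sum.inl '' (Sum.inl ⁻¹' s)) (Sum.inr '' (Sum.inr ⁻¹' s)) := by
    rw [Set.disjoint_left]
    rintro x ⟨a, _, rfl⟩ ⟨b, _, h⟩
    simp at h
  calc s.ncard = (Sum.inl '' (Sum.inl ⁻¹' s) ∪ Sum.inr '' (Sum.inr ⁻¹' s)).ncard := by
        rw [← h1]
    _ = (Sum.inl '' (Sum.inl ⁻¹' s)).ncard + (Sum.inr '' (Sum.inr ⁻¹' s)).ncard :=
        Set.ncard_union_eq hd (Set.toFinite _) (Set.toFinite _)
    _ = (Sum.inl ⁻¹' s).ncard + (Sum.inr ⁻¹' s).ncard := by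
        rw [Set.ncard_image_of_injective _ Sum.inl_injective,
          Set.ncard_image_of_injective _ Sum.inr_injective]

lemma inter_pair_bound {G' : SimpleGraph (V ⊕ Fin 3)} (H : G'.Subgraph) (i : Fin 3)
    (x y : V) :
    (H.edgeSet ∩ {s((Sum.inr i : V ⊕ Fin 3), Sum.inl x),
      s((Sum.inr i : V ⊕ Fin 3), Sum.inl y)}).ncard ≤ 2 ∧
    ((Sum.inr i : V ⊕ Fin 3) ∉ H.verts →
      H.edgeSet ∩ {s((Sum.inr i : V ⊕ Fin 3), Sum.inl x),
        s((Sum.inr i : V ⊕ Fin 3), Sum.inl y)} = ∅) ∧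
    (H.edgeSet ∩ {s((Sum.inr i : V ⊕ Fin 3), Sum.inl x),
      s((Sum.inr i : V ⊕ Fin 3), Sum.inl y)}).ncard ≤ (Sum.inl ⁻¹' H.verts).ncard := by
  classical
  set S : Set (Sym2 (V ⊕ Fin 3)) :=
    {s((Sum.inr i : V ⊕ Fin 3), Sum.inl x), s((Sum.inr i : V ⊕ Fin 3), Sum.inl y)} with hS
  have hS2 : S.ncard ≤ 2 := by
    rw [hS]
    exact (Set.ncard_insert_le _ _).trans (by rw [Set.ncard_singleton])
  have hsub : (H.edgeSet ∩ S).ncard ≤ 2 :=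
    (Set.ncard_le_ncard Set.inter_subset_right (Set.toFinite _)).trans hS2
  refine ⟨hsub, ?_, ?_⟩
  · intro hm
    ext e
    simp only [Set.mem_inter_iff, Set.mem_empty_iff_false, iff_false, not_and]
    intro he hes
    rcases hes with h | h <;> subst h <;>
      exact hm (H.edge_vert (SimpleGraph.Subgraph.mem_edgeSet.mp he))
  · rcases Set.eq_empty_or_nonempty (H.edgeSet ∩ S) with hE | hE
    · simp [hE]
    · have hA1 : 1 ≤ (Sum.inl ⁻¹' H.verts).ncard := by
        obtain ⟨e, heH, heS⟩ := hE
        have hz : ∃ z : V, Sum.inl z ∈ H.verts := by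
          rcases heS with h | h <;> subst h
          · exact ⟨x, H.edge_vert (H.adj_symm (SimpleGraph.Subgraph.mem_edgeSet.mp heH))⟩
          · exact ⟨y, H.edge_vert (H.adj_symm (SimpleGraph.Subgraph.mem_edgeSet.mp heH))⟩
        obtain ⟨z, hz⟩ := hz
        have hzz : ({z} : Set V) ⊆ Sum.inl ⁻¹' H.verts := by simpa using hz
        simpa using Set.ncard_le_ncard hzz (Set.toFinite _)
      by_cases hboth : s((Sum.inr i : V ⊕ Fin 3), Sum.inl x) ∈ H.edgeSet ∧
          s((Sum.inr i : V ⊕ Fin 3), Sum.inl y) ∈ H.edgeSet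
      · by_cases hxy : x = y
        · subst hxy
          have hSx : S = {s((Sum.inr i : V ⊕ Fin 3), Sum.inl x)} := by simp [hS]
          have h1 : (H.edgeSet ∩ S).ncard ≤ 1 := by
            rw [hSx]
            exact (Set.ncard_le_ncard Set.inter_subset_right (Set.toFinite _)).trans
              (by rw [Set.ncard_singleton])
          omega
        · have hx : x ∈ Sum.inl ⁻¹' H.verts :=
            H.edge_vert (H.adj_symm (SimpleGraph.Subgraph.mem_edgeSet.mp hboth.1))
          have hy : y ∈ Sum.inl ⁻¹' H.verts :=
            H.edge_vert (H.adj_symm (SimpleGraph.Subgraph.mem_edgeSet.mp hboth.2))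
          have h2 : 1 < (Sum.inl ⁻¹' H.verts).ncard :=
            (Set.one_lt_ncard (Set.toFinite _)).mpr ⟨x, hx, y, hy, hxy⟩
          omega
      · have h1 : (H.edgeSet ∩ S).ncard ≤ 1 := by
          rw [not_and_or] at hboth
          rcases hboth with hb | hb
          · have hss : H.edgeSet ∩ S ⊆ {s((Sum.inr i : V ⊕ Fin 3), Sum.inl y)} := by
              rintro e ⟨heH, heS⟩
              rcases heS with h | h
              · exact absurd (h ▸ heH) hb
              · simp [h]
            exact (Set.ncard_le_ncard hss (Set.toFinite _)).trans
              (by rw [Set.ncard_singleton])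
          · have hss : H.edgeSet ∩ S ⊆ {s((Sum.inr i : V ⊕ Fin 3), Sum.inl x)} := by
              rintro e ⟨heH, heS⟩
              rcases heS with h | h
              · simp [h]
              · exact absurd (h ▸ heH) hb
            exact (Set.ncard_le_ncard hss (Set.toFinite _)).trans
              (by rw [Set.ncard_singleton])
        omega

/-- If `G` satisfies the Laman conditions and `γ` is an automorphism of `G` with
`γ³ = id`, then every `(C₃, γ)` vertex addition of `G` satisfies the Laman
conditions. -/
theorem c3_vertex_addition_laman {V : Type*} [Fintype V] [DecidableEq V]
    (G : SimpleGraph V) (γ : G ≃g G) (hγ3 : ∀ v, γ (γ (γ v)) = v)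
    (hlaman : Laman G) (v₁ v₂ : V) (h12 : v₁ ≠ v₂) :
    Laman (vertexAdditionGraph G γ v₁ v₂) := by
  classical
  set G' := vertexAdditionGraph G γ v₁ v₂ with hG'
  have hedge : G'.edgeSet = Sym2.map Sum.inl '' G.edgeSet ∪ newEdges G γ v₁ v₂ :=
    edgeSet_vag G γ v₁ v₂
  have adj_inl : ∀ x y : V, G'.Adj (Sum.inl x) (Sum.inl y) ↔ G.Adj x y := by
    intro x y
    rw [← SimpleGraph.mem_edgeSet, ← SimpleGraph.mem_edgeSet, hedge]
    constructor
    · rintro (⟨e₀, he₀, heq⟩ | hm)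
      · have : e₀ = s(x, y) := by
          apply Sym2.map.injective Sum.inl_injective
          rw [heq, Sym2.map_pair_eq]
        rwa [this] at he₀
      · exfalso
        rcases hm with h | h | h | h | h | h <;> simp [Sym2.eq_iff] at h
    · intro h
      exact Or.inl ⟨s(x, y), h, Sym2.map_pair_eq _ _ _⟩
  constructor
  · -- edge count
    rw [hedge, Set.ncard_union_eq (disjoint_map_newEdges G γ v₁ v₂)
        (Set.toFinite _) (Set.toFinite _),
      Set.ncard_image_of_injective _ (Sym2.map.injective Sum.inl_injective),
      ncard_newEdges G γ v₁ v₂ h12]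
    have h1 := hlaman.1
    have hc : Fintype.card (V ⊕ Fin 3) = Fintype.card V + 3 := by
      simp [Fintype.card_sum]
    rw [hc]
    push_cast
    omega
  · -- subgraph count
    intro H hcard
    set A : Set V := Sum.inl ⁻¹' H.verts with hA
    set K : Set (Fin 3) := Sum.inr ⁻¹' H.verts with hKdef
    have hn : H.verts.ncard = A.ncard + K.ncard := sum_ncard _
    obtain ⟨b, hbdef⟩ : ∃ b : Fin 3 → ℕ, ∀ i,
        (Sum.inr i ∈ H.verts → b i = 1) ∧ (Sum.inr i ∉ H.verts → b i = 0) :=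
      ⟨fun i => if Sum.inr i ∈ H.verts then 1 else 0,
        fun i => ⟨fun h => if_pos h, fun h => if_neg h⟩⟩
    have hbb : ∀ i, b i ≤ 1 := by
      intro i
      by_cases h : Sum.inr i ∈ H.verts
      · rw [(hbdef i).1 h]
      · rw [(hbdef i).2 h]; omega
    have hbeq : ∀ i, (if Sum.inr i ∈ H.verts then 1 else 0) = b i := by
      intro i
      by_cases h : Sum.inr i ∈ H.verts
      · rw [if_pos h, (hbdef i).1 h]
      · rw [if_neg h, (hbdef i).2 h]
    have hK : K.ncard = b 0 + b 1 + b 2 := by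
      have h1 : K = ↑(Finset.univ.filter fun i => Sum.inr i ∈ H.verts) := by
        ext i; simp [hKdef]
      rw [h1, Set.ncard_coe_finset, Finset.card_filter, Fin.sum_univ_three,
        hbeq 0, hbeq 1, hbeq 2]
    -- the subgraph of G induced on the inl part
    set H₀ : G.Subgraph :=
      { verts := A
        Adj := fun x y => H.Adj (Sum.inl x) (Sum.inl y)
        adj_sub := fun h => (adj_inl _ _).1 (H.adj_sub h)
        edge_vert := fun h => H.edge_vert h
        symm := ⟨fun x y h => H.adj_symm h⟩ } with hH₀
    have hE1 : H.edgeSet ∩ (Sym2.map Sum.inl '' G.edgeSet) = Sym2.map Sum.inl '' H₀.edgeSet := by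
      ext e
      constructor
      · rintro ⟨he, e₀, he₀, rfl⟩
        refine ⟨e₀, ?_, rfl⟩
        revert he
        induction e₀ using Sym2.ind with
        | _ x y =>
          intro he
          rw [Sym2.map_pair_eq, SimpleGraph.Subgraph.mem_edgeSet] at he
          exact SimpleGraph.Subgraph.mem_edgeSet.mpr he
      · rintro ⟨e₀, he₀, rfl⟩
        revert he₀
        induction e₀ using Sym2.ind with
        | _ x y =>
          intro he₀
          rw [SimpleGraph.Subgraph.mem_edgeSet] at he₀
          refine ⟨?_, ⟨s(x, y), ?_, rfl⟩⟩
          · rw [Sym2.map_pair_eq, SimpleGraph.Subgraph.mem_edgeSet]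
            exact he₀
          · exact (SimpleGraph.mem_edgeSet G).mpr ((adj_inl x y).1 (H.adj_sub he₀))
    have hsubE : H.edgeSet ⊆ Sym2.map Sum.inl '' G.edgeSet ∪ newEdges G γ v₁ v₂ := by
      rw [← hedge]; exact H.edgeSet_subset
    have h1 : H.edgeSet =
        (H.edgeSet ∩ (Sym2.map Sum.inl '' G.edgeSet)) ∪ (H.edgeSet ∩ newEdges G γ v₁ v₂) := by
      rw [← Set.inter_union_distrib_left, Set.inter_eq_self_of_subset_left hsubE]
    have hstep : (H.edgeSet ∩ (Sym2.map Sum.inl '' G.edgeSet)).ncard = H₀.edgeSet.ncard := by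
      rw [hE1, Set.ncard_image_of_injective _ (Sym2.map.injective Sum.inl_injective)]
    have hsplit : H.edgeSet.ncard ≤
        H₀.edgeSet.ncard + (H.edgeSet ∩ newEdges G γ v₁ v₂).ncard := by
      have h2 := Set.ncard_union_le (H.edgeSet ∩ (Sym2.map Sum.inl '' G.edgeSet))
        (H.edgeSet ∩ newEdges G γ v₁ v₂)
      rw [← h1, hstep] at h2
      exact h2
    -- split the new-edge part into three pairs
    set T0 : Set (Sym2 (V ⊕ Fin 3)) :=
      {s((Sum.inr 0 : V ⊕ Fin 3), Sum.inl v₁), s((Sum.inr 0 : V ⊕ Fin 3), Sum.inl v₂)} with hT0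
    set T1 : Set (Sym2 (V ⊕ Fin 3)) :=
      {s((Sum.inr 1 : V ⊕ Fin 3), Sum.inl (γ v₁)),
       s((Sum.inr 1 : V ⊕ Fin 3), Sum.inl (γ v₂))} with hT1
    set T2 : Set (Sym2 (V ⊕ Fin 3)) :=
      {s((Sum.inr 2 : V ⊕ Fin 3), Sum.inl (γ (γ v₁))),
       s((Sum.inr 2 : V ⊕ Fin 3), Sum.inl (γ (γ v₂)))} with hT2
    have hTsplit : newEdges G γ v₁ v₂ = T0 ∪ T1 ∪ T2 := by
      rw [hT0, hT1, hT2]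
      simp only [newEdges]
      ext e
      simp only [Set.mem_insert_iff, Set.mem_singleton_iff, Set.mem_union]
      tauto
    have hE2 : (H.edgeSet ∩ newEdges G γ v₁ v₂).ncard ≤
        (H.edgeSet ∩ T0).ncard + (H.edgeSet ∩ T1).ncard + (H.edgeSet ∩ T2).ncard := by
      rw [hTsplit, Set.inter_union_distrib_left, Set.inter_union_distrib_left]
      refine (Set.ncard_union_le _ _).trans ?_
      have := Set.ncard_union_le (H.edgeSet ∩ T0) (H.edgeSet ∩ T1)
      omega
    obtain ⟨g0two, g0emp, g0A⟩ := inter_pair_bound H 0 v₁ v₂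
    obtain ⟨g1two, g1emp, g1A⟩ := inter_pair_bound H 1 (γ v₁) (γ v₂)
    obtain ⟨g2two, g2emp, g2A⟩ := inter_pair_bound H 2 (γ (γ v₁)) (γ (γ v₂))
    rw [← hT0] at g0two g0emp g0A
    rw [← hT1] at g1two g1emp g1A
    rw [← hT2] at g2two g2emp g2A
    rw [← hA] at g0A g1A g2A
    have g0b : (H.edgeSet ∩ T0).ncard ≤ 2 * b 0 := by
      by_cases hm : Sum.inr (0 : Fin 3) ∈ H.verts
      · rw [(hbdef 0).1 hm]; omega
      · rw [g0emp hm, (hbdef 0).2 hm]; simp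
    have g1b : (H.edgeSet ∩ T1).ncard ≤ 2 * b 1 := by
      by_cases hm : Sum.inr (1 : Fin 3) ∈ H.verts
      · rw [(hbdef 1).1 hm]; omega
      · rw [g1emp hm, (hbdef 1).2 hm]; simp
    have g2b : (H.edgeSet ∩ T2).ncard ≤ 2 * b 2 := by
      by_cases hm : Sum.inr (2 : Fin 3) ∈ H.verts
      · rw [(hbdef 2).1 hm]; omega
      · rw [g2emp hm, (hbdef 2).2 hm]; simp
    by_cases ha : 2 ≤ A.ncard
    · have he1 : (H₀.edgeSet.ncard : ℤ) ≤ 2 * (A.ncard : ℤ) - 3 := hlaman.2 H₀ ha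
      omega
    · have he1 : H₀.edgeSet = ∅ := by
        ext e
        simp only [Set.mem_empty_iff_false, iff_false]
        induction e using Sym2.ind with
        | _ x y =>
          intro he
          rw [SimpleGraph.Subgraph.mem_edgeSet] at he
          have hxy : x ≠ y := fun h =>
            G.ne_of_adj ((adj_inl x y).1 (H.adj_sub he)) (by rw [h])
          have hx : x ∈ A := H.edge_vert he
          have hy : y ∈ A := H.edge_vert (H.adj_symm he)
          exact ha ((Set.one_lt_ncard (Set.toFinite _)).mpr ⟨x, hx, y, hy, hxy⟩)
      have he1' : H₀.edgeSet.ncard = 0 := by rw [he1]; simp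
      have hb0 := hbb 0
      have hb1 := hbb 1
      have hb2 := hbb 2
      omega

end C3Laman
end
end
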